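/- arXiv:2411.04449 — 10 statements merged into one kernel-verified Lean document; each statement's English description precedes it below -/
import Mathlib

section
/- For every integer n ≥ 2, the maximum number of 2-element subsets with rational sum over all n-element sets of irrational real numbers equals ⌊n²/4⌋, i.e. h(n,2) = ⌊n²/4⌋. -/
open Classical in

/-- The number of `r`-element subsets of `A` with rational sum. -/
noncomputable def ratSumCount (A : Finset ℝ) (r : ℕ) : ℕ :=
  ((A.powersetCard r).filter (fun B => ∃ q : ℚ, (∑ x ∈ B, x) = (q : ℝ))).card

/-- `h n r`: the maximum number of `r`-element subsets with rational sum over all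
`n`-element sets of irrational real numbers. -/
noncomputable def maxRatSum (n r : ℕ) : ℕ :=
  sSup {k : ℕ | ∃ A : Finset ℝ, A.card = n ∧ (∀ x ∈ A, Irrational x) ∧ ratSumCount A r = k}

lemma pair_not_both (x y z : ℝ) (hx : Irrational x)
    (hxy : ∃ q : ℚ, x + y = q) (hxz : ∃ q : ℚ, x + z = q) (hyz : ∃ q : ℚ, y + z = q) : False := by
  obtain ⟨a, ha⟩ := hxy; obtain ⟨b, hb⟩ := hxz; obtain ⟨c, hc⟩ := hyz
  exact hx ⟨(a + b - c)/2, by push_cast; linarith⟩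

open Classical in
lemma ratSum_upper (n : ℕ) : ∀ A : Finset ℝ, A.card = n → (∀ x ∈ A, Irrational x) →
    ratSumCount A 2 ≤ n ^ 2 / 4 := by
  induction n using Nat.strong_induction_on with
  | _ n ih =>
  intro A hcard hirr
  set F := ((A.powersetCard 2).filter (fun B => ∃ q : ℚ, (∑ x ∈ B, x) = (q : ℝ))) with hFdef
  have hrF : ratSumCount A 2 = F.card := rfl
  by_cases hF : F.Nonempty
  swap
  · rw [hrF, Finset.not_nonempty_iff_eq_empty.mp hF]; simp
  obtain ⟨B₀, hB₀⟩ := hF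
  rw [hFdef, Finset.mem_filter, Finset.mem_powersetCard] at hB₀
  obtain ⟨⟨hB₀A, hB₀c⟩, q₀, hq₀⟩ := hB₀
  obtain ⟨x, y, hxy, rfl⟩ := Finset.card_eq_two.mp hB₀c
  have hxA : x ∈ A := hB₀A (by simp)
  have hyA : y ∈ A := hB₀A (by simp)
  have hsum_xy : x + y = (q₀ : ℝ) := by rwa [Finset.sum_pair hxy] at hq₀
  have hn2 : 2 ≤ n := by
    have := Finset.card_le_card hB₀A
    rwa [hB₀c, hcard] at this
  set A' := A \ {x, y} with hA'def
  have hA'sub : A' ⊆ A := Finset.sdiff_subset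
  have hA'card : A'.card = n - 2 := by
    rw [hA'def, Finset.card_sdiff_of_subset (by intro z hz; simp at hz; rcases hz with rfl | rfl <;> assumption)]
    rw [hcard, Finset.card_pair hxy]
  have hsplit := Finset.card_filter_add_card_filter_not (s := F) (p := fun B => B ⊆ A')
  have h1 : (F.filter (fun B => B ⊆ A')).card ≤ (n - 2) ^ 2 / 4 := by
    have hsub : F.filter (fun B => B ⊆ A') ⊆
        ((A'.powersetCard 2).filter (fun B => ∃ q : ℚ, (∑ x ∈ B, x) = (q : ℝ))) := by
      intro B hB
      simp only [hFdef, Finset.mem_filter, Finset.mem_powersetCard] at hB ⊢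
      exact ⟨⟨hB.2, hB.1.1.2⟩, hB.1.2⟩
    calc (F.filter (fun B => B ⊆ A')).card ≤ ratSumCount A' 2 := Finset.card_le_card hsub
      _ ≤ (n - 2) ^ 2 / 4 := ih (n - 2) (by omega) A' hA'card (fun z hz => hirr z (hA'sub hz))
  -- value lemmas for the injection
  have fval1 : (if h : (({x, y} : Finset ℝ) \ {x, y}).Nonempty then h.choose else x) = x := by
    rw [dif_neg]
    rw [Finset.sdiff_self]
    exact Finset.not_nonempty_empty
  have fval2 : ∀ (w z : ℝ), w ∈ ({x, y} : Finset ℝ) → z ∉ ({x, y} : Finset ℝ) →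
      (if h : (({w, z} : Finset ℝ) \ {x, y}).Nonempty then h.choose else x) = z := by
    intro w z hw hz
    · have hne : (({w, z} : Finset ℝ) \ {x, y}).Nonempty :=
        ⟨z, Finset.mem_sdiff.mpr ⟨by simp, hz⟩⟩
      split
      next h =>
        have hs := h.choose_spec
        simp only [Finset.mem_sdiff, Finset.mem_insert, Finset.mem_singleton] at hs
        simp only [Finset.mem_insert, Finset.mem_singleton] at hw
        rcases hs.1 with h1 | h1
        · exact absurd (by rw [h1]; exact hw) hs.2
        · exact h1
      next h => exact absurd hne h
  have struct : ∀ C : Finset ℝ, C ⊆ A → C.card = 2 → ¬ C ⊆ A' →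
      C = {x, y} ∨ ∃ z, z ∈ A ∧ z ∉ ({x, y} : Finset ℝ) ∧ (C = {x, z} ∨ C = {y, z}) := by
    intro C hCA hCc hCn
    obtain ⟨a, b, hab, rfl⟩ := Finset.card_eq_two.mp hCc
    have haA : a ∈ A := hCA (by simp)
    have hbA : b ∈ A := hCA (by simp)
    by_cases hax : a ∈ ({x, y} : Finset ℝ) <;> by_cases hbx : b ∈ ({x, y} : Finset ℝ)
    · left
      simp only [Finset.mem_insert, Finset.mem_singleton] at hax hbx
      rcases hax with rfl | rfl <;> rcases hbx with rfl | rfl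
      · exact absurd rfl hab
      · rfl
      · exact Finset.pair_comm a b
      · exact absurd rfl hab
    · right
      refine ⟨b, hbA, hbx, ?_⟩
      simp only [Finset.mem_insert, Finset.mem_singleton] at hax
      rcases hax with rfl | rfl
      · exact Or.inl rfl
      · exact Or.inr rfl
    · right
      refine ⟨a, haA, hax, ?_⟩
      simp only [Finset.mem_insert, Finset.mem_singleton] at hbx
      rcases hbx with rfl | rfl
      · exact Or.inl (Finset.pair_comm a b)
      · exact Or.inr (Finset.pair_comm a b)
    · exfalso
      apply hCn
      intro u hu
      simp only [Finset.mem_insert, Finset.mem_singleton] at hu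
      rw [hA'def, Finset.mem_sdiff]
      rcases hu with rfl | rfl
      · exact ⟨haA, hax⟩
      · exact ⟨hbA, hbx⟩
  have h2 : (F.filter (fun B => ¬ B ⊆ A')).card ≤ n - 1 := by
    have hcle := Finset.card_le_card_of_injOn
      (f := fun B : Finset ℝ => if h : (B \ {x, y}).Nonempty then h.choose else x)
      (s := F.filter (fun B => ¬ B ⊆ A')) (t := A.erase y) ?_ ?_
    · rwa [Finset.card_erase_of_mem hyA, hcard] at hcle
    · intro B hB
      rw [Finset.mem_coe, Finset.mem_filter] at hB
      obtain ⟨hBF, hBn⟩ := hB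
      rw [hFdef, Finset.mem_filter, Finset.mem_powersetCard] at hBF
      obtain ⟨⟨hBA, hBc⟩, hq⟩ := hBF
      rcases struct B hBA hBc hBn with rfl | ⟨z, hzA, hzxy, hBsh⟩
      · dsimp only
        rw [fval1]
        exact Finset.mem_erase.mpr ⟨hxy, hxA⟩
      · have hzy : z ≠ y := fun h => hzxy (by rw [h]; simp)
        rcases hBsh with rfl | rfl
        · dsimp only
          rw [fval2 x z (by simp) hzxy]
          exact Finset.mem_erase.mpr ⟨hzy, hzA⟩
        · dsimp only
          rw [fval2 y z (by simp) hzxy]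
          exact Finset.mem_erase.mpr ⟨hzy, hzA⟩
    · intro B hB B' hB' hfeq
      rw [Finset.mem_coe, Finset.mem_filter] at hB hB'
      obtain ⟨hBF, hBn⟩ := hB
      obtain ⟨hB'F, hB'n⟩ := hB'
      rw [hFdef, Finset.mem_filter, Finset.mem_powersetCard] at hBF hB'F
      obtain ⟨⟨hBA, hBc⟩, hq⟩ := hBF
      obtain ⟨⟨hB'A, hB'c⟩, hq'⟩ := hB'F
      dsimp only at hfeq
      rcases struct B hBA hBc hBn with rfl | ⟨z, hzA, hzxy, hBsh⟩ <;>
        rcases struct B' hB'A hB'c hB'n with rfl | ⟨z', hz'A, hz'xy, hB'sh⟩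
      · rfl
      · exfalso
        rw [fval1] at hfeq
        rcases hB'sh with rfl | rfl <;>
          [rw [fval2 x z' (by simp) hz'xy] at hfeq;
           rw [fval2 y z' (by simp) hz'xy] at hfeq] <;>
          exact hz'xy (by rw [← hfeq]; simp)
      · exfalso
        rw [fval1] at hfeq
        rcases hBsh with rfl | rfl <;>
          [rw [fval2 x z (by simp) hzxy] at hfeq;
           rw [fval2 y z (by simp) hzxy] at hfeq] <;>
          exact hzxy (by rw [hfeq]; simp)
      · have hxz : x ≠ z := fun h => hzxy (by rw [← h]; simp)
        have hyz : y ≠ z := fun h => hzxy (by rw [← h]; simp)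
        have hxz' : x ≠ z' := fun h => hz'xy (by rw [← h]; simp)
        have hyz' : y ≠ z' := fun h => hz'xy (by rw [← h]; simp)
        rcases hBsh with rfl | rfl <;> rcases hB'sh with rfl | rfl
        · rw [fval2 x z (by simp) hzxy, fval2 x z' (by simp) hz'xy] at hfeq
          rw [hfeq]
        · exfalso
          rw [fval2 x z (by simp) hzxy, fval2 y z' (by simp) hz'xy] at hfeq
          subst hfeq
          obtain ⟨q1, hq1⟩ := hq
          obtain ⟨q2, hq2⟩ := hq'
          rw [Finset.sum_pair hxz] at hq1
          rw [Finset.sum_pair hyz] at hq2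
          exact pair_not_both z x y (hirr z hzA) ⟨q1, by linarith⟩ ⟨q2, by linarith⟩ ⟨q₀, hsum_xy⟩
        · exfalso
          rw [fval2 y z (by simp) hzxy, fval2 x z' (by simp) hz'xy] at hfeq
          subst hfeq
          obtain ⟨q1, hq1⟩ := hq
          obtain ⟨q2, hq2⟩ := hq'
          rw [Finset.sum_pair hyz] at hq1
          rw [Finset.sum_pair hxz] at hq2
          exact pair_not_both z x y (hirr z hzA) ⟨q2, by linarith⟩ ⟨q1, by linarith⟩ ⟨q₀, hsum_xy⟩
        · rw [fval2 y z (by simp) hzxy, fval2 y z' (by simp) hz'xy] at hfeq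
          rw [hfeq]
  rw [hrF, ← hsplit]
  obtain ⟨m, rfl⟩ : ∃ m, n = m + 2 := ⟨n - 2, by omega⟩
  have e1 : m + 2 - 2 = m := by omega
  have e2 : m + 2 - 1 = m + 1 := by omega
  rw [e1] at h1
  rw [e2] at h2
  have harith : (m + 2) ^ 2 / 4 = m ^ 2 / 4 + (m + 1) := by
    have h4 : (m + 2) ^ 2 = m ^ 2 + (m + 1) * 4 := by ring
    rw [h4, Nat.add_mul_div_right _ _ (by norm_num : (0:ℕ) < 4)]
  rw [harith]
  exact Nat.add_le_add h1 h2

lemma not_rat_shift (c r q : ℚ) (hc : c ≠ 0) : (c : ℝ) * Real.sqrt 2 + r ≠ q := by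
  intro h
  have hc' : (c : ℝ) ≠ 0 := by exact_mod_cast hc
  exact irrational_sqrt_two ⟨(q - r)/c, by push_cast; field_simp; linarith⟩

open Classical in
lemma ratSum_lower (n : ℕ) : ∃ A : Finset ℝ, A.card = n ∧ (∀ x ∈ A, Irrational x) ∧
    ratSumCount A 2 = n ^ 2 / 4 := by
  set k := n / 2 with hk
  set m := n - n / 2 with hm
  set f : ℕ → ℝ := fun i => Real.sqrt 2 + i with hf
  set g : ℕ → ℝ := fun j => -Real.sqrt 2 - j with hg
  have finj : Function.Injective f := by
    intro i i' h
    simp only [hf] at h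
    exact Nat.cast_injective (add_left_cancel h)
  have ginj : Function.Injective g := by
    intro j j' h
    simp only [hg] at h
    have : (j : ℝ) = (j' : ℝ) := by linarith
    exact Nat.cast_injective this
  have hfg : ∀ i j : ℕ, f i ≠ g j := by
    intro i j h
    simp only [hf, hg] at h
    exact not_rat_shift 2 (i + j) 0 (by norm_num) (by push_cast; linarith)
  set A := (Finset.range m).image f ∪ (Finset.range k).image g with hA
  have hdisj : Disjoint ((Finset.range m).image f) ((Finset.range k).image g) := by
    rw [Finset.disjoint_left]
    rintro a ha hb
    obtain ⟨i, _, rfl⟩ := Finset.mem_image.mp ha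
    obtain ⟨j, _, hj⟩ := Finset.mem_image.mp hb
    exact hfg i j hj.symm
  have hcardA : A.card = n := by
    rw [hA, Finset.card_union_of_disjoint hdisj, Finset.card_image_of_injective _ finj,
      Finset.card_image_of_injective _ ginj, Finset.card_range, Finset.card_range]
    omega
  have hirr : ∀ x ∈ A, Irrational x := by
    intro x hx
    rw [hA, Finset.mem_union] at hx
    rcases hx with hx | hx
    · obtain ⟨i, _, rfl⟩ := Finset.mem_image.mp hx
      rintro ⟨q, hq⟩
      exact not_rat_shift 1 i q (by norm_num) (by push_cast; simp only [hf] at hq; linarith)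
    · obtain ⟨j, _, rfl⟩ := Finset.mem_image.mp hx
      rintro ⟨q, hq⟩
      exact not_rat_shift (-1) (-(j:ℚ)) q (by norm_num) (by push_cast; simp only [hg] at hq; linarith)
  refine ⟨A, hcardA, hirr, ?_⟩
  have hFeq : ((A.powersetCard 2).filter (fun B => ∃ q : ℚ, (∑ x ∈ B, x) = (q : ℝ))) =
      ((Finset.range m) ×ˢ (Finset.range k)).image (fun p => ({f p.1, g p.2} : Finset ℝ)) := by
    ext B
    constructor
    · intro hB
      rw [Finset.mem_filter, Finset.mem_powersetCard] at hB
      obtain ⟨⟨hBA, hBc⟩, q, hq⟩ := hB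
      obtain ⟨a, b, hab, rfl⟩ := Finset.card_eq_two.mp hBc
      rw [Finset.sum_pair hab] at hq
      have haA := hBA (Finset.mem_insert_self a _)
      have hbA := hBA (Finset.mem_insert_of_mem (Finset.mem_singleton_self b))
      rw [hA, Finset.mem_union] at haA hbA
      rcases haA with ha | ha <;> rcases hbA with hb | hb
      · exfalso
        obtain ⟨i, _, rfl⟩ := Finset.mem_image.mp ha
        obtain ⟨i', _, rfl⟩ := Finset.mem_image.mp hb
        simp only [hf] at hq
        exact not_rat_shift 2 (i + i') q (by norm_num) (by push_cast; linarith)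
      · obtain ⟨i, hi, rfl⟩ := Finset.mem_image.mp ha
        obtain ⟨j, hj, rfl⟩ := Finset.mem_image.mp hb
        exact Finset.mem_image.mpr ⟨(i, j), Finset.mem_product.mpr ⟨hi, hj⟩, rfl⟩
      · obtain ⟨j, hj, rfl⟩ := Finset.mem_image.mp ha
        obtain ⟨i, hi, rfl⟩ := Finset.mem_image.mp hb
        exact Finset.mem_image.mpr ⟨(i, j), Finset.mem_product.mpr ⟨hi, hj⟩,
          (Finset.pair_comm (g j) (f i)).symm⟩
      · exfalso
        obtain ⟨j, _, rfl⟩ := Finset.mem_image.mp ha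
        obtain ⟨j', _, rfl⟩ := Finset.mem_image.mp hb
        simp only [hg] at hq
        exact not_rat_shift (-2) (-(j:ℚ) - j') q (by norm_num) (by push_cast; linarith)
    · intro hB
      obtain ⟨⟨i, j⟩, hij, rfl⟩ := Finset.mem_image.mp hB
      obtain ⟨hi, hj⟩ := Finset.mem_product.mp hij
      rw [Finset.mem_filter, Finset.mem_powersetCard]
      refine ⟨⟨?_, Finset.card_pair (hfg i j)⟩, (i : ℚ) - j, ?_⟩
      · intro u hu
        simp only [Finset.mem_insert, Finset.mem_singleton] at hu
        rw [hA, Finset.mem_union]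
        rcases hu with rfl | rfl
        · exact Or.inl (Finset.mem_image.mpr ⟨i, hi, rfl⟩)
        · exact Or.inr (Finset.mem_image.mpr ⟨j, hj, rfl⟩)
      · rw [Finset.sum_pair (hfg i j)]
        simp only [hf, hg]
        push_cast
        ring
  have hinjOn : Set.InjOn (fun p : ℕ × ℕ => ({f p.1, g p.2} : Finset ℝ))
      ↑((Finset.range m) ×ˢ (Finset.range k)) := by
    rintro ⟨i, j⟩ _ ⟨i', j'⟩ _ h
    dsimp only at h
    have hfi : f i = f i' := by
      have : f i ∈ ({f i', g j'} : Finset ℝ) := by rw [← h]; simp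
      simp only [Finset.mem_insert, Finset.mem_singleton] at this
      rcases this with h' | h'
      · exact h'
      · exact absurd h' (hfg i j')
    have hgj : g j = g j' := by
      have : g j ∈ ({f i', g j'} : Finset ℝ) := by rw [← h]; simp
      simp only [Finset.mem_insert, Finset.mem_singleton] at this
      rcases this with h' | h'
      · exact absurd h'.symm (hfg i' j)
      · exact h'
    exact Prod.ext (finj hfi) (ginj hgj)
  have : ratSumCount A 2 = m * k := by
    rw [ratSumCount, hFeq, Finset.card_image_of_injOn hinjOn, Finset.card_product,
      Finset.card_range, Finset.card_range]
  rw [this]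
  rcases Nat.even_or_odd n with ⟨a, ha⟩ | ⟨a, ha⟩
  · have hm' : m = a := by omega
    have hk' : k = a := by omega
    rw [hm', hk', ha]
    have h4 : (a + a) ^ 2 = (a * a) * 4 := by ring
    rw [h4, Nat.mul_div_cancel _ (by norm_num : (0:ℕ) < 4)]
  · have hm' : m = a + 1 := by omega
    have hk' : k = a := by omega
    rw [hm', hk', ha]
    have h4 : (2 * a + 1) ^ 2 = ((a + 1) * a) * 4 + 1 := by ring
    rw [h4]
    set t := (a + 1) * a
    omega

theorem h_n_two (n : ℕ) (hn : 2 ≤ n) : maxRatSum n 2 = n ^ 2 / 4 := by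
  obtain ⟨A, hAc, hAirr, hAcount⟩ := ratSum_lower n
  have hmem : n ^ 2 / 4 ∈ {k : ℕ | ∃ A : Finset ℝ, A.card = n ∧ (∀ x ∈ A, Irrational x) ∧
      ratSumCount A 2 = k} := ⟨A, hAc, hAirr, hAcount⟩
  have hub : ∀ k ∈ {k : ℕ | ∃ A : Finset ℝ, A.card = n ∧ (∀ x ∈ A, Irrational x) ∧
      ratSumCount A 2 = k}, k ≤ n ^ 2 / 4 := by
    rintro k ⟨A, hc, hi, rfl⟩
    exact ratSum_upper n A hc hi
  exact le_antisymm (csSup_le ⟨_, hmem⟩ hub) (le_csSup ⟨n ^ 2 / 4, hub⟩ hmem)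
end

section
/- Let n, r be natural numbers with n/2 < r < n. Then the maximum number of r-element subsets with rational sum over all n-element sets of irrational real numbers equals C(n−1, r−1), i.e. h(n,r) = binomial(n−1, r−1). -/
namespace HLargeAux

open Finset Module

/-- The rationals, as a `ℚ`-submodule of `ℝ`. -/
noncomputable def QS : Submodule ℚ ℝ := Submodule.span ℚ {(1:ℝ)}

/-- `ℝ/ℚ` as a `ℚ`-vector space. -/
abbrev VQ := ℝ ⧸ QS

/-- Projection `ℝ → ℝ/ℚ`. -/
noncomputable def piQ : ℝ →ₗ[ℚ] VQ := QS.mkQ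

lemma piQ_eq_zero_iff (x : ℝ) : piQ x = 0 ↔ ∃ q : ℚ, x = (q : ℝ) := by
  constructor
  · intro h
    have hx : x ∈ QS := by
      rwa [piQ, Submodule.mkQ_apply, Submodule.Quotient.mk_eq_zero] at h
    rcases Submodule.mem_span_singleton.mp hx with ⟨q, hq⟩
    exact ⟨q, by rw [← hq, Rat.smul_one_eq_cast]⟩
  · rintro ⟨q, rfl⟩
    have hx : (q:ℝ) ∈ QS :=
      Submodule.mem_span_singleton.mpr ⟨q, Rat.smul_one_eq_cast ℝ q⟩
    rwa [piQ, Submodule.mkQ_apply, Submodule.Quotient.mk_eq_zero]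

lemma piQ_ne_zero {x : ℝ} (h : Irrational x) : piQ x ≠ 0 := by
  intro h0
  rcases (piQ_eq_zero_iff x).mp h0 with ⟨q, rfl⟩
  exact h ⟨q, rfl⟩

lemma piQ_eq_of_rat_sub {x y : ℝ} (q : ℚ) (h : x - y = (q:ℝ)) : piQ x = piQ y := by
  have : piQ (x - y) = 0 := (piQ_eq_zero_iff _).mpr ⟨q, h⟩
  rw [map_sub, sub_eq_zero] at this
  exact this

/-- Number of `r`-subsets of `X` containing a fixed element `x`. -/
lemma star_card (X : Finset ℝ) (x : ℝ) (hx : x ∈ X) (r : ℕ) (hr : 1 ≤ r) :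
    ((X.powersetCard r).filter (fun S => x ∈ S)).card = (X.card - 1).choose (r - 1) := by
  classical
  rw [← Finset.card_erase_of_mem hx, ← Finset.card_powersetCard]
  apply Finset.card_bij' (fun S _ => S.erase x) (fun T _ => insert x T)
  · intro S hS
    simp only [Finset.mem_filter] at hS
    exact Finset.insert_erase hS.2
  · intro T hT
    simp only [Finset.mem_powersetCard] at hT
    have hxT : x ∉ T := fun hmem => (Finset.mem_erase.mp (hT.1 hmem)).1 rfl
    exact Finset.erase_insert hxT
  · intro S hS
    simp only [Finset.mem_filter, Finset.mem_powersetCard] at hS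
    obtain ⟨⟨hsub, hcard⟩, hmem⟩ := hS
    simp only [Finset.mem_powersetCard]
    constructor
    · exact Finset.erase_subset_erase x hsub
    · rw [Finset.card_erase_of_mem hmem, hcard]
  · intro T hT
    simp only [Finset.mem_powersetCard] at hT
    obtain ⟨hsub, hcard⟩ := hT
    have hxT : x ∉ T := fun hmem => (Finset.mem_erase.mp (hsub hmem)).1 rfl
    simp only [Finset.mem_filter, Finset.mem_powersetCard]
    refine ⟨⟨?_, ?_⟩, Finset.mem_insert_self x T⟩
    · exact Finset.insert_subset hx (hsub.trans (Finset.erase_subset x X))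
    · rw [Finset.card_insert_of_notMem hxT, hcard]
      omega

/-- A sum of elements, each differing from a rational by nothing, is rational. -/
lemma sum_rat_of_forall {S : Finset ℝ} {f : ℝ → ℝ} (h : ∀ x ∈ S, ∃ q : ℚ, f x = (q:ℝ)) :
    ∃ q : ℚ, ∑ x ∈ S, f x = (q : ℝ) := by
  classical
  induction S using Finset.cons_induction with
  | empty => exact ⟨0, by simp⟩
  | cons a S ha ih =>
    obtain ⟨q1, hq1⟩ := h a (Finset.mem_cons_self a S)
    obtain ⟨q2, hq2⟩ := ih (fun x hx => h x (Finset.mem_cons.mpr (Or.inr hx)))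
    exact ⟨q1 + q2, by rw [Finset.sum_cons, hq1, hq2]; push_cast; ring⟩

/-- Shadow injection: if `2t > |C|`, there is an injection from `t`-subsets of `C`
to `(t-1)`-subsets, mapping each set to a subset of itself. -/
lemma exists_shadow_injection (C : Finset ℝ) (t : ℕ) (ht : C.card < 2 * t) :
    ∃ f : Finset ℝ → Finset ℝ,
      (∀ S ∈ C.powersetCard t, f S ⊆ S ∧ (f S).card = t - 1) ∧
      Set.InjOn f (C.powersetCard t) := by
  classical
  have ht1 : 1 ≤ t := by omega
  set tf : {S // S ∈ C.powersetCard t} → Finset (Finset ℝ) :=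
    (fun S => (S : Finset ℝ).powersetCard (t-1)) with htf
  have hall : ∀ s : Finset {S // S ∈ C.powersetCard t}, s.card ≤ (s.biUnion tf).card := by
    intro s
    set T := s.biUnion tf with hT
    set R : {S // S ∈ C.powersetCard t} → Finset ℝ → Prop := fun a b => b ⊆ (a : Finset ℝ)
      with hR
    have key : s.card * t ≤ T.card * (C.card - t + 1) := by
      apply Finset.card_mul_le_card_mul R
      · intro a ha
        have hsub : (a : Finset ℝ).powersetCard (t-1) ⊆ T.bipartiteAbove R a := by
          intro b hb
          rw [Finset.bipartiteAbove, Finset.mem_filter]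
          exact ⟨Finset.mem_biUnion.mpr ⟨a, ha, hb⟩, (Finset.mem_powersetCard.mp hb).1⟩
        have hcard : ((a : Finset ℝ).powersetCard (t-1)).card = t := by
          rw [Finset.card_powersetCard, (Finset.mem_powersetCard.mp a.2).2,
            Nat.choose_symm ht1, Nat.choose_one_right]
        calc t = ((a : Finset ℝ).powersetCard (t-1)).card := hcard.symm
        _ ≤ (T.bipartiteAbove R a).card := Finset.card_le_card hsub
      · intro b hb
        obtain ⟨a0, ha0s, hba0⟩ := Finset.mem_biUnion.mp hb
        have hbC : b ⊆ C ∧ b.card = t - 1 := by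
          have h1 := Finset.mem_powersetCard.mp hba0
          have h2 := Finset.mem_powersetCard.mp a0.2
          exact ⟨h1.1.trans h2.1, h1.2⟩
        have step : (s.bipartiteBelow R b).card ≤
            ((C \ b).image (fun e => ({e} : Finset ℝ))).card := by
          refine Finset.card_le_card_of_injOn (fun a => ((a : Finset ℝ) \ b)) ?_ ?_
          · intro a ha
            simp only [Finset.mem_coe, Finset.bipartiteBelow, Finset.mem_filter] at ha
            obtain ⟨has, hba⟩ := ha
            have hc : ((a:Finset ℝ) \ b).card = 1 := by
              rw [Finset.card_sdiff_of_subset hba, (Finset.mem_powersetCard.mp a.2).2, hbC.2]; omega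
            obtain ⟨e, he⟩ := Finset.card_eq_one.mp hc
            show (a:Finset ℝ) \ b ∈ ((C \ b).image (fun e => ({e} : Finset ℝ)))
            rw [he]
            refine Finset.mem_image.mpr ⟨e, ?_, rfl⟩
            have hes : e ∈ (a:Finset ℝ) \ b := he ▸ Finset.mem_singleton_self e
            rw [Finset.mem_sdiff] at hes ⊢
            exact ⟨(Finset.mem_powersetCard.mp a.2).1 hes.1, hes.2⟩
          · intro a₁ h₁ a₂ h₂ heq
            simp only [Finset.mem_coe, Finset.bipartiteBelow, Finset.mem_filter] at h₁ h₂
            have : (a₁ : Finset ℝ) = a₂ := by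
              have e1 : ((a₁:Finset ℝ) \ b) ∪ b = ↑a₁ := Finset.sdiff_union_of_subset h₁.2
              have e2 : ((a₂:Finset ℝ) \ b) ∪ b = ↑a₂ := Finset.sdiff_union_of_subset h₂.2
              have heq2 : (a₁ : Finset ℝ) \ b = (a₂ : Finset ℝ) \ b := heq
              rw [← e1, ← e2, heq2]
            exact Subtype.ext this
        calc (s.bipartiteBelow R b).card
            ≤ ((C \ b).image (fun e => ({e} : Finset ℝ))).card := step
        _ = (C \ b).card := Finset.card_image_of_injective _ Finset.singleton_injective
        _ = C.card - (t-1) := by rw [Finset.card_sdiff_of_subset hbC.1, hbC.2]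
        _ ≤ C.card - t + 1 := by omega
    have ht2 : C.card - t + 1 ≤ t := by omega
    have h3 := key.trans (Nat.mul_le_mul_left T.card ht2)
    exact Nat.le_of_mul_le_mul_right h3 (by omega)
  obtain ⟨f0, hinj, hmem⟩ := (Finset.all_card_le_biUnion_card_iff_exists_injective tf).mp hall
  refine ⟨fun S => if h : S ∈ C.powersetCard t then f0 ⟨S, h⟩ else ∅,
    fun S hS => ?_, fun S₁ h₁ S₂ h₂ heq => ?_⟩
  · show (if h : S ∈ C.powersetCard t then f0 ⟨S, h⟩ else ∅) ⊆ S ∧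
      (if h : S ∈ C.powersetCard t then f0 ⟨S, h⟩ else ∅).card = t - 1
    rw [dif_pos hS]
    have h4 := hmem ⟨S, hS⟩
    rw [htf] at h4
    exact ⟨(Finset.mem_powersetCard.mp h4).1, (Finset.mem_powersetCard.mp h4).2⟩
  · simp only [Set.mem_setOf_eq, Finset.mem_coe] at h₁ h₂
    have heq' : f0 ⟨S₁, h₁⟩ = f0 ⟨S₂, h₂⟩ := by
      simpa only [dif_pos h₁, dif_pos h₂] using heq
    exact congrArg Subtype.val (hinj heq')

/-- Core lemma: not every class can be "bad". -/
lemma not_all_bad {V : Type} [AddCommGroup V] [Module ℚ V]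
    {ι : Type} [Fintype ι] [DecidableEq ι] (hk : 2 ≤ Fintype.card ι)
    (v : ι → V) (hv : Function.Injective v)
    (M : ι → ι → ℕ) (N : ι → ℕ) (g : ℕ) (hg : 1 ≤ g)
    (hrow : ∀ j, 2 * (∑ c, M j c) = g + ∑ c, N c)
    (hoff : ∀ j c, c ≠ j → 2 * M j c ≤ N c)
    (hker : ∀ j, (∑ c, (M j c : ℚ) • v c) = 0) : False := by
  classical
  set u : ι → (ι → ℚ) := fun j c => (M j c : ℚ) with hu
  set T : (ι → ℚ) →ₗ[ℚ] ℚ × V :=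
    { toFun := fun d => (∑ c, d c, ∑ c, d c • v c)
      map_add' := by
        intro a b
        simp only [Pi.add_apply, Prod.mk_add_mk, Prod.mk.injEq, add_smul]
        exact ⟨Finset.sum_add_distrib, Finset.sum_add_distrib⟩
      map_smul' := by
        intro q a
        simp only [Pi.smul_apply, smul_eq_mul, RingHom.id_apply, Prod.smul_mk, Prod.mk.injEq]
        exact ⟨(Finset.mul_sum _ _ _).symm, by rw [Finset.smul_sum]; simp [mul_smul]⟩ } with hT
  have hTapp : ∀ d : ι → ℚ, T d = (∑ c, d c, ∑ c, d c • v c) := fun d => rfl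
  obtain ⟨c₁, c₂, hc12⟩ := Fintype.exists_pair_of_one_lt_card (α := ι) (by omega)
  -- rank of T is at least 2
  have hTe1 : T (Pi.single c₁ 1) = (1, v c₁) := by
    rw [hTapp]
    congr 1
    · rw [Finset.sum_pi_single' c₁ (1:ℚ)]; simp
    · rw [Finset.sum_eq_single c₁ (fun b _ hb => by rw [Pi.single_eq_of_ne hb, zero_smul])
        (fun h => absurd (Finset.mem_univ c₁) h)]
      rw [Pi.single_eq_same, one_smul]
  have hTe12 : T (Pi.single c₁ 1 - Pi.single c₂ 1) = (0, v c₁ - v c₂) := by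
    have hTe2 : T (Pi.single c₂ 1) = (1, v c₂) := by
      rw [hTapp]
      congr 1
      · rw [Finset.sum_pi_single' c₂ (1:ℚ)]; simp
      · rw [Finset.sum_eq_single c₂ (fun b _ hb => by rw [Pi.single_eq_of_ne hb, zero_smul])
          (fun h => absurd (Finset.mem_univ c₂) h)]
        rw [Pi.single_eq_same, one_smul]
    rw [map_sub, hTe1, hTe2, Prod.mk_sub_mk, sub_self]
  have hvne : v c₁ - v c₂ ≠ 0 := sub_ne_zero_of_ne (fun h => hc12 (hv h))
  have hli : LinearIndependent ℚ ![((1:ℚ), v c₁), ((0:ℚ), v c₁ - v c₂)] := by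
    rw [LinearIndependent.pair_iff]
    intro s t hst
    have h1 : s * 1 + t * 0 = 0 := congrArg Prod.fst hst
    have hs : s = 0 := by simpa using h1
    have h2 : s • v c₁ + t • (v c₁ - v c₂) = 0 := congrArg Prod.snd hst
    rw [hs, zero_smul, zero_add] at h2
    have ht : t = 0 := by
      by_contra htne
      have : v c₁ - v c₂ = t⁻¹ • (t • (v c₁ - v c₂)) := by
        rw [smul_smul, inv_mul_cancel₀ htne, one_smul]
      rw [h2, smul_zero] at this
      exact hvne this
    exact ⟨hs, ht⟩
  have hrange2 : 2 ≤ finrank ℚ (LinearMap.range T) := by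
    have hspan := finrank_span_eq_card (R := ℚ) hli
    rw [Fintype.card_fin] at hspan
    have hle : Submodule.span ℚ (Set.range ![((1:ℚ), v c₁), ((0:ℚ), v c₁ - v c₂)]) ≤
        LinearMap.range T := by
      rw [Submodule.span_le]
      rintro x hx
      rcases Set.mem_range.mp hx with ⟨i, rfl⟩
      fin_cases i
      · exact ⟨Pi.single c₁ 1, hTe1⟩
      · exact ⟨Pi.single c₁ 1 - Pi.single c₂ 1, hTe12⟩
    calc 2 = finrank ℚ (Submodule.span ℚ
        (Set.range ![((1:ℚ), v c₁), ((0:ℚ), v c₁ - v c₂)])) := hspan.symm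
    _ ≤ finrank ℚ (LinearMap.range T) := Submodule.finrank_mono hle
  have hrn := LinearMap.finrank_range_add_finrank_ker T
  rw [Module.finrank_pi ℚ] at hrn
  have hkerdim : finrank ℚ (LinearMap.ker T) ≤ Fintype.card ι - 2 := by omega
  -- the witnesses all have the same T-image
  have hsumM : ∀ j, ∑ c, M j c = ∑ c, M c₁ c := by
    intro j
    have h1 := hrow j
    have h2 := hrow c₁
    omega
  have hTu : ∀ j, T (u j) = (((∑ c, M c₁ c : ℕ) : ℚ), (0 : V)) := by
    intro j
    rw [hTapp]
    have : ∑ c, u j c = ((∑ c, M c₁ c : ℕ) : ℚ) := by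
      rw [hu]; push_cast; exact_mod_cast congrArg (Nat.cast (R := ℚ)) (hsumM j)
    rw [this, hker j]
  -- the differences lie in the kernel; they must be dependent
  set w : {j : ι // j ≠ c₁} → LinearMap.ker T := fun j =>
    ⟨u ↑j - u c₁, by rw [LinearMap.mem_ker, map_sub, hTu ↑j, hTu c₁, sub_self]⟩ with hw
  have hNLI : ¬ LinearIndependent ℚ w := by
    intro hli2
    have hcard := hli2.fintype_card_le_finrank
    have hcs : Fintype.card {j : ι // j ≠ c₁} = Fintype.card ι - 1 := by
      rw [Fintype.card_subtype_compl, Fintype.card_subtype_eq]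
    omega
  obtain ⟨gco, hgsum, i₀, hgi₀⟩ := Fintype.not_linearIndependent_iff.mp hNLI
  have hval : ∑ i : {j : ι // j ≠ c₁}, gco i • (u ↑i - u c₁) = 0 := by
    have := congrArg Subtype.val hgsum
    simpa using this
  set g' : ι → ℚ := fun j => if h : j = c₁ then 0 else gco ⟨j, h⟩ with hg'
  have hconv : ∀ {W : Type} [AddCommGroup W] [Module ℚ W] (φ : ι → W),
      ∑ j, g' j • φ j = ∑ i : {j : ι // j ≠ c₁}, gco i • φ ↑i := by
    intro W _ _ φ
    have h1 : ∑ j ∈ Finset.univ.filter (fun j => j ≠ c₁), g' j • φ j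
        = ∑ i : {j : ι // j ≠ c₁}, gco i • φ ↑i := by
      rw [Finset.sum_subtype (p := fun j => j ≠ c₁)
        (Finset.univ.filter (fun j => j ≠ c₁)) (by intro x; simp) (fun j => g' j • φ j)]
      apply Finset.sum_congr rfl
      intro i _
      rw [hg']
      simp only [dif_neg i.2, Subtype.coe_eta]
    calc ∑ j : ι, g' j • φ j
        = ∑ j ∈ Finset.univ.filter (fun j => j ≠ c₁), g' j • φ j := by
          refine (Finset.sum_filter_of_ne ?_).symm
          intro x _ hne
          intro hx
          rw [hg'] at hne
          subst hx
          simp only [dif_pos] at hne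
          exact hne (zero_smul ℚ (φ x))
    _ = _ := h1
  
  set c₀ : ℚ := ∑ i : {j : ι // j ≠ c₁}, gco i with hc₀
  set lam : ι → ℚ := fun j => g' j - (if j = c₁ then c₀ else 0) with hlam
  have hg'sum : ∑ j, g' j = c₀ := by
    have := hconv (fun _ => (1:ℚ))
    simpa [smul_eq_mul] using this
  have hlamsum : ∑ j, lam j = 0 := by
    simp only [hlam]
    rw [Finset.sum_sub_distrib, Finset.sum_ite_eq' Finset.univ c₁ (fun _ => c₀)]
    simp [hg'sum]
  have hlamu : ∑ j, lam j • u j = 0 := by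
    simp only [hlam]
    have e1 : ∑ j, (g' j - if j = c₁ then c₀ else 0) • u j
        = ∑ j, g' j • u j - ∑ j, (if j = c₁ then c₀ else 0) • u j := by
      rw [← Finset.sum_sub_distrib]
      exact Finset.sum_congr rfl (fun j _ => sub_smul _ _ _)
    rw [e1, hconv u]
    have e2 : ∑ j, (if j = c₁ then c₀ else 0) • u j = c₀ • u c₁ := by
      rw [Finset.sum_eq_single c₁]
      · simp
      · intro b _ hb; simp [hb]
      · intro h; exact absurd (Finset.mem_univ c₁) h
    rw [e2]
    rw [hc₀, Finset.sum_smul, ← Finset.sum_sub_distrib, ← hval]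
    exact Finset.sum_congr rfl (fun i _ => (smul_sub _ _ _).symm)
  have hlamptwise : ∀ c, ∑ j, lam j * (M j c : ℚ) = 0 := by
    intro c
    have := congrFun hlamu c
    simpa [Finset.sum_apply, smul_eq_mul, hu] using this
  have hlami₀ : lam ↑i₀ ≠ 0 := by
    have heq : lam ↑i₀ = gco i₀ := by
      simp only [hlam, hg', dif_neg i₀.2, if_neg i₀.2, sub_zero, Subtype.coe_eta]
    rw [heq]; exact hgi₀
  set P := Finset.univ.filter (fun j => 0 < lam j) with hP
  have hPne : P.Nonempty := by
    by_contra hempty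
    rw [Finset.not_nonempty_iff_eq_empty] at hempty
    have hnp : ∀ j ∈ Finset.univ, lam j ≤ 0 := by
      intro j _
      by_contra hpos
      have : j ∈ P := Finset.mem_filter.mpr ⟨Finset.mem_univ j, lt_of_not_ge hpos⟩
      rw [hempty] at this
      exact absurd this (Finset.notMem_empty j)
    exact hlami₀ (((Finset.sum_eq_zero_iff_of_nonpos hnp).mp hlamsum) _ (Finset.mem_univ _))
  set δ : ι → ι → ℚ := fun j c => 2*(M j c : ℚ) - (N c : ℚ) with hδ
  have hδrow : ∀ j, ∑ c, δ j c = (g:ℚ) := by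
    intro j
    have hq : 2*(∑ c, (M j c:ℚ)) = (g:ℚ) + ∑ c, (N c:ℚ) := by exact_mod_cast hrow j
    simp only [hδ]
    rw [Finset.sum_sub_distrib, ← Finset.mul_sum]
    linarith
  have hδoff : ∀ j c, c ≠ j → δ j c ≤ 0 := by
    intro j c hne
    have h2 : ((2*(M j c) : ℕ):ℚ) ≤ ((N c : ℕ):ℚ) := by exact_mod_cast hoff j c hne
    simp only [hδ]
    push_cast at h2
    linarith
  have hcol : ∀ c, ∑ j, lam j * δ j c = 0 := by
    intro c
    have e : ∀ j, lam j * δ j c = 2*(lam j * (M j c:ℚ)) - (N c:ℚ) * lam j := by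
      intro j; simp only [hδ]; ring
    rw [Finset.sum_congr rfl (fun j _ => e j), Finset.sum_sub_distrib, ← Finset.mul_sum,
      ← Finset.mul_sum, hlamptwise c, hlamsum]
    ring
  have hzero : ∑ j, lam j * (∑ c ∈ P, δ j c) = 0 := by
    have h0 : ∑ c ∈ P, (∑ j, lam j * δ j c) = 0 := Finset.sum_eq_zero (fun c _ => hcol c)
    rw [Finset.sum_comm] at h0
    rw [← h0]
    exact Finset.sum_congr rfl (fun j _ => Finset.mul_sum _ _ _)
  have hgpos : (0:ℚ) < (g:ℚ) := by
    have : 0 < g := hg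
    exact_mod_cast this
  have hSj : ∀ j ∈ P, (g:ℚ) ≤ ∑ c ∈ P, δ j c := by
    intro j hj
    have hsplit := Finset.sum_filter_add_sum_filter_not Finset.univ (fun c => 0 < lam c) (δ j)
    have hnp : ∑ c ∈ Finset.univ.filter (fun c => ¬ 0 < lam c), δ j c ≤ 0 := by
      apply Finset.sum_nonpos
      intro c hc
      apply hδoff
      intro hcj
      rw [Finset.mem_filter] at hc
      rw [hP, Finset.mem_filter] at hj
      exact hc.2 (hcj ▸ hj.2)
    rw [hδrow j] at hsplit
    have : ∑ c ∈ P, δ j c + ∑ c ∈ Finset.univ.filter (fun c => ¬ 0 < lam c), δ j c = (g:ℚ) := hsplit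
    linarith
  have hpos : 0 < ∑ j, lam j * (∑ c ∈ P, δ j c) := by
    apply Finset.sum_pos'
    · intro j _
      by_cases hj : j ∈ P
      · have h1 : 0 < lam j := (Finset.mem_filter.mp hj).2
        have h2 := hSj j hj
        exact mul_nonneg h1.le (le_trans hgpos.le h2)
      · have h1 : lam j ≤ 0 :=
          le_of_not_gt (fun h => hj (Finset.mem_filter.mpr ⟨Finset.mem_univ j, h⟩))
        have h2 : ∑ c ∈ P, δ j c ≤ 0 :=
          Finset.sum_nonpos (fun c hc => hδoff j c (fun hcj => hj (hcj ▸ hc)))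
        have h3 := mul_nonneg (neg_nonneg.mpr h1) (neg_nonneg.mpr h2)
        simpa [neg_mul_neg] using h3
    · obtain ⟨j, hj⟩ := hPne
      refine ⟨j, Finset.mem_univ j, ?_⟩
      have h1 : 0 < lam j := (Finset.mem_filter.mp hj).2
      have h2 := hSj j hj
      exact mul_pos h1 (lt_of_lt_of_le hgpos h2)
  exact absurd hzero (ne_of_gt hpos)

open Classical in
lemma ratSumCount_le (n r : ℕ) (h1 : n < 2 * r) (h2 : r < n) (A : Finset ℝ)
    (hcard : A.card = n) (hirr : ∀ x ∈ A, Irrational x) :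
    ratSumCount A r ≤ (n - 1).choose (r - 1) := by
  classical
  have hr2 : 2 ≤ r := by omega
  set H := (A.powersetCard r).filter (fun B => ∃ q : ℚ, (∑ x ∈ B, x) = (q : ℝ)) with hH
  have hRS : ratSumCount A r = H.card := rfl
  rw [hRS]
  rcases Finset.eq_empty_or_nonempty H with hHe | ⟨B₀, hB₀⟩
  · rw [hHe]; simp
  have hBsub : ∀ B ∈ H, B ⊆ A :=
    fun B hB => (Finset.mem_powersetCard.mp (Finset.mem_filter.mp hB).1).1
  have hBcard : ∀ B ∈ H, B.card = r :=
    fun B hB => (Finset.mem_powersetCard.mp (Finset.mem_filter.mp hB).1).2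
  have hBrat : ∀ B ∈ H, ∃ q : ℚ, (∑ x ∈ B, x) = (q:ℝ) :=
    fun B hB => (Finset.mem_filter.mp hB).2
  set K := A.image (fun x => piQ x) with hK
  set Cl : VQ → Finset ℝ := fun c => A.filter (fun x => piQ x = c) with hCl
  set m : Finset ℝ → VQ → ℕ := fun B c => (B.filter (fun x => piQ x = c)).card with hm
  have hmsum : ∀ B, B ⊆ A → ∑ c ∈ K, m B c = B.card := by
    intro B hBA
    exact (Finset.card_eq_sum_card_fiberwise
      (fun x hx => Finset.mem_image_of_mem _ (hBA hx))).symm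
  have hNsum : ∑ c ∈ K, (Cl c).card = n := by
    rw [← hcard]
    exact (Finset.card_eq_sum_card_fiberwise (fun x hx => Finset.mem_image_of_mem _ hx)).symm
  have hker0 : ∀ B, B ⊆ A → (∃ q:ℚ, (∑ x ∈ B, x) = (q:ℝ)) →
      ∑ c ∈ K, (m B c : ℚ) • c = 0 := by
    intro B hBA hq
    have hmaps : ∀ x ∈ B, piQ x ∈ K := fun x hx => Finset.mem_image_of_mem _ (hBA hx)
    have h1 : ∑ c ∈ K, ∑ x ∈ B.filter (fun x => piQ x = c), piQ x = piQ (∑ x ∈ B, x) := by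
      rw [map_sum]
      exact Finset.sum_fiberwise_of_maps_to hmaps (fun x => piQ x)
    have h2 : ∀ c ∈ K, ∑ x ∈ B.filter (fun x => piQ x = c), piQ x = (m B c : ℚ) • c := by
      intro c _
      rw [Finset.sum_congr rfl (fun x hx => (Finset.mem_filter.mp hx).2), Finset.sum_const]
      exact (Nat.cast_smul_eq_nsmul ℚ _ _).symm
    obtain ⟨q, hqe⟩ := hq
    calc ∑ c ∈ K, (m B c:ℚ) • c
        = ∑ c ∈ K, ∑ x ∈ B.filter (fun x => piQ x = c), piQ x :=
          (Finset.sum_congr rfl h2).symm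
    _ = piQ (∑ x ∈ B, x) := h1
    _ = 0 := (piQ_eq_zero_iff _).mpr ⟨q, hqe⟩
  have hAne : A.Nonempty := Finset.card_pos.mp (by omega)
  have hk2 : 2 ≤ K.card := by
    by_contra hlt
    push_neg at hlt
    have h1 : K.card = 1 :=
      le_antisymm (by omega) (Finset.card_pos.mpr (hAne.image _))
    obtain ⟨v, hv⟩ := Finset.card_eq_one.mp h1
    have hall : ∀ x ∈ A, piQ x = v := by
      intro x hx
      have h3 : piQ x ∈ K := Finset.mem_image_of_mem _ hx
      rw [hv, Finset.mem_singleton] at h3; exact h3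
    have hB₀A := hBsub B₀ hB₀
    have hker := hker0 B₀ hB₀A (hBrat B₀ hB₀)
    rw [hv, Finset.sum_singleton] at hker
    have hmB : m B₀ v = r := by
      show (B₀.filter (fun x => piQ x = v)).card = r
      rw [Finset.filter_true_of_mem (fun x hx => hall x (hB₀A hx))]
      exact hBcard B₀ hB₀
    rw [hmB] at hker
    have hvne : v ≠ 0 := by
      obtain ⟨x₁, hx₁⟩ := hAne
      rw [← hall x₁ hx₁]
      exact piQ_ne_zero (hirr x₁ hx₁)
    apply hvne
    have hr0 : ((r:ℚ)) ≠ 0 := Nat.cast_ne_zero.mpr (by omega)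
    calc v = ((r:ℚ))⁻¹ • ((r:ℚ) • v) := by rw [smul_smul, inv_mul_cancel₀ hr0, one_smul]
    _ = 0 := by rw [hker, smul_zero]
  -- there is a class jstar that is not "bad"
  have hnotall : ∃ j ∈ K, ¬ (∃ B ∈ H, m B j < (Cl j).card ∧
      (∀ c ∈ K, c ≠ j → 2 * m B c ≤ (Cl c).card)) := by
    by_contra hall
    push_neg at hall
    have hwit : ∀ j : {c // c ∈ K}, ∃ B, B ∈ H ∧ m B ↑j < (Cl ↑j).card ∧
        (∀ c ∈ K, c ≠ ↑j → 2 * m B c ≤ (Cl c).card) := by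
      intro j
      obtain ⟨B, hB, h3, h4⟩ := hall ↑j j.2
      exact ⟨B, hB, h3, h4⟩
    choose Bw hBwH hBwlt hBwoff using hwit
    refine not_all_bad (V := VQ) (ι := {c // c ∈ K})
      (by rw [Fintype.card_coe]; exact hk2)
      (fun c => (c : VQ)) Subtype.val_injective
      (fun j c => m (Bw j) ↑c) (fun c => (Cl ↑c).card) (2*r - n) (by omega) ?_ ?_ ?_
    · intro j
      rw [Finset.sum_coe_sort K (fun c => m (Bw j) c),
        Finset.sum_coe_sort K (fun c => (Cl c).card),
        hmsum (Bw j) (hBsub _ (hBwH j)), hBcard _ (hBwH j), hNsum]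
      omega
    · intro j c hne
      exact hBwoff j ↑c c.2 (fun h => hne (Subtype.ext h))
    · intro j
      rw [Finset.sum_coe_sort K (fun c => (m (Bw j) c : ℚ) • c)]
      exact hker0 (Bw j) (hBsub _ (hBwH j)) (hBrat _ (hBwH j))
  obtain ⟨jstar, hjK, hjgood⟩ := hnotall
  obtain ⟨x₀, hx₀A, hx₀⟩ := Finset.mem_image.mp hjK
  have hjgood' : ∀ (B : Finset ℝ), B ∈ H → x₀ ∉ B →
      ∃ c, c ∈ K ∧ c ≠ jstar ∧ (Cl c).card < 2 * m B c := by
    intro B hB hxB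
    by_contra hno
    push_neg at hno
    apply hjgood
    refine ⟨B, hB, ?_, fun c hc hne => hno c hc hne⟩
    have hsub2 : B.filter (fun x => piQ x = jstar) ⊂ Cl jstar := by
      constructor
      · exact Finset.filter_subset_filter _ (hBsub B hB)
      · intro hcon
        have hx₀Cl : x₀ ∈ Cl jstar := Finset.mem_filter.mpr ⟨hx₀A, hx₀⟩
        have := hcon hx₀Cl
        exact hxB (Finset.mem_of_mem_filter _ this)
    exact Finset.card_lt_card hsub2
  have hFex : ∀ (c : VQ) (t : ℕ), (Cl c).card < 2*t → ∃ f : Finset ℝ → Finset ℝ,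
      (∀ S ∈ (Cl c).powersetCard t, f S ⊆ S ∧ (f S).card = t - 1) ∧
      Set.InjOn f ((Cl c).powersetCard t) := fun c t h => exists_shadow_injection (Cl c) t h
  set F : VQ → ℕ → Finset ℝ → Finset ℝ := fun c t =>
    if h : (Cl c).card < 2*t then (hFex c t h).choose else id with hF
  have hFspec : ∀ (c : VQ) (t : ℕ) (h : (Cl c).card < 2*t),
      (∀ S ∈ (Cl c).powersetCard t, F c t S ⊆ S ∧ (F c t S).card = t - 1) ∧
      Set.InjOn (F c t) ((Cl c).powersetCard t) := by
    intro c t h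
    simp only [hF, dif_pos h]
    exact (hFex c t h).choose_spec
  choose cB hcBK hcBne hcBbig using hjgood'
  have hSmem : ∀ (B : Finset ℝ) (hB : B ∈ H) (c : VQ),
      B.filter (fun x => piQ x = c) ∈ (Cl c).powersetCard (m B c) := by
    intro B hB c
    rw [Finset.mem_powersetCard]
    exact ⟨Finset.filter_subset_filter _ (hBsub B hB), rfl⟩
  have hyex : ∀ (B : Finset ℝ) (hB : B ∈ H) (hx : x₀ ∉ B),
      ∃ y : ℝ, y ∈ B.filter (fun x => piQ x = cB B hB hx) ∧
        F (cB B hB hx) (m B (cB B hB hx)) (B.filter (fun x => piQ x = cB B hB hx))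
          = (B.filter (fun x => piQ x = cB B hB hx)).erase y := by
    intro B hB hx
    set c := cB B hB hx with hc
    set S := B.filter (fun x => piQ x = c) with hS
    have hbig : (Cl c).card < 2 * m B c := hcBbig B hB hx
    have hSm : S ∈ (Cl c).powersetCard (m B c) := hSmem B hB c
    obtain ⟨hfsub, hfcard⟩ := (hFspec c (m B c) hbig).1 S hSm
    have hScard : S.card = m B c := rfl
    have hd : (S \ F c (m B c) S).card = 1 := by
      rw [Finset.card_sdiff_of_subset hfsub, hfcard, hScard]
      omega
    obtain ⟨y, hy⟩ := Finset.card_eq_one.mp hd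
    have hysd : y ∈ S \ F c (m B c) S := hy ▸ Finset.mem_singleton_self y
    rw [Finset.mem_sdiff] at hysd
    refine ⟨y, hysd.1, ?_⟩
    apply Finset.eq_of_subset_of_card_le
    · intro z hz
      rw [Finset.mem_erase]
      refine ⟨fun hzy => hysd.2 (hzy ▸ hz), hfsub hz⟩
    · rw [Finset.card_erase_of_mem hysd.1, hfcard, hScard]
  choose yB hyBS hyBF using hyex
  have herase_pi : ∀ B₁, B₁ ∈ H → ∀ B₂, B₂ ∈ H → ∀ y₁ y₂, y₁ ∈ B₁ → y₂ ∈ B₂ →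
      B₁.erase y₁ = B₂.erase y₂ → piQ y₁ = piQ y₂ := by
    intro B₁ hB₁ B₂ hB₂ y₁ y₂ hy₁ hy₂ he
    obtain ⟨q₁, hq₁⟩ := hBrat B₁ hB₁
    obtain ⟨q₂, hq₂⟩ := hBrat B₂ hB₂
    have h₁ := Finset.add_sum_erase B₁ (fun x => x) hy₁
    have h₂ := Finset.add_sum_erase B₂ (fun x => x) hy₂
    rw [he] at h₁
    apply piQ_eq_of_rat_sub (q₁ - q₂)
    push_cast
    rw [hq₁] at h₁
    rw [hq₂] at h₂
    linarith
  set Φ : Finset ℝ → Finset ℝ := fun B =>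
    if h : B ∈ H ∧ x₀ ∉ B then insert x₀ (B.erase (yB B h.1 h.2)) else B with hΦ
  have hstar := star_card A x₀ hx₀A r (by omega)
  rw [hcard] at hstar
  rw [← hstar]
  apply Finset.card_le_card_of_injOn Φ
  · -- Φ maps H into the star of x₀
    intro B hB
    rw [Finset.mem_coe] at hB
    rw [Finset.mem_coe, Finset.mem_filter]
    by_cases hx : x₀ ∈ B
    · have hΦB : Φ B = B := by
        simp only [hΦ]
        rw [dif_neg (fun hc => hc.2 hx)]
      rw [hΦB]
      exact ⟨(Finset.mem_filter.mp hB).1, hx⟩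
    · have hΦB : Φ B = insert x₀ (B.erase (yB B hB hx)) := by
        simp only [hΦ]
        rw [dif_pos ⟨hB, hx⟩]
      rw [hΦB]
      have hyB : yB B hB hx ∈ B := Finset.mem_of_mem_filter _ (hyBS B hB hx)
      refine ⟨Finset.mem_powersetCard.mpr ⟨?_, ?_⟩, Finset.mem_insert_self _ _⟩
      · exact Finset.insert_subset hx₀A ((Finset.erase_subset _ _).trans (hBsub B hB))
      · rw [Finset.card_insert_of_notMem (fun hc => hx (Finset.mem_of_mem_erase hc)),
          Finset.card_erase_of_mem hyB, hBcard B hB]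
        omega
  · -- Φ is injective on H
    intro B₁ hB₁' B₂ hB₂' heq
    rw [Finset.mem_coe] at hB₁' hB₂'
    -- helper for the mixed case
    have hmixed : ∀ Ba, Ba ∈ H → ∀ Bb, ∀ (hBb : Bb ∈ H), x₀ ∈ Ba → ∀ (hb : x₀ ∉ Bb),
        Ba = insert x₀ (Bb.erase (yB Bb hBb hb)) → False := by
      intro Ba hBa Bb hBb ha hb hab
      set y₂ := yB Bb hBb hb with hy₂def
      have hy₂B : y₂ ∈ Bb := Finset.mem_of_mem_filter _ (hyBS Bb hBb hb)
      have hx₀e : x₀ ∉ Bb.erase y₂ := fun hc => hb (Finset.mem_of_mem_erase hc)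
      have he : Ba.erase x₀ = Bb.erase y₂ := by
        rw [hab, Finset.erase_insert hx₀e]
      have hpi := herase_pi Ba hBa Bb hBb x₀ y₂ ha hy₂B he
      have hpiy₂ : piQ y₂ = cB Bb hBb hb := (Finset.mem_filter.mp (hyBS Bb hBb hb)).2
      exact (hcBne Bb hBb hb) (by rw [← hpiy₂, ← hpi, hx₀])
    by_cases h₁ : x₀ ∈ B₁ <;> by_cases h₂ : x₀ ∈ B₂
    · -- both contain x₀
      simp only [hΦ] at heq
      rw [dif_neg (fun hc => hc.2 h₁), dif_neg (fun hc => hc.2 h₂)] at heq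
      exact heq
    · exfalso
      simp only [hΦ] at heq
      rw [dif_neg (fun hc => hc.2 h₁), dif_pos ⟨hB₂', h₂⟩] at heq
      exact hmixed B₁ hB₁' B₂ hB₂' h₁ h₂ heq
    · exfalso
      simp only [hΦ] at heq
      rw [dif_pos ⟨hB₁', h₁⟩, dif_neg (fun hc => hc.2 h₂)] at heq
      exact hmixed B₂ hB₂' B₁ hB₁' h₂ h₁ heq.symm
    · -- neither contains x₀
      simp only [hΦ] at heq
      rw [dif_pos ⟨hB₁', h₁⟩, dif_pos ⟨hB₂', h₂⟩] at heq
      set y₁ := yB B₁ hB₁' h₁ with hy₁def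
      set y₂ := yB B₂ hB₂' h₂ with hy₂def
      have hy₁B : y₁ ∈ B₁ := Finset.mem_of_mem_filter _ (hyBS B₁ hB₁' h₁)
      have hy₂B : y₂ ∈ B₂ := Finset.mem_of_mem_filter _ (hyBS B₂ hB₂' h₂)
      have e₁ : x₀ ∉ B₁.erase y₁ := fun hc => h₁ (Finset.mem_of_mem_erase hc)
      have e₂ : x₀ ∉ B₂.erase y₂ := fun hc => h₂ (Finset.mem_of_mem_erase hc)
      have he : B₁.erase y₁ = B₂.erase y₂ := by
        have h5 := congrArg (fun S => S.erase x₀) heq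
        simpa only [Finset.erase_insert e₁, Finset.erase_insert e₂] using h5
      by_cases hy12 : y₁ = y₂
      · rw [← Finset.insert_erase hy₁B, ← Finset.insert_erase hy₂B, he, hy12]
      · exfalso
        have hpi := herase_pi B₁ hB₁' B₂ hB₂' y₁ y₂ hy₁B hy₂B he
        have hpiy₁ : piQ y₁ = cB B₁ hB₁' h₁ := (Finset.mem_filter.mp (hyBS B₁ hB₁' h₁)).2
        have hpiy₂ : piQ y₂ = cB B₂ hB₂' h₂ := (Finset.mem_filter.mp (hyBS B₂ hB₂' h₂)).2
        have hc12 : cB B₁ hB₁' h₁ = cB B₂ hB₂' h₂ := by rw [← hpiy₁, ← hpiy₂, hpi]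
        set c := cB B₁ hB₁' h₁ with hcdef
        have hy₂nB₁ : y₂ ∉ B₁ := by
          intro hc2
          have h6 : y₂ ∈ B₁.erase y₁ :=
            Finset.mem_erase.mpr ⟨fun hh => hy12 hh.symm, hc2⟩
          rw [he] at h6
          exact (Finset.mem_erase.mp h6).1 rfl
        set S₁ := B₁.filter (fun x => piQ x = c) with hS₁
        set S₂ := B₂.filter (fun x => piQ x = c) with hS₂
        have hy₁S : y₁ ∈ S₁ := hyBS B₁ hB₁' h₁
        have hy₂S : y₂ ∈ S₂ := by rw [hS₂, hc12]; exact hyBS B₂ hB₂' h₂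
        have hy₂nS : y₂ ∉ S₁.erase y₁ :=
          fun hc2 => hy₂nB₁ (Finset.mem_of_mem_filter _ (Finset.mem_of_mem_erase hc2))
        have hB₂eq : B₂ = insert y₂ (B₁.erase y₁) := by
          rw [he, Finset.insert_erase hy₂B]
        have hS₂eq : S₂ = insert y₂ (S₁.erase y₁) := by
          rw [hS₂, hB₂eq, Finset.filter_insert]
          rw [if_pos (by rw [← hc12] at hpiy₂; exact hpiy₂)]
          congr 1
          rw [hS₁]
          rw [Finset.filter_erase]
        have hScard₁ : S₁.card = m B₁ c := rfl
        have ht12 : m B₂ c = m B₁ c := by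
          show S₂.card = S₁.card
          rw [hS₂eq, Finset.card_insert_of_notMem hy₂nS, Finset.card_erase_of_mem hy₁S]
          have h8 : 1 ≤ S₁.card := Finset.card_pos.mpr ⟨y₁, hy₁S⟩
          omega
        have hbig₁ : (Cl c).card < 2 * m B₁ c := hcBbig B₁ hB₁' h₁
        have hf₁ : F c (m B₁ c) S₁ = S₁.erase y₁ := hyBF B₁ hB₁' h₁
        have hf₂ : F c (m B₁ c) S₂ = S₂.erase y₂ := by
          have h7 := hyBF B₂ hB₂' h₂
          rw [← hc12] at h7
          rw [ht12] at h7
          exact h7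
        have hfeq : F c (m B₁ c) S₁ = F c (m B₁ c) S₂ := by
          rw [hf₁, hf₂, hS₂eq, Finset.erase_insert hy₂nS]
        have hS₁mem : S₁ ∈ (Cl c).powersetCard (m B₁ c) := hSmem B₁ hB₁' c
        have hS₂mem : S₂ ∈ (Cl c).powersetCard (m B₁ c) := by
          have h9 := hSmem B₂ hB₂' c
          rw [ht12] at h9
          exact h9
        have hSeq : S₁ = S₂ := (hFspec c (m B₁ c) hbig₁).2
          (Finset.mem_coe.mpr hS₁mem) (Finset.mem_coe.mpr hS₂mem) hfeq
        rw [← hSeq] at hy₂S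
        exact hy₂nB₁ (Finset.mem_of_mem_filter _ hy₂S)

open Classical in
lemma exists_extremal (n r : ℕ) (h1 : n < 2 * r) (h2 : r < n) :
    ∃ A : Finset ℝ, A.card = n ∧ (∀ x ∈ A, Irrational x) ∧
      (n - 1).choose (r - 1) ≤ ratSumCount A r := by
  classical
  have hr2 : 2 ≤ r := by omega
  set s2 := Real.sqrt 2 with hs2
  have hs2irr : Irrational s2 := irrational_sqrt_two
  have hs2pos : 0 < s2 := Real.sqrt_pos.mpr (by norm_num)
  set a : ℝ := -(((r - 1 : ℕ) : ℝ) * s2) with ha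
  set T : Finset ℝ := (Finset.range (n-1)).image (fun i : ℕ => s2 + (i:ℝ)) with hT
  have hTcard : T.card = n - 1 := by
    rw [hT, Finset.card_image_of_injective, Finset.card_range]
    intro i j hij
    have h3 : (i:ℝ) = j := by
      have h4 : s2 + (i:ℝ) = s2 + j := hij
      linarith
    exact_mod_cast h3
  have haneg : a < 0 := by
    rw [ha]
    have h5 : (0:ℝ) < ((r-1:ℕ):ℝ) * s2 := by
      apply mul_pos _ hs2pos
      have h6 : 0 < r - 1 := by omega
      exact_mod_cast h6
    linarith
  have haT : a ∉ T := by
    intro hmem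
    rw [hT, Finset.mem_image] at hmem
    obtain ⟨i, _, hi⟩ := hmem
    have h3 : (0:ℝ) < s2 + i := by positivity
    rw [hi] at h3
    linarith
  set A := insert a T with hA
  have haA : a ∈ A := Finset.mem_insert_self a T
  have hAcard : A.card = n := by
    rw [hA, Finset.card_insert_of_notMem haT, hTcard]; omega
  refine ⟨A, hAcard, ?_, ?_⟩
  · intro x hx
    rw [hA, Finset.mem_insert] at hx
    rcases hx with rfl | hx
    · exact (hs2irr.natCast_mul (m := r - 1) (by omega)).neg
    · rw [hT, Finset.mem_image] at hx
      obtain ⟨i, _, rfl⟩ := hx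
      exact hs2irr.add_natCast i
  · have hstar := star_card A a haA r (by omega)
    rw [hAcard] at hstar
    unfold ratSumCount
    refine le_trans (le_of_eq hstar.symm) (Finset.card_le_card ?_)
    intro B hB
    rw [Finset.mem_filter] at hB ⊢
    refine ⟨hB.1, ?_⟩
    obtain ⟨hBA, hBcard⟩ := Finset.mem_powersetCard.mp hB.1
    have haB : a ∈ B := hB.2
    have hBT : B.erase a ⊆ T := by
      intro x hx
      rw [Finset.mem_erase] at hx
      have h7 := hBA hx.2
      rw [hA, Finset.mem_insert] at h7
      rcases h7 with h | h
      · exact absurd h hx.1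
      · exact h
    have hcarde : (B.erase a).card = r - 1 := by rw [Finset.card_erase_of_mem haB, hBcard]
    obtain ⟨q, hq⟩ := sum_rat_of_forall (S := B.erase a) (f := fun x => x - s2) (by
      intro x hx
      have h8 := hBT hx
      rw [hT, Finset.mem_image] at h8
      obtain ⟨i, _, rfl⟩ := h8
      exact ⟨i, by push_cast; ring⟩)
    refine ⟨q, ?_⟩
    have hsum : ∑ x ∈ B, x = a + ∑ x ∈ B.erase a, x := (Finset.add_sum_erase B _ haB).symm
    have hsum2 : ∑ x ∈ B.erase a, x
        = (∑ x ∈ B.erase a, (x - s2)) + ((B.erase a).card : ℝ) * s2 := by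
      rw [Finset.sum_sub_distrib, Finset.sum_const, nsmul_eq_mul]
      ring
    rw [hsum, hsum2, hq, hcarde, ha]
    ring

end HLargeAux

theorem h_large_r (n r : ℕ) (h1 : n < 2 * r) (h2 : r < n) :
    maxRatSum n r = Nat.choose (n - 1) (r - 1) := by
  obtain ⟨A₀, hc, hi, hge⟩ := HLargeAux.exists_extremal n r h1 h2
  have heq : ratSumCount A₀ r = Nat.choose (n - 1) (r - 1) :=
    le_antisymm (HLargeAux.ratSumCount_le n r h1 h2 A₀ hc hi) hge
  have hmem : Nat.choose (n - 1) (r - 1) ∈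
      {k : ℕ | ∃ A : Finset ℝ, A.card = n ∧ (∀ x ∈ A, Irrational x) ∧ ratSumCount A r = k} :=
    ⟨A₀, hc, hi, heq⟩
  have hbdd : ∀ k ∈ {k : ℕ | ∃ A : Finset ℝ, A.card = n ∧ (∀ x ∈ A, Irrational x) ∧
      ratSumCount A r = k}, k ≤ Nat.choose (n - 1) (r - 1) := by
    rintro k ⟨A, hc', hi', rfl⟩
    exact HLargeAux.ratSumCount_le n r h1 h2 A hc' hi'
  exact le_antisymm (csSup_le ⟨_, hmem⟩ hbdd)
    (le_csSup ⟨Nat.choose (n - 1) (r - 1), hbdd⟩ hmem)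
end

section
/- Let n, r be natural numbers with 1 < r < n/2. Then h(n,r) ≥ C(n − ⌊n/r⌋, r−1)·⌊n/r⌋, i.e. there exists an n-element set A of irrational real numbers with at least binomial(n − ⌊n/r⌋, r−1)·⌊n/r⌋ r-element subsets having rational sum. -/
lemma sum_shift_rat (c : ℝ) (S : Finset ℝ) (h : ∀ x ∈ S, ∃ q : ℚ, x = c + q) :
    ∃ q : ℚ, ∑ x ∈ S, x = (S.card : ℝ) * c + q := by
  classical
  induction S using Finset.induction with
  | empty => exact ⟨0, by simp⟩
  | @insert a s ha ih =>
    obtain ⟨q1, hq1⟩ := h a (Finset.mem_insert_self a s)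
    obtain ⟨q2, hq2⟩ := ih (fun x hx => h x (Finset.mem_insert_of_mem hx))
    refine ⟨q1 + q2, ?_⟩
    rw [Finset.sum_insert ha, Finset.card_insert_of_notMem ha, hq1, hq2]
    push_cast
    ring

theorem h_lower_bound (n r : ℕ) (hr : 1 < r) (hn : 2 * r < n) :
    Nat.choose (n - n / r) (r - 1) * (n / r) ≤ maxRatSum n r := by
  classical
  set m := n / r with hm
  have hrpos : 0 < r := by omega
  have hm2 : 2 ≤ m := by
    rw [hm, Nat.le_div_iff_mul_le hrpos]; omega
  have hmn : m ≤ n := Nat.div_le_self n r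
  have hmlt : m < n := by
    have : m ≤ n / 2 := by
      rw [hm]; exact Nat.div_le_div_left (by omega) (by omega)
    omega
  set c := Real.sqrt 2 with hc
  have hcirr : Irrational c := irrational_sqrt_two
  set f : ℕ → ℝ := fun k => c + ((k + 1 : ℕ) : ℝ) with hf
  set g : ℕ → ℝ := fun i => ((i + 1 : ℕ) : ℝ) - ((r - 1 : ℕ) : ℝ) * c with hg
  have hfinj : Function.Injective f := by
    intro k l hkl
    simp only [hf, add_right_inj, Nat.cast_inj] at hkl
    omega
  have hginj : Function.Injective g := by
    intro k l hkl
    simp only [hg, sub_left_inj, Nat.cast_inj] at hkl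
    omega
  set C := (Finset.range (n - m)).image f with hC
  set B := (Finset.range m).image g with hB
  -- no element of B equals an element of C
  have hBC : ∀ i k : ℕ, g i ≠ f k := by
    intro i k hik
    have hr1 : ((r - 1 : ℕ) : ℝ) = (r : ℝ) - 1 := by
      push_cast [Nat.cast_sub (by omega : 1 ≤ r)]; ring
    have : (r : ℝ) * c = ((i : ℤ) - (k : ℤ) : ℤ) := by
      simp only [hg, hf, hr1] at hik
      push_cast
      push_cast at hik
      nlinarith [hik]
    have : Irrational (((i : ℤ) - (k : ℤ) : ℤ) : ℝ) := this ▸ hcirr.natCast_mul (by omega : r ≠ 0)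
    exact (Int.not_irrational _) this
  have hdisj : Disjoint B C := by
    rw [Finset.disjoint_left]
    intro x hxB hxC
    simp only [hB, hC, Finset.mem_image, Finset.mem_range] at hxB hxC
    obtain ⟨i, _, hi⟩ := hxB
    obtain ⟨k, _, hk⟩ := hxC
    exact hBC i k (hi.trans hk.symm)
  set A := B ∪ C with hA
  have hCcard : C.card = n - m := by
    rw [hC, Finset.card_image_of_injective _ hfinj, Finset.card_range]
  have hBcard : B.card = m := by
    rw [hB, Finset.card_image_of_injective _ hginj, Finset.card_range]
  have hAcard : A.card = n := by
    rw [hA, Finset.card_union_of_disjoint hdisj, hBcard, hCcard]; omega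
  have hAirr : ∀ x ∈ A, Irrational x := by
    intro x hx
    rw [hA, Finset.mem_union] at hx
    rcases hx with hx | hx
    · simp only [hB, Finset.mem_image] at hx
      obtain ⟨i, _, hi⟩ := hx
      rw [← hi, hg]
      exact (hcirr.natCast_mul (by omega : r - 1 ≠ 0)).natCast_sub (i + 1)
    · simp only [hC, Finset.mem_image] at hx
      obtain ⟨k, _, hk⟩ := hx
      rw [← hk, hf]
      exact hcirr.add_natCast (k + 1)
  -- counting
  have hsub : ∀ S ∈ C.powersetCard (r - 1), ∀ b ∈ B,
      insert b S ∈ (A.powersetCard r).filter (fun T => ∃ q : ℚ, (∑ x ∈ T, x) = (q : ℝ)) := by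
    intro S hS b hb
    rw [Finset.mem_powersetCard] at hS
    obtain ⟨hSC, hScard⟩ := hS
    have hbS : b ∉ S := fun h => (Finset.disjoint_left.mp hdisj hb) (hSC h)
    rw [Finset.mem_filter]
    constructor
    · rw [Finset.mem_powersetCard]
      constructor
      · intro x hx
        rcases Finset.mem_insert.mp hx with h | h
        · exact Finset.mem_union_left _ (h ▸ hb)
        · exact Finset.mem_union_right _ (hSC h)
      · rw [Finset.card_insert_of_notMem hbS, hScard]; omega
    · -- rational sum
      obtain ⟨q, hq⟩ := sum_shift_rat c S (by
        intro x hx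
        have := hSC hx
        simp only [hC, Finset.mem_image] at this
        obtain ⟨k, _, hk⟩ := this
        exact ⟨((k : ℚ) + 1), by rw [← hk, hf]; push_cast; ring⟩)
      simp only [hB, Finset.mem_image] at hb
      obtain ⟨i, _, hi⟩ := hb
      refine ⟨(i : ℚ) + 1 + q, ?_⟩
      rw [Finset.sum_insert hbS, hq, hScard, ← hi, hg]
      push_cast
      ring
  have hinj : Set.InjOn (fun p : Finset ℝ × ℝ => insert p.2 p.1)
      ((C.powersetCard (r - 1)) ×ˢ B : Finset (Finset ℝ × ℝ)) := by
    intro p hp p' hp' heq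
    simp only [Finset.mem_coe, Finset.mem_product, Finset.mem_powersetCard] at hp hp'
    obtain ⟨⟨hS, _⟩, hb⟩ := hp
    obtain ⟨⟨hS', _⟩, hb'⟩ := hp'
    have hbS : p.2 ∉ p.1 := fun h => (Finset.disjoint_left.mp hdisj hb) (hS h)
    have hbS' : p'.2 ∉ p'.1 := fun h => (Finset.disjoint_left.mp hdisj hb') (hS' h)
    simp only at heq
    have hbb : p.2 = p'.2 := by
      have h1 : p.2 ∈ insert p'.2 p'.1 := heq ▸ Finset.mem_insert_self _ _
      rcases Finset.mem_insert.mp h1 with h | h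
      · exact h
      · exact absurd (hS' h) (Finset.disjoint_left.mp hdisj hb)
    have : p.1 = p'.1 := by
      have h2 : p.1 = (insert p'.2 p'.1).erase p.2 := by
        rw [← heq, Finset.erase_insert hbS]
      rwa [hbb, Finset.erase_insert hbS'] at h2
    exact Prod.ext this hbb
  have hcount : Nat.choose (n - m) (r - 1) * m ≤ ratSumCount A r := by
    have hmaps : ∀ p ∈ ((C.powersetCard (r - 1)) ×ˢ B : Finset (Finset ℝ × ℝ)),
        insert p.2 p.1 ∈ (A.powersetCard r).filter (fun T => ∃ q : ℚ, (∑ x ∈ T, x) = (q : ℝ)) := by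
      intro p hp
      rw [Finset.mem_product] at hp
      exact hsub p.1 hp.1 p.2 hp.2
    have hle := Finset.card_le_card_of_injOn _ hmaps hinj
    rw [Finset.card_product, Finset.card_powersetCard, hCcard, hBcard] at hle
    unfold ratSumCount
    convert hle using 2
  -- conclude
  have hmem : ratSumCount A r ∈
      {k : ℕ | ∃ A : Finset ℝ, A.card = n ∧ (∀ x ∈ A, Irrational x) ∧ ratSumCount A r = k} :=
    ⟨A, hAcard, hAirr, rfl⟩
  have hbdd : BddAbove {k : ℕ | ∃ A : Finset ℝ, A.card = n ∧ (∀ x ∈ A, Irrational x) ∧ ratSumCount A r = k} := by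
    refine ⟨n.choose r, ?_⟩
    rintro k ⟨A', hA', _, rfl⟩
    calc ratSumCount A' r ≤ (A'.powersetCard r).card := Finset.card_filter_le _ _
      _ = n.choose r := by rw [Finset.card_powersetCard, hA']
  calc Nat.choose (n - m) (r - 1) * m ≤ ratSumCount A r := hcount
    _ ≤ maxRatSum n r := le_csSup hbdd hmem
end

section
/- For every natural number n ≥ 1, the maximum number of subsets (of any size) with rational sum over all n-element sets of irrational real numbers equals C(n, ⌊n/2⌋), i.e. h(n) = binomial(n, ⌊n/2⌋). -/
open Finset
open scoped symmDiff

/-! ### Auxiliary lemmas -/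

/-- Erdős's Littlewood–Offord bound: the number of subsets of a fintype with a fixed
nonzero-weight sum is at most the middle binomial coefficient. -/
lemma lo_bound {α : Type*} [Fintype α] [DecidableEq α] (g : α → ℚ) (hg : ∀ i, g i ≠ 0)
    (s : ℚ) :
    ((Finset.univ : Finset (Finset α)).filter (fun B => ∑ i ∈ B, g i = s)).card
      ≤ (Fintype.card α).choose (Fintype.card α / 2) := by
  classical
  set N : Finset α := Finset.univ.filter (fun i => g i < 0) with hN
  have key : ∀ B : Finset α, ∑ i ∈ B ∆ N, |g i| = ∑ i ∈ B, g i - ∑ i ∈ N, g i := by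
    intro B
    have hd : Disjoint (B \ N) (N \ B) := disjoint_sdiff_sdiff
    have hsymm : B ∆ N = (B \ N) ∪ (N \ B) := by
      rw [symmDiff_def, Finset.sup_eq_union]
    rw [hsymm, Finset.sum_union hd]
    have h1 : ∑ i ∈ B \ N, |g i| = ∑ i ∈ B \ N, g i := by
      refine Finset.sum_congr rfl fun i hi => ?_
      have hiN : i ∉ N := (Finset.mem_sdiff.1 hi).2
      have : ¬ g i < 0 := by simpa [hN] using hiN
      exact abs_of_nonneg (le_of_not_gt this)
    have h2 : ∑ i ∈ N \ B, |g i| = ∑ i ∈ N \ B, (-g i) := by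
      refine Finset.sum_congr rfl fun i hi => ?_
      have hiN : i ∈ N := (Finset.mem_sdiff.1 hi).1
      have : g i < 0 := by simpa [hN] using hiN
      exact abs_of_neg this
    have e1 : ∑ i ∈ B, g i = ∑ i ∈ B \ N, g i + ∑ i ∈ B ∩ N, g i := by
      rw [← Finset.sum_union (Finset.disjoint_sdiff_inter _ _), Finset.sdiff_union_inter]
    have e2 : ∑ i ∈ N, g i = ∑ i ∈ N \ B, g i + ∑ i ∈ N ∩ B, g i := by
      rw [← Finset.sum_union (Finset.disjoint_sdiff_inter _ _), Finset.sdiff_union_inter]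
    have e3 : ∑ i ∈ B ∩ N, g i = ∑ i ∈ N ∩ B, g i := by rw [Finset.inter_comm]
    have e4 : ∑ i ∈ N \ B, (-g i) = -∑ i ∈ N \ B, g i := by
      rw [Finset.sum_neg_distrib]
    rw [h1, h2, e4]
    linarith
  set H := (Finset.univ : Finset (Finset α)).filter (fun B => ∑ i ∈ B, g i = s) with hH
  have hcard : (H.image (· ∆ N)).card = H.card :=
    Finset.card_image_of_injective _ (symmDiff_left_injective N)
  have hanti : IsAntichain (· ⊆ ·) ((H.image (· ∆ N) : Finset (Finset α)) : Set (Finset α)) := by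
    rintro C₁ hC₁ C₂ hC₂ hne hsub
    simp only [Finset.coe_image, Set.mem_image, Finset.mem_coe, hH, Finset.mem_filter,
      Finset.mem_univ, true_and] at hC₁ hC₂
    obtain ⟨B₁, hB₁, rfl⟩ := hC₁
    obtain ⟨B₂, hB₂, rfl⟩ := hC₂
    have hss : B₁ ∆ N ⊂ B₂ ∆ N := ⟨hsub, fun h => hne (le_antisymm hsub h)⟩
    obtain ⟨x, hx₂, hx₁⟩ := Finset.exists_of_ssubset hss
    have hlt : ∑ i ∈ B₁ ∆ N, |g i| < ∑ i ∈ B₂ ∆ N, |g i| :=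
      Finset.sum_lt_sum_of_subset hsub hx₂ hx₁ (abs_pos.2 (hg x))
        (fun j _ _ => abs_nonneg _)
    rw [key B₁, key B₂, hB₁, hB₂] at hlt
    exact lt_irrefl _ hlt
  calc H.card = (H.image (· ∆ N)).card := hcard.symm
    _ ≤ _ := IsAntichain.sperner hanti

/-- Version of `lo_bound` for subsets of a finite set of reals with rational weights. -/
lemma lo_bound_powerset (A : Finset ℝ) (g : ℝ → ℚ) (hg : ∀ x ∈ A, g x ≠ 0) :
    (A.powerset.filter (fun B => ∑ x ∈ B, g x = 0)).card
      ≤ A.card.choose (A.card / 2) := by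
  classical
  have hfc : Fintype.card {x // x ∈ A} = A.card := Fintype.card_coe A
  have hb := lo_bound (fun i : {x // x ∈ A} => g i.1) (fun i => hg i.1 i.2) 0
  rw [hfc] at hb
  refine le_trans ?_ hb
  apply Finset.card_le_card_of_injOn (fun B => B.subtype (· ∈ A))
  · intro B hB
    simp only [Finset.mem_coe, Finset.mem_filter, Finset.mem_powerset] at hB
    simp only [Finset.mem_coe, Finset.mem_filter, Finset.mem_univ, true_and]
    rw [Finset.sum_subtype_of_mem _ (fun x hx => hB.1 hx)]
    exact hB.2
  · intro B₁ h₁ B₂ h₂ heq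
    simp only [Finset.mem_coe, Finset.mem_filter, Finset.mem_powerset] at h₁ h₂
    have r : ∀ B : Finset ℝ, B ⊆ A →
        (B.subtype (· ∈ A)).map (Function.Embedding.subtype _) = B := by
      intro B hB
      rw [Finset.subtype_map]
      exact Finset.filter_true_of_mem (fun x hx => hB hx)
    rw [← r B₁ h₁.1, ← r B₂ h₂.1]
    exact congrArg _ heq

/-- Over ℚ, a functional can avoid vanishing on finitely many nonzero vectors. -/
lemma exists_dual_ne_zero_finset {V : Type*} [AddCommGroup V] [Module ℚ V] (s : Finset V)
    (hs : ∀ v ∈ s, v ≠ 0) : ∃ f : V →ₗ[ℚ] ℚ, ∀ v ∈ s, f v ≠ 0 := by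
  classical
  induction s using Finset.induction with
  | empty => exact ⟨0, by simp⟩
  | @insert v s hvs ih =>
    obtain ⟨f, hf⟩ := ih (fun w hw => hs w (Finset.mem_insert_of_mem hw))
    have hv : v ≠ 0 := hs v (Finset.mem_insert_self v s)
    obtain ⟨g, hgv⟩ : ∃ g : V →ₗ[ℚ] ℚ, g v ≠ 0 := by
      by_contra hcon
      push_neg at hcon
      exact hv ((Module.forall_dual_apply_eq_zero_iff ℚ v).1 hcon)
    obtain ⟨c, hc⟩ :=
      Infinite.exists_notMem_finset
        (insert (-(f v)/(g v)) (s.image fun w => -(f w)/(g w)))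
    refine ⟨f + c • g, ?_⟩
    intro w hw
    rcases Finset.mem_insert.1 hw with rfl | hw
    · intro h0
      simp only [LinearMap.add_apply, LinearMap.smul_apply, smul_eq_mul] at h0
      have hcv : c = -(f w)/(g w) := by field_simp; linarith
      exact hc (by rw [hcv]; exact Finset.mem_insert_self _ _)
    · by_cases hgw : g w = 0
      · simpa [LinearMap.add_apply, LinearMap.smul_apply, smul_eq_mul, hgw] using hf w hw
      · intro h0
        simp only [LinearMap.add_apply, LinearMap.smul_apply, smul_eq_mul] at h0
        have hcw : c = -(f w)/(g w) := by field_simp; linarith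
        exact hc (by rw [hcw]
                     exact Finset.mem_insert_of_mem (Finset.mem_image.2 ⟨w, hw, rfl⟩))

open Classical in
/-- The number of subsets of `A` (of any size) with rational sum. -/
noncomputable def ratSumCountAll (A : Finset ℝ) : ℕ :=
  (A.powerset.filter (fun B => ∃ q : ℚ, (∑ x ∈ B, x) = (q : ℝ))).card

/-- `h n`: the maximum number of subsets with rational sum over all `n`-element sets of
irrational real numbers. -/
noncomputable def maxRatSumAll (n : ℕ) : ℕ :=
  sSup {k : ℕ | ∃ A : Finset ℝ, A.card = n ∧ (∀ x ∈ A, Irrational x) ∧ ratSumCountAll A = k}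

lemma ratSumCountAll_eq (A : Finset ℝ)
    [DecidablePred fun B : Finset ℝ => ∃ q : ℚ, (∑ x ∈ B, x) = (q : ℝ)] :
    ratSumCountAll A
      = (A.powerset.filter (fun B => ∃ q : ℚ, (∑ x ∈ B, x) = (q : ℝ))).card := by
  unfold ratSumCountAll
  congr!

/-- The upper bound: any `n`-set of irrationals has at most `C(n, n/2)` rational-sum subsets. -/
lemma upper_bound (A : Finset ℝ) (hA : ∀ x ∈ A, Irrational x) :
    ratSumCountAll A ≤ A.card.choose (A.card / 2) := by
  classical
  set W : Submodule ℚ ℝ := Submodule.span ℚ (insert (1 : ℝ) (A : Set ℝ)) with hWdef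
  have h1W : (1 : ℝ) ∈ W := Submodule.subset_span (Set.mem_insert 1 _)
  have hxW : ∀ x ∈ A, x ∈ W := fun x hx =>
    Submodule.subset_span (Set.mem_insert_of_mem _ hx)
  set e : W := ⟨1, h1W⟩ with he
  set L : Submodule ℚ W := ℚ ∙ e with hL
  set π : W →ₗ[ℚ] (W ⧸ L) := L.mkQ with hπ
  have himg : ∀ x (hx : x ∈ A), π ⟨x, hxW x hx⟩ ≠ 0 := by
    intro x hx h0
    rw [hπ, Submodule.mkQ_apply, Submodule.Quotient.mk_eq_zero] at h0
    obtain ⟨c, hc⟩ := Submodule.mem_span_singleton.1 h0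
    have hval : (c : ℝ) * 1 = x := congrArg Subtype.val hc
    exact hA x hx ⟨c, by rw [← hval]; ring⟩
  have hne : ∀ v ∈ A.attach.image (fun x => π ⟨x.1, hxW x.1 x.2⟩), v ≠ 0 := by
    intro v hv
    obtain ⟨x, hx, hxeq⟩ := Finset.mem_image.1 hv
    rw [← hxeq]
    exact himg x.1 x.2
  obtain ⟨f, hf⟩ := exists_dual_ne_zero_finset _ hne
  set g : ℝ → ℚ := fun x => if h : x ∈ W then f (π ⟨x, h⟩) else 0 with hg
  have hgA : ∀ x ∈ A, g x ≠ 0 := by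
    intro x hx
    have : g x = f (π ⟨x, hxW x hx⟩) := by simp [hg, hxW x hx]
    rw [this]
    exact hf _ (Finset.mem_image.2 ⟨⟨x, hx⟩, Finset.mem_attach _ _, rfl⟩)
  have hsum0 : ∀ B ∈ A.powerset, (∃ q : ℚ, (∑ x ∈ B, x) = (q : ℝ)) → ∑ x ∈ B, g x = 0 := by
    intro B hB hex
    obtain ⟨q, hq⟩ := hex
    rw [Finset.mem_powerset] at hB
    have hBW : ∀ x ∈ B, x ∈ W := fun x hx => hxW x (hB hx)
    have hattach : ∑ x ∈ B, g x = ∑ x ∈ B.attach, f (π ⟨x.1, hBW x.1 x.2⟩) := by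
      rw [← Finset.sum_attach B g]
      refine Finset.sum_congr rfl fun x _ => ?_
      simp [hg, hBW x.1 x.2]
    have hmaps : f (π (∑ x ∈ B.attach, (⟨x.1, hBW x.1 x.2⟩ : W)))
        = ∑ x ∈ B.attach, f (π ⟨x.1, hBW x.1 x.2⟩) := by
      rw [map_sum, map_sum]
    have helt : (∑ x ∈ B.attach, (⟨x.1, hBW x.1 x.2⟩ : W)) = (q : ℚ) • e := by
      apply Subtype.ext
      rw [AddSubmonoidClass.coe_finset_sum]
      have hc : ∀ x ∈ B.attach, ((⟨x.1, hBW x.1 x.2⟩ : W) : ℝ) = x.1 := fun x _ => rfl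
      rw [Finset.sum_congr rfl hc, Finset.sum_attach B (fun x => x), hq]
      simp [he]
    have hπe : π e = 0 := by
      rw [hπ, Submodule.mkQ_apply, Submodule.Quotient.mk_eq_zero]
      exact Submodule.mem_span_singleton_self e
    rw [hattach, ← hmaps, helt, map_smul, map_smul, hπe]
    simp
  rw [ratSumCountAll_eq A]
  refine le_trans (Finset.card_le_card ?_) (lo_bound_powerset A g hgA)
  intro B hB
  rw [Finset.mem_filter] at hB ⊢
  exact ⟨hB.1, hsum0 B hB.1 hB.2⟩

/-- The lower bound construction: `⌈n/2⌉` numbers `i + 1 + √2` and `⌊n/2⌋` numbers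
`j + 1 - √2`. -/
lemma lower_bound (n : ℕ) : ∃ A : Finset ℝ, A.card = n ∧ (∀ x ∈ A, Irrational x) ∧
    Nat.choose n (n / 2) ≤ ratSumCountAll A := by
  classical
  set b := n / 2 with hb
  set a := n - b with ha
  have hab : a + b = n := Nat.sub_add_cancel (Nat.div_le_self n 2)
  set fP : ℕ → ℝ := fun i => (i : ℝ) + 1 + Real.sqrt 2 with hfP
  set fQ : ℕ → ℝ := fun j => (j : ℝ) + 1 - Real.sqrt 2 with hfQ
  have hinjP : Function.Injective fP := by
    intro i j h
    simp only [hfP] at h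
    exact_mod_cast (by linarith : (i : ℝ) = j)
  have hinjQ : Function.Injective fQ := by
    intro i j h
    simp only [hfQ] at h
    exact_mod_cast (by linarith : (i : ℝ) = j)
  have hPQ : ∀ i j : ℕ, fP i ≠ fQ j := by
    intro i j h
    simp only [hfP, hfQ] at h
    have h2 : Real.sqrt 2 = ((((j : ℚ) - i) / 2 : ℚ) : ℝ) := by push_cast; linarith
    exact Rat.not_irrational _ (h2 ▸ irrational_sqrt_two)
  set P := (Finset.range a).image fP with hP
  set Q := (Finset.range b).image fQ with hQ
  have hdisj : Disjoint P Q := by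
    rw [Finset.disjoint_left]
    intro x hxP hxQ
    obtain ⟨i, _, rfl⟩ := Finset.mem_image.1 hxP
    obtain ⟨j, _, hj⟩ := Finset.mem_image.1 hxQ
    exact hPQ i j hj.symm
  set A := P ∪ Q with hA
  have hcardA : A.card = n := by
    rw [hA, Finset.card_union_of_disjoint hdisj, hP, hQ,
      Finset.card_image_of_injective _ hinjP, Finset.card_image_of_injective _ hinjQ,
      Finset.card_range, Finset.card_range, hab]
  have hirr : ∀ x ∈ A, Irrational x := by
    intro x hx
    rcases Finset.mem_union.1 hx with hx | hx
    · obtain ⟨i, _, rfl⟩ := Finset.mem_image.1 hx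
      have heq : fP i = ((((i : ℚ) + 1 : ℚ)) : ℝ) + Real.sqrt 2 := by
        simp only [hfP]; push_cast; ring
      rw [heq]
      exact irrational_sqrt_two.ratCast_add _
    · obtain ⟨j, _, rfl⟩ := Finset.mem_image.1 hx
      have heq : fQ j = ((((j : ℚ) + 1 : ℚ)) : ℝ) + (-Real.sqrt 2) := by
        simp only [hfQ]; push_cast; ring
      rw [heq]
      exact irrational_sqrt_two.neg.ratCast_add _
  set D := ((Finset.range a).powerset ×ˢ (Finset.range b).powerset).filter
      (fun p => p.1.card = p.2.card) with hD
  set Φ : Finset ℕ × Finset ℕ → Finset ℝ := fun p => p.1.image fP ∪ p.2.image fQ with hΦ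
  have hDeq : D = (Finset.range (b + 1)).biUnion
      (fun k => (Finset.powersetCard k (Finset.range a)) ×ˢ
        (Finset.powersetCard k (Finset.range b))) := by
    ext p
    simp only [hD, Finset.mem_filter, Finset.mem_product, Finset.mem_powerset,
      Finset.mem_biUnion, Finset.mem_range, Finset.mem_powersetCard]
    constructor
    · rintro ⟨⟨hS, hT⟩, hcard⟩
      refine ⟨p.2.card, ?_, ⟨hS, hcard⟩, ⟨hT, rfl⟩⟩
      have hle := Finset.card_le_card hT
      rw [Finset.card_range] at hle
      exact Nat.lt_succ_of_le hle
    · rintro ⟨k, _, ⟨hS, hSk⟩, ⟨hT, hTk⟩⟩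
      exact ⟨⟨hS, hT⟩, by rw [hSk, hTk]⟩
  have hcardD : D.card = ∑ k ∈ Finset.range (b + 1), (a.choose k) * (b.choose k) := by
    rw [hDeq, Finset.card_biUnion]
    · refine Finset.sum_congr rfl fun k _ => ?_
      rw [Finset.card_product, Finset.card_powersetCard, Finset.card_powersetCard,
        Finset.card_range, Finset.card_range]
    · intro k _ k' _ hkk'
      rw [Function.onFun, Finset.disjoint_left]
      intro p hp hp'
      rw [Finset.mem_product, Finset.mem_powersetCard] at hp hp'
      exact hkk' (hp.1.2 ▸ hp'.1.2 ▸ rfl)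
  have hsum : ∑ k ∈ Finset.range (b + 1), (a.choose k) * (b.choose k)
      = n.choose (n / 2) := by
    calc ∑ k ∈ Finset.range (b + 1), a.choose k * b.choose k
        = ∑ k ∈ Finset.range (b + 1), a.choose k * b.choose (b - k) := by
          refine Finset.sum_congr rfl fun k hk => ?_
          rw [Nat.choose_symm (Nat.lt_succ_iff.1 (Finset.mem_range.1 hk))]
      _ = (a + b).choose b := by
          rw [Nat.add_choose_eq,
            Finset.Nat.sum_antidiagonal_eq_sum_range_succ
              (fun i j => a.choose i * b.choose j)]
      _ = n.choose (n / 2) := by rw [hab, ← hb]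
  have hkey : ∀ (S T : Finset ℕ), S ⊆ Finset.range a → T ⊆ Finset.range b →
      (S.image fP ∪ T.image fQ) ∩ P = S.image fP := by
    intro S T hS hT
    apply Finset.Subset.antisymm
    · intro x hx
      rw [Finset.mem_inter, Finset.mem_union] at hx
      rcases hx.1 with h | h
      · exact h
      · exact absurd ((Finset.image_subset_image hT) h)
          (Finset.disjoint_left.1 hdisj hx.2)
    · intro x hx
      exact Finset.mem_inter.2 ⟨Finset.mem_union_left _ hx,
        (Finset.image_subset_image hS) hx⟩
  have hmain : D.card ≤ (A.powerset.filter
      (fun B => ∃ q : ℚ, (∑ x ∈ B, x) = (q : ℝ))).card := by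
    apply Finset.card_le_card_of_injOn Φ
    · intro p hp
      simp only [Finset.mem_coe, hD, Finset.mem_filter, Finset.mem_product, Finset.mem_powerset] at hp
      obtain ⟨⟨hS, hT⟩, hc⟩ := hp
      have hsub : Φ p ⊆ A :=
        Finset.union_subset_union (Finset.image_subset_image hS)
          (Finset.image_subset_image hT)
      rw [Finset.mem_coe, Finset.mem_filter, Finset.mem_powerset]
      refine ⟨hsub, (∑ i ∈ p.1, ((i : ℚ) + 1)) + ∑ j ∈ p.2, ((j : ℚ) + 1), ?_⟩
      have hd : Disjoint (p.1.image fP) (p.2.image fQ) :=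
        hdisj.mono (Finset.image_subset_image hS) (Finset.image_subset_image hT)
      rw [hΦ]
      simp only
      rw [Finset.sum_union hd, Finset.sum_image (fun i _ j _ h => hinjP h),
        Finset.sum_image (fun i _ j _ h => hinjQ h)]
      simp only [hfP, hfQ]
      rw [Finset.sum_add_distrib, Finset.sum_sub_distrib, Finset.sum_const,
        Finset.sum_const, hc]
      push_cast
      ring
    · intro p hp p' hp' heq
      simp only [Finset.mem_coe, hD, Finset.mem_filter, Finset.mem_product,
        Finset.mem_powerset] at hp hp'
      have h1 : p.1.image fP = p'.1.image fP := by
        rw [← hkey p.1 p.2 hp.1.1 hp.1.2, ← hkey p'.1 p'.2 hp'.1.1 hp'.1.2]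
        simp only [hΦ] at heq
        rw [heq]
      have h1' : p.1 = p'.1 := Finset.image_injective hinjP h1
      have hd : Disjoint (p.1.image fP) (p.2.image fQ) :=
        hdisj.mono (Finset.image_subset_image hp.1.1) (Finset.image_subset_image hp.1.2)
      have hd' : Disjoint (p'.1.image fP) (p'.2.image fQ) :=
        hdisj.mono (Finset.image_subset_image hp'.1.1) (Finset.image_subset_image hp'.1.2)
      have h2 : p.2.image fQ = p'.2.image fQ := by
        have e1 : p.2.image fQ = Φ p \ p.1.image fP := by
          rw [hΦ]; simp only
          rw [Finset.union_sdiff_cancel_left hd]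
        have e2 : p'.2.image fQ = Φ p' \ p'.1.image fP := by
          rw [hΦ]; simp only
          rw [Finset.union_sdiff_cancel_left hd']
        rw [e1, e2, heq, h1']
      have h2' : p.2 = p'.2 := Finset.image_injective hinjQ h2
      exact Prod.ext h1' h2'
  refine ⟨A, hcardA, hirr, ?_⟩
  rw [ratSumCountAll_eq A]
  calc n.choose (n / 2) = D.card := by rw [hcardD, hsum]
    _ ≤ _ := hmain

theorem h_nonuniform (n : ℕ) (hn : 1 ≤ n) : maxRatSumAll n = Nat.choose n (n / 2) := by
  classical
  obtain ⟨A₀, hc₀, hi₀, hge₀⟩ := lower_bound n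
  have hub : ∀ k ∈ {k : ℕ | ∃ A : Finset ℝ, A.card = n ∧ (∀ x ∈ A, Irrational x) ∧
      ratSumCountAll A = k}, k ≤ n.choose (n / 2) := by
    rintro k ⟨A, hcard, hirr, rfl⟩
    have := upper_bound A hirr
    rwa [hcard] at this
  have hA₀le : ratSumCountAll A₀ ≤ n.choose (n / 2) := hub _ ⟨A₀, hc₀, hi₀, rfl⟩
  have heq₀ : ratSumCountAll A₀ = n.choose (n / 2) := le_antisymm hA₀le hge₀
  have hmem : n.choose (n / 2) ∈ {k : ℕ | ∃ A : Finset ℝ, A.card = n ∧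
      (∀ x ∈ A, Irrational x) ∧ ratSumCountAll A = k} := ⟨A₀, hc₀, hi₀, heq₀⟩
  unfold maxRatSumAll
  apply le_antisymm
  · exact csSup_le ⟨_, hmem⟩ hub
  · exact le_csSup ⟨n.choose (n / 2), hub⟩ hmem
end

section
/- For all natural numbers n, r with 0 < r < n, one has g(n,r) = g(n, n−r). -/
open Classical in
/-- `s_r(A, α)`: the number of `r`-element subsets of `A` whose sum lies in `ℚ + α`. -/
noncomputable def shiftRatCount (A : Finset ℝ) (r : ℕ) (α : ℝ) : ℕ :=
  ((A.powersetCard r).filter (fun B => ∃ q : ℚ, (∑ x ∈ B, x) = (q : ℝ) + α)).card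

/-- `g n r`: the maximum of `s_r(A, α)` over all `α ∈ ℝ` and all `n`-element sets `A` of
irrational real numbers that are not entirely contained in `ℚ + α/r`. -/
noncomputable def maxShiftRatSum (n r : ℕ) : ℕ :=
  sSup {k : ℕ | ∃ α : ℝ, ∃ A : Finset ℝ, A.card = n ∧ (∀ x ∈ A, Irrational x) ∧
    ¬ (∀ x ∈ A, ∃ q : ℚ, x = (q : ℝ) + α / (r : ℝ)) ∧ shiftRatCount A r α = k}

lemma sum_rat_shift (A : Finset ℝ) (β : ℝ) (h : ∀ x ∈ A, ∃ q : ℚ, x = (q : ℝ) + β) :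
    ∃ Q : ℚ, ∑ x ∈ A, x = (Q : ℝ) + (A.card : ℝ) * β := by
  classical
  choose f hf using h
  refine ⟨∑ x ∈ A.attach, f x.1 x.2, ?_⟩
  rw [Rat.cast_sum]
  rw [← Finset.sum_attach A (fun x => x)]
  have : ∑ x ∈ A.attach, (x : ℝ) = ∑ x ∈ A.attach, (((f x.1 x.2 : ℚ) : ℝ) + β) := by
    apply Finset.sum_congr rfl
    intro x _
    exact hf x.1 x.2
  rw [this, Finset.sum_add_distrib, Finset.sum_const, Finset.card_attach, nsmul_eq_mul]

lemma cond_forward (n r : ℕ) (hr : 0 < r) (hn : r < n) (A : Finset ℝ) (hA : A.card = n)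
    (α : ℝ) (h : ∀ x ∈ A, ∃ q : ℚ, x = (q : ℝ) + α / (r : ℝ)) :
    ∀ x ∈ A, ∃ q : ℚ, x = (q : ℝ) + (∑ y ∈ A, y - α) / ((n - r : ℕ) : ℝ) := by
  obtain ⟨Q, hQ⟩ := sum_rat_shift A (α / r) h
  have hnr : (0:ℝ) < ((n - r : ℕ) : ℝ) := by
    have : 0 < n - r := Nat.sub_pos_of_lt hn
    exact_mod_cast this
  have hr' : (0:ℝ) < (r : ℝ) := by exact_mod_cast hr
  have hcast : ((n - r : ℕ) : ℝ) = (n : ℝ) - (r : ℝ) := by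
    exact_mod_cast Nat.cast_sub hn.le
  have hd : (n : ℝ) - (r : ℝ) ≠ 0 := by rw [← hcast]; exact ne_of_gt hnr
  have key : (∑ y ∈ A, y - α) / ((n - r : ℕ) : ℝ) = (Q : ℝ) / ((n - r : ℕ) : ℝ) + α / r := by
    rw [hQ, hA, hcast, div_eq_iff hd]
    field_simp
    ring
  intro x hx
  obtain ⟨q, hq⟩ := h x hx
  refine ⟨q - Q / ((n - r : ℕ) : ℚ), ?_⟩
  rw [key, hq]
  push_cast
  ring

lemma count_compl (n r : ℕ) (hrn : r ≤ n) (A : Finset ℝ) (hA : A.card = n) (α : ℝ) :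
    shiftRatCount A r α = shiftRatCount A (n - r) (∑ y ∈ A, y - α) := by
  classical
  unfold shiftRatCount
  apply Finset.card_bij' (fun B _ => A \ B) (fun C _ => A \ C)
  · intro B hB
    simp only [Finset.mem_filter, Finset.mem_powersetCard] at hB ⊢
    obtain ⟨⟨hBA, hBcard⟩, q, hq⟩ := hB
    refine ⟨⟨Finset.sdiff_subset, ?_⟩, -q, ?_⟩
    · rw [Finset.card_sdiff_of_subset hBA, hA, hBcard]
    · rw [Finset.sum_sdiff_eq_sub hBA, hq]
      push_cast
      ring
  · intro C hC
    simp only [Finset.mem_filter, Finset.mem_powersetCard] at hC ⊢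
    obtain ⟨⟨hCA, hCcard⟩, q, hq⟩ := hC
    refine ⟨⟨Finset.sdiff_subset, ?_⟩, -q, ?_⟩
    · rw [Finset.card_sdiff_of_subset hCA, hA, hCcard, Nat.sub_sub_self hrn]
    · rw [Finset.sum_sdiff_eq_sub hCA, hq]
      push_cast
      ring
  · intro B hB
    simp only [Finset.mem_filter, Finset.mem_powersetCard] at hB
    exact Finset.sdiff_sdiff_eq_self hB.1.1
  · intro C hC
    simp only [Finset.mem_filter, Finset.mem_powersetCard] at hC
    exact Finset.sdiff_sdiff_eq_self hC.1.1

lemma set_subset (n r : ℕ) (hr : 0 < r) (hn : r < n) :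
    {k : ℕ | ∃ α : ℝ, ∃ A : Finset ℝ, A.card = n ∧ (∀ x ∈ A, Irrational x) ∧
      ¬ (∀ x ∈ A, ∃ q : ℚ, x = (q : ℝ) + α / (r : ℝ)) ∧ shiftRatCount A r α = k} ⊆
    {k : ℕ | ∃ α : ℝ, ∃ A : Finset ℝ, A.card = n ∧ (∀ x ∈ A, Irrational x) ∧
      ¬ (∀ x ∈ A, ∃ q : ℚ, x = (q : ℝ) + α / ((n - r : ℕ) : ℝ)) ∧
      shiftRatCount A (n - r) α = k} := by
  rintro k ⟨α, A, hcard, hirr, hnc, hcount⟩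
  refine ⟨∑ y ∈ A, y - α, A, hcard, hirr, ?_, ?_⟩
  · intro hall
    apply hnc
    have := cond_forward n (n - r) (Nat.sub_pos_of_lt hn) (by omega) A hcard
      (∑ y ∈ A, y - α) hall
    have h1 : n - (n - r) = r := Nat.sub_sub_self hn.le
    have h2 : ∑ y ∈ A, y - (∑ y ∈ A, y - α) = α := by ring
    rw [h1, h2] at this
    exact this
  · rw [← hcount]
    exact (count_compl n r hn.le A hcard α).symm

theorem g_complement (n r : ℕ) (hr : 0 < r) (hn : r < n) :
    maxShiftRatSum n r = maxShiftRatSum n (n - r) := by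
  unfold maxShiftRatSum
  congr 1
  apply Set.Subset.antisymm
  · exact set_subset n r hr hn
  · have h := set_subset n (n - r) (Nat.sub_pos_of_lt hn) (by omega)
    rwa [Nat.sub_sub_self hn.le] at h
end

section
/- Let n, r be natural numbers with 0 < r < n − 1. Then at least one of the following holds: g(n,r) ≤ g(n−1,r)·n/(n−r), or g(n,r) = C(n−1, r−1), or g(n,r) = C(n−1, r). -/
private lemma sum_shift (c : ℝ) (B : Finset ℝ) (h : ∀ y ∈ B, ∃ q : ℚ, y = (q : ℝ) + c) :
    ∃ Q : ℚ, ∑ y ∈ B, y = (Q : ℝ) + B.card * c := by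
  classical
  induction B using Finset.induction_on with
  | empty => exact ⟨0, by simp⟩
  | @insert a s ha ih =>
    obtain ⟨q, hq⟩ := h a (Finset.mem_insert_self _ _)
    obtain ⟨Q, hQ⟩ := ih fun y hy => h y (Finset.mem_insert_of_mem hy)
    refine ⟨q + Q, ?_⟩
    rw [Finset.sum_insert ha, Finset.card_insert_of_notMem ha, hq, hQ]
    push_cast
    ring

private lemma count_le_choose (A : Finset ℝ) (r : ℕ) (α : ℝ) :
    shiftRatCount A r α ≤ A.card.choose r := by
  classical
  unfold shiftRatCount
  calc ((A.powersetCard r).filter _).card ≤ (A.powersetCard r).card :=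
        Finset.card_filter_le _ _
    _ = A.card.choose r := Finset.card_powersetCard _ _

private lemma bddAbove_gset (n r : ℕ) :
    BddAbove {k : ℕ | ∃ α : ℝ, ∃ A : Finset ℝ, A.card = n ∧ (∀ x ∈ A, Irrational x) ∧
      ¬ (∀ x ∈ A, ∃ q : ℚ, x = (q : ℝ) + α / (r : ℝ)) ∧ shiftRatCount A r α = k} := by
  refine ⟨n.choose r, fun k hk => ?_⟩
  obtain ⟨α, A, hA, -, -, hc⟩ := hk
  rw [← hc]
  simpa [hA] using count_le_choose A r α

private lemma double_count (A : Finset ℝ) (r : ℕ) (α : ℝ) :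
    ∑ x ∈ A, shiftRatCount (A.erase x) r α = (A.card - r) * shiftRatCount A r α := by
  classical
  unfold shiftRatCount
  set P : Finset ℝ → Prop := fun B => ∃ q : ℚ, (∑ x ∈ B, x) = (q : ℝ) + α with hP
  have key : ∀ x : ℝ, ((A.erase x).powersetCard r).filter P
      = (((A.powersetCard r).filter P).filter (fun B => x ∉ B)) := by
    intro x
    ext B
    simp only [Finset.mem_filter, Finset.mem_powersetCard, Finset.subset_erase]
    tauto
  calc ∑ x ∈ A, (((A.erase x).powersetCard r).filter P).card
      = ∑ x ∈ A, ∑ B ∈ (A.powersetCard r).filter P, (if x ∉ B then 1 else 0) := by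
        refine Finset.sum_congr rfl fun x _ => ?_
        rw [key x, Finset.card_filter]
    _ = ∑ B ∈ (A.powersetCard r).filter P, ∑ x ∈ A, (if x ∉ B then 1 else 0) :=
        Finset.sum_comm
    _ = ∑ _B ∈ (A.powersetCard r).filter P, (A.card - r) := by
        refine Finset.sum_congr rfl fun B hB => ?_
        rw [← Finset.card_filter]
        have hBA : B ⊆ A ∧ B.card = r := by
          simpa [Finset.mem_powersetCard] using (Finset.mem_filter.mp hB).1
        rw [← Finset.sdiff_eq_filter, Finset.card_sdiff_of_subset hBA.1, hBA.2]
    _ = (A.card - r) * ((A.powersetCard r).filter P).card := by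
        rw [Finset.sum_const, smul_eq_mul, mul_comm]

theorem g_recursion (n r : ℕ) (hr : 0 < r) (hn : r < n - 1) :
    (maxShiftRatSum n r : ℝ) ≤ (maxShiftRatSum (n - 1) r : ℝ) * (n : ℝ) / ((n : ℝ) - (r : ℝ)) ∨
    maxShiftRatSum n r = Nat.choose (n - 1) (r - 1) ∨
    maxShiftRatSum n r = Nat.choose (n - 1) r := by
  classical
  have hrn : r < n := by omega
  have hpos : (0 : ℝ) < (n : ℝ) - (r : ℝ) := by
    rw [sub_pos]
    exact_mod_cast hrn
  set S := {k : ℕ | ∃ α : ℝ, ∃ A : Finset ℝ, A.card = n ∧ (∀ x ∈ A, Irrational x) ∧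
    ¬ (∀ x ∈ A, ∃ q : ℚ, x = (q : ℝ) + α / (r : ℝ)) ∧ shiftRatCount A r α = k} with hS
  have hgdef : maxShiftRatSum n r = sSup S := rfl
  by_cases hne : S.Nonempty
  · have hmem : sSup S ∈ S := Nat.sSup_mem hne (bddAbove_gset n r)
    obtain ⟨α, A, hcard, hirr, hnotall, hcount⟩ := hmem
    by_cases hB : ∃ x₀ ∈ A, ∀ y ∈ A, y ≠ x₀ → ∃ q : ℚ, y = (q : ℝ) + α / (r : ℝ)
    · -- exceptional case : all but one element in ℚ + α/r
      right; right
      obtain ⟨x₀, hx₀A, hrest⟩ := hB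
      have hx₀ : ¬ ∃ q : ℚ, x₀ = (q : ℝ) + α / (r : ℝ) := by
        push_neg at hnotall ⊢
        obtain ⟨y, hyA, hy⟩ := hnotall
        have hyx : y = x₀ := by
          by_contra hne'
          obtain ⟨q, hq⟩ := hrest y hyA hne'
          exact hy q hq
        intro q
        rw [← hyx]
        exact hy q
      have hrR : ((r : ℝ)) ≠ 0 := by positivity
      have hfilter : ((A.powersetCard r).filter
            (fun B => ∃ q : ℚ, (∑ x ∈ B, x) = (q : ℝ) + α))
          = (A.erase x₀).powersetCard r := by
        ext B
        simp only [Finset.mem_filter, Finset.mem_powersetCard, Finset.subset_erase]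
        constructor
        · rintro ⟨⟨hBA, hBr⟩, q, hq⟩
          refine ⟨⟨hBA, ?_⟩, hBr⟩
          intro hx₀B
          obtain ⟨Q, hQ⟩ := sum_shift (α / r) (B.erase x₀) (fun y hy => by
            exact hrest y (hBA (Finset.mem_of_mem_erase hy)) (Finset.ne_of_mem_erase hy))
          have hsplit : x₀ + ∑ y ∈ B.erase x₀, y = ∑ y ∈ B, y :=
            Finset.add_sum_erase B (fun y => y) hx₀B
          have hcB : (B.erase x₀).card = r - 1 := by
            rw [Finset.card_erase_of_mem hx₀B, hBr]
          rw [hcB] at hQ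
          have hcast : ((r - 1 : ℕ) : ℝ) = (r : ℝ) - 1 := by
            rw [Nat.cast_sub hr]
            norm_num
          apply hx₀
          refine ⟨q - Q, ?_⟩
          have : x₀ = (q : ℝ) + α - ((Q : ℝ) + ((r : ℝ) - 1) * (α / r)) := by
            rw [← hcast, ← hQ]
            rw [← hsplit] at hq
            linarith
          rw [this]
          push_cast
          field_simp
          ring
        · rintro ⟨⟨hBA, hxB⟩, hBr⟩
          refine ⟨⟨hBA, hBr⟩, ?_⟩
          obtain ⟨Q, hQ⟩ := sum_shift (α / r) B (fun y hy => by
            refine hrest y (hBA hy) ?_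
            rintro rfl
            exact hxB hy)
          refine ⟨Q, ?_⟩
          rw [hQ, hBr, mul_div_cancel₀ _ hrR]
      have : shiftRatCount A r α = (n - 1).choose r := by
        unfold shiftRatCount
        rw [hfilter, Finset.card_powersetCard, Finset.card_erase_of_mem hx₀A, hcard]
      rw [hgdef, ← hcount, this]
    · -- main case : double counting
      left
      push_neg at hB
      set S' := {k : ℕ | ∃ α : ℝ, ∃ A : Finset ℝ, A.card = n - 1 ∧ (∀ x ∈ A, Irrational x) ∧
        ¬ (∀ x ∈ A, ∃ q : ℚ, x = (q : ℝ) + α / (r : ℝ)) ∧ shiftRatCount A r α = k} with hS'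
      have hg'def : maxShiftRatSum (n - 1) r = sSup S' := rfl
      have hle : ∀ x ∈ A, shiftRatCount (A.erase x) r α ≤ maxShiftRatSum (n - 1) r := by
        intro x hx
        rw [hg'def]
        refine le_csSup (bddAbove_gset (n - 1) r) ?_
        refine ⟨α, A.erase x, ?_, fun y hy => hirr y (Finset.mem_of_mem_erase hy), ?_, rfl⟩
        · rw [Finset.card_erase_of_mem hx, hcard]
        · obtain ⟨y, hyA, hyx, hyq⟩ := hB x hx
          intro hall
          obtain ⟨q, hq⟩ := hall y (Finset.mem_erase.mpr ⟨hyx, hyA⟩)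
          exact hyq q hq
      have hsum : (n - r) * shiftRatCount A r α ≤ n * maxShiftRatSum (n - 1) r := by
        have h1 : ∑ x ∈ A, shiftRatCount (A.erase x) r α
            ≤ ∑ _x ∈ A, maxShiftRatSum (n - 1) r := Finset.sum_le_sum hle
        rw [double_count, hcard] at h1
        rwa [Finset.sum_const, hcard, smul_eq_mul] at h1
      rw [hgdef, ← hcount] at *
      rw [div_eq_inv_mul, ← mul_assoc, mul_comm, ← mul_assoc, ← div_eq_mul_inv,
        div_mul_eq_mul_div, le_div_iff₀ hpos]
      have h2 : (((n - r : ℕ) : ℝ)) * (shiftRatCount A r α : ℝ)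
          ≤ (n : ℝ) * (maxShiftRatSum (n - 1) r : ℝ) := by exact_mod_cast hsum
      rw [Nat.cast_sub hrn.le] at h2
      linarith
  · left
    rw [hgdef, Set.not_nonempty_iff_eq_empty.mp hne]
    rw [csSup_empty]
    show ((⊥ : ℕ) : ℝ) ≤ _
    rw [Nat.bot_eq_zero, Nat.cast_zero]
    positivity
end

section
/- For all natural numbers n, r with 0 < r < n/2, one has g(n,r) = C(n−1, r). -/
open Finset


private lemma sum_shift_mem {B : Finset ℝ} {c : ℝ}
    (h : ∀ x ∈ B, ∃ q : ℚ, x = (q : ℝ) + c) :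
    ∃ q : ℚ, (∑ x ∈ B, x) = (q : ℝ) + B.card * c := by
  classical
  induction B using Finset.induction_on with
  | empty => exact ⟨0, by simp⟩
  | @insert y s hy ih =>
    obtain ⟨q1, hq1⟩ := h y (mem_insert_self _ _)
    obtain ⟨q2, hq2⟩ := ih (fun x hx => h x (mem_insert_of_mem hx))
    refine ⟨q1 + q2, ?_⟩
    rw [Finset.sum_insert hy, Finset.card_insert_of_notMem hy, hq1, hq2]
    push_cast
    ring

private lemma decomp {Z W B : Finset ℝ} (hd : Disjoint Z W) (hB : B ⊆ Z ∪ W) :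
    B = (B ∩ Z) ∪ (B ∩ W) ∧ (B ∩ Z).card + (B ∩ W).card = B.card := by
  classical
  have hcover : B = (B ∩ Z) ∪ (B ∩ W) := by
    rw [← Finset.inter_union_distrib_left]
    exact (Finset.inter_eq_left.2 hB).symm
  have hdis : Disjoint (B ∩ Z) (B ∩ W) :=
    hd.mono Finset.inter_subset_right Finset.inter_subset_right
  refine ⟨hcover, ?_⟩
  rw [← Finset.card_union_of_disjoint hdis, ← hcover]

-- arithmetic helper: u + (q' + s * (a/(s+1))) = q + a  implies  u = (q - q') + a/(s+1)
private lemma arith1 {u a : ℝ} {s : ℕ} (q q' : ℚ)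
    (h : u + ((q' : ℝ) + (s : ℝ) * (a / ((s : ℝ) + 1))) = (q : ℝ) + a) :
    u = ((q - q' : ℚ) : ℝ) + a / ((s : ℝ) + 1) := by
  have hs : ((s : ℝ) + 1) ≠ 0 := by positivity
  field_simp at h ⊢
  push_cast
  linarith

-- arithmetic helper for deg2
private lemma arith2 {u a : ℝ} {s : ℕ} (hs1 : 1 ≤ s) (q q' : ℚ)
    (h : (q' : ℝ) + ((s : ℝ) + 1) * ((a - u) / (s : ℝ)) = (q : ℝ) + a) :
    u = (((- (s * (q - q'))) / (s + 1) : ℚ) : ℝ) + a / ((s : ℝ) + 1) := by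
  have hs : (s : ℝ) ≠ 0 := by positivity
  field_simp at h
  have key : u * ((s : ℝ) + 1) = a + (s : ℝ) * (q' : ℝ) - (s : ℝ) * (q : ℝ) := by
    linear_combination -h
  have hs2 : ((s : ℝ) + 1) ≠ 0 := by positivity
  push_cast
  field_simp
  linear_combination key

private lemma arith3 {t c a : ℝ} {r : ℕ} (w z : ℕ) (hw : z + w = r) (q2 qB : ℚ)
    (h : (q2 : ℝ) + (z : ℝ) * c + (w : ℝ) * t = (qB : ℝ) + a) :
    (w : ℝ) * (t - c) = ((qB - q2 : ℚ) : ℝ) + (a - (r : ℝ) * c) := by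
  have hz : (z : ℝ) = (r : ℝ) - (w : ℝ) := by
    have := congrArg (Nat.cast : ℕ → ℝ) hw
    push_cast at this
    linarith
  push_cast
  linear_combination h - c * hz

private lemma arith4 {t c K : ℝ} (w w' : ℕ) (hne : w ≠ w') (r1 r2 : ℚ)
    (h1 : (w : ℝ) * (t - c) = (r1 : ℝ) + K) (h2 : (w' : ℝ) * (t - c) = (r2 : ℝ) + K) :
    ∃ q : ℚ, t = (q : ℝ) + c := by
  refine ⟨(r1 - r2) / ((w : ℚ) - (w' : ℚ)), ?_⟩
  have hq : ((w : ℚ) - (w' : ℚ)) ≠ 0 := by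
    simp only [sub_ne_zero]
    exact_mod_cast hne
  have hqr : ((w : ℝ) - (w' : ℝ)) ≠ 0 := by
    simp only [sub_ne_zero]
    exact_mod_cast hne
  have h3 : ((w : ℝ) - (w' : ℝ)) * (t - c) = (r1 : ℝ) - (r2 : ℝ) := by
    linear_combination h1 - h2
  push_cast
  field_simp
  linear_combination h3

private lemma arith5 {t a : ℝ} {s : ℕ} (ρ : ℚ)
    (h : ((s : ℕ) + 1 : ℝ) * (t - a / ((s : ℝ) + 1)) =
      (ρ : ℝ) + (a - ((s : ℕ) + 1 : ℝ) * (a / ((s : ℝ) + 1)))) :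
    t = ((ρ / (s + 1) : ℚ) : ℝ) + a / ((s : ℝ) + 1) := by
  have hs2 : ((s : ℝ) + 1) ≠ 0 := by positivity
  have hsq : ((s : ℚ) + 1) ≠ 0 := by positivity
  push_cast at h ⊢
  field_simp at h ⊢
  linear_combination h



private lemma choose_succ_le' {n k : ℕ} (h : 2 * k + 1 ≤ n) :
    n.choose k ≤ n.choose (k + 1) := by
  rcases eq_or_lt_of_le h with he | hlt
  · have h1 : k ≤ n := by omega
    have := Nat.choose_symm h1
    have h2 : n - k = k + 1 := by omega
    rw [h2] at this
    omega
  · exact Nat.choose_le_succ_of_lt_half_left (by omega)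

private lemma prod_choose_le {p z w i : ℕ} (hp : 1 ≤ p) (hz : 1 ≤ z)
    (hn : 2 * (w + i) < p + z) :
    p.choose w * z.choose i ≤ (p + z - 1).choose (w + i) := by
  by_cases hwi : 2 * i < z
  · -- use the z-side room, Pascal on p
    have hpz : p + z - 1 = (p - 1) + z := by omega
    rw [hpz, Nat.add_choose_eq]
    rcases Nat.eq_zero_or_pos w with hw0 | hw1
    · subst hw0
      have h1 : (p - 1).choose 0 * z.choose i ≤
          ∑ ij ∈ Finset.HasAntidiagonal.antidiagonal (0 + i), (p - 1).choose ij.1 * z.choose ij.2 :=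
        Finset.single_le_sum (f := fun ij => (p - 1).choose ij.1 * z.choose ij.2)
          (fun x _ => Nat.zero_le _) (show ((0 : ℕ), i) ∈ Finset.HasAntidiagonal.antidiagonal (0 + i) by simp)
      simpa using h1
    · have pas : p.choose w = (p - 1).choose w + (p - 1).choose (w - 1) := by
        rcases Nat.exists_eq_add_of_le hp with ⟨p', rfl⟩
        rcases Nat.exists_eq_add_of_le hw1 with ⟨w', rfl⟩
        simp only [Nat.add_sub_cancel_left, Nat.add_sub_cancel]
        rw [Nat.add_comm 1 p', Nat.add_comm 1 w', Nat.choose_succ_succ']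
        omega
      have hmono : (p - 1).choose (w - 1) * z.choose i ≤ (p - 1).choose (w - 1) * z.choose (i + 1) :=
        Nat.mul_le_mul_left _ (choose_succ_le' (by omega))
      have key : p.choose w * z.choose i ≤
          (p - 1).choose w * z.choose i + (p - 1).choose (w - 1) * z.choose (i + 1) := by
        rw [pas, Nat.add_mul]
        exact Nat.add_le_add_left hmono _
      refine key.trans ?_
      have hne : ((w, i) : ℕ × ℕ) ≠ (w - 1, i + 1) := by
        intro hcon
        have := congrArg Prod.snd hcon
        simp at this
      have hsub : ({(w, i), (w - 1, i + 1)} : Finset (ℕ × ℕ)) ⊆ Finset.HasAntidiagonal.antidiagonal (w + i) := by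
        intro x hx
        simp only [Finset.mem_insert, Finset.mem_singleton] at hx
        rcases hx with rfl | rfl <;> simp [Finset.HasAntidiagonal.mem_antidiagonal] <;> omega
      calc (p - 1).choose w * z.choose i + (p - 1).choose (w - 1) * z.choose (i + 1)
          = ∑ x ∈ ({(w, i), (w - 1, i + 1)} : Finset (ℕ × ℕ)), (p - 1).choose x.1 * z.choose x.2 := by
            rw [Finset.sum_pair hne]
        _ ≤ _ := Finset.sum_le_sum_of_subset hsub
  · -- then 2 * w < p : symmetric, Pascal on z
    have hwp : 2 * w < p := by omega
    have hpz : p + z - 1 = p + (z - 1) := by omega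
    rw [hpz, Nat.add_choose_eq]
    rcases Nat.eq_zero_or_pos i with hi0 | hi1
    · subst hi0
      have h1 : p.choose w * (z - 1).choose 0 ≤
          ∑ ij ∈ Finset.HasAntidiagonal.antidiagonal (w + 0), p.choose ij.1 * (z - 1).choose ij.2 :=
        Finset.single_le_sum (f := fun ij => p.choose ij.1 * (z - 1).choose ij.2)
          (fun x _ => Nat.zero_le _) (show ((w : ℕ), 0) ∈ Finset.HasAntidiagonal.antidiagonal (w + 0) by simp)
      simpa using h1
    · have pas : z.choose i = (z - 1).choose i + (z - 1).choose (i - 1) := by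
        rcases Nat.exists_eq_add_of_le hz with ⟨z', rfl⟩
        rcases Nat.exists_eq_add_of_le hi1 with ⟨i', rfl⟩
        simp only [Nat.add_sub_cancel_left, Nat.add_sub_cancel]
        rw [Nat.add_comm 1 z', Nat.add_comm 1 i', Nat.choose_succ_succ']
        omega
      have hmono : p.choose w * (z - 1).choose (i - 1) ≤ p.choose (w + 1) * (z - 1).choose (i - 1) :=
        Nat.mul_le_mul_right _ (choose_succ_le' (by omega))
      have key : p.choose w * z.choose i ≤
          p.choose w * (z - 1).choose i + p.choose (w + 1) * (z - 1).choose (i - 1) := by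
        rw [pas, Nat.mul_add]
        exact Nat.add_le_add_left hmono _
      refine key.trans ?_
      have hne : ((w, i) : ℕ × ℕ) ≠ (w + 1, i - 1) := by
        intro hcon
        have := congrArg Prod.fst hcon
        simp at this
      have hsub : ({(w, i), (w + 1, i - 1)} : Finset (ℕ × ℕ)) ⊆ Finset.HasAntidiagonal.antidiagonal (w + i) := by
        intro x hx
        simp only [Finset.mem_insert, Finset.mem_singleton] at hx
        rcases hx with rfl | rfl <;> simp [Finset.HasAntidiagonal.mem_antidiagonal] <;> omega
      calc p.choose w * (z - 1).choose i + p.choose (w + 1) * (z - 1).choose (i - 1)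
          = ∑ x ∈ ({(w, i), (w + 1, i - 1)} : Finset (ℕ × ℕ)), p.choose x.1 * (z - 1).choose x.2 := by
            rw [Finset.sum_pair hne]
        _ ≤ _ := Finset.sum_le_sum_of_subset hsub



private lemma cnt_split {A : Finset ℝ} {u : ℝ} (hu : u ∈ A) (s : ℕ) (a : ℝ) :
    shiftRatCount A (s + 1) a ≤
      shiftRatCount (A.erase u) (s + 1) a + shiftRatCount (A.erase u) s (a - u) := by
  classical
  unfold shiftRatCount
  have hsplit := Finset.card_filter_add_card_filter_not
    (s := (A.powersetCard (s + 1)).filter (fun B => ∃ q : ℚ, (∑ x ∈ B, x) = (q : ℝ) + a))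
    (p := fun B => u ∈ B)
  rw [← hsplit]
  have h1 : (((A.powersetCard (s + 1)).filter (fun B => ∃ q : ℚ, (∑ x ∈ B, x) = (q : ℝ) + a)).filter
      (fun B => ¬ u ∈ B)).card ≤
      (((A.erase u).powersetCard (s + 1)).filter (fun B => ∃ q : ℚ, (∑ x ∈ B, x) = (q : ℝ) + a)).card := by
    apply Finset.card_le_card
    intro B hB
    simp only [Finset.mem_filter, Finset.mem_powersetCard] at hB ⊢
    exact ⟨⟨fun x hx => Finset.mem_erase.2 ⟨by rintro rfl; exact hB.2 hx, hB.1.1.1 hx⟩, hB.1.1.2⟩, hB.1.2⟩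
  have h2 : (((A.powersetCard (s + 1)).filter (fun B => ∃ q : ℚ, (∑ x ∈ B, x) = (q : ℝ) + a)).filter
      (fun B => u ∈ B)).card ≤
      (((A.erase u).powersetCard s).filter (fun B => ∃ q : ℚ, (∑ x ∈ B, x) = (q : ℝ) + (a - u))).card := by
    apply Finset.card_le_card_of_injOn (fun B => B.erase u)
    · intro B hB
      simp only [Finset.mem_coe, Finset.mem_filter, Finset.mem_powersetCard] at hB ⊢
      obtain ⟨⟨⟨hBA, hBc⟩, q, hq⟩, huB⟩ := hB
      refine ⟨⟨Finset.erase_subset_erase _ hBA, by rw [Finset.card_erase_of_mem huB, hBc]; omega⟩, q, ?_⟩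
      have hsum : u + ∑ x ∈ B.erase u, x = ∑ x ∈ B, x := Finset.add_sum_erase _ (fun x => x) huB
      have : u + ∑ x ∈ B.erase u, x = (q : ℝ) + a := by rw [hsum]; exact hq
      linarith
    · intro B hB B' hB' hBB'
      simp only [Finset.coe_filter, Set.mem_setOf_eq] at hB hB'
      have hBB2 : B.erase u = B'.erase u := hBB'
      have h1 := Finset.insert_erase hB.2
      have h2 := Finset.insert_erase hB'.2
      rw [← h1, ← h2, hBB2]
  omega

private lemma cnt_pairing {A : Finset ℝ} {a : ℝ} {r : ℕ} (hr : 1 ≤ r) (hcard : A.card = 2 * r)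
    (hS : ∀ q : ℚ, (∑ x ∈ A, x) ≠ (q : ℝ) + 2 * a) :
    shiftRatCount A r a ≤ (2 * r - 1).choose r := by
  classical
  unfold shiftRatCount
  set G := (A.powersetCard r).filter (fun B => ∃ q : ℚ, (∑ x ∈ B, x) = (q : ℝ) + a) with hG
  have hGsub : ∀ B ∈ G, B ⊆ A ∧ B.card = r := by
    intro B hB
    rw [hG, Finset.mem_filter, Finset.mem_powersetCard] at hB
    exact hB.1
  set G' := G.image (fun B => A \ B) with hG'
  have hcardG' : G'.card = G.card := by
    rw [hG']
    apply Finset.card_image_of_injOn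
    intro B hB B' hB' h
    have h' : A \ B = A \ B' := h
    have h1 : A \ (A \ B) = B := Finset.sdiff_sdiff_eq_self (hGsub B hB).1
    have h2 : A \ (A \ B') = B' := Finset.sdiff_sdiff_eq_self (hGsub B' hB').1
    rw [← h1, ← h2, h']
  have hdisj : Disjoint G G' := by
    rw [Finset.disjoint_left]
    intro C hC hC'
    rw [hG', Finset.mem_image] at hC'
    obtain ⟨B, hB, rfl⟩ := hC'
    obtain ⟨q1, hq1⟩ := (Finset.mem_filter.1 hB).2
    obtain ⟨q2, hq2⟩ := (Finset.mem_filter.1 hC).2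
    have hsum : ∑ x ∈ A \ B, x + ∑ x ∈ B, x = ∑ x ∈ A, x := Finset.sum_sdiff (hGsub B hB).1
    apply hS (q1 + q2)
    push_cast
    rw [← hsum, hq1, hq2]
    ring
  have hsub : G ∪ G' ⊆ A.powersetCard r := by
    intro C hC
    rcases Finset.mem_union.1 hC with hC | hC
    · exact Finset.mem_of_mem_filter _ hC
    · rw [hG', Finset.mem_image] at hC
      obtain ⟨B, hB, rfl⟩ := hC
      rw [Finset.mem_powersetCard]
      refine ⟨Finset.sdiff_subset, ?_⟩
      rw [Finset.card_sdiff_of_subset (hGsub B hB).1, hcard, (hGsub B hB).2]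
      omega
  have hle : G.card + G'.card ≤ (A.powersetCard r).card := by
    rw [← Finset.card_union_of_disjoint hdisj]
    exact Finset.card_le_card hsub
  rw [Finset.card_powersetCard, hcard] at hle
  have hch : (2 * r).choose r = (2 * r - 1).choose r + (2 * r - 1).choose r := by
    obtain ⟨m, rfl⟩ : ∃ m, r = m + 1 := ⟨r - 1, by omega⟩
    have e1 : 2 * (m + 1) = (2 * m + 1) + 1 := by ring
    have e2 : 2 * (m + 1) - 1 = 2 * m + 1 := by omega
    rw [e2, e1, Nat.choose_succ_succ]
    simp only [Nat.succ_eq_add_one]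
    have : (2 * m + 1).choose m = (2 * m + 1).choose (m + 1) := by
      have := Nat.choose_symm (show m ≤ 2 * m + 1 by omega)
      have h2 : 2 * m + 1 - m = m + 1 := by omega
      rw [h2] at this
      omega
    omega
  omega

open Classical in
private lemma cnt_profile_le {A Z W : Finset ℝ} {r w₀ : ℕ} {a : ℝ}
    (hZW : A = Z ∪ W) (hd : Disjoint Z W)
    (hw : ∀ B ∈ (A.powersetCard r).filter (fun B => ∃ q : ℚ, (∑ x ∈ B, x) = (q : ℝ) + a),
      (B ∩ W).card = w₀) :
    shiftRatCount A r a ≤ W.card.choose w₀ * Z.card.choose (r - w₀) := by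
  classical
  unfold shiftRatCount
  have key : ∀ B ∈ (A.powersetCard r).filter (fun B => ∃ q : ℚ, (∑ x ∈ B, x) = (q : ℝ) + a),
      B = (B ∩ Z) ∪ (B ∩ W) ∧ (B ∩ Z).card = r - w₀ ∧ (B ∩ W).card = w₀ := by
    intro B hB
    have hBW := hw B hB
    rw [Finset.mem_filter, Finset.mem_powersetCard] at hB
    have hcover : B = (B ∩ Z) ∪ (B ∩ W) := by
      rw [← Finset.inter_union_distrib_left, ← hZW]
      exact (Finset.inter_eq_left.2 hB.1.1).symm
    have hdis : Disjoint (B ∩ Z) (B ∩ W) :=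
      hd.mono Finset.inter_subset_right Finset.inter_subset_right
    have hcards : (B ∩ Z).card + (B ∩ W).card = r := by
      rw [← Finset.card_union_of_disjoint hdis, ← hcover, hB.1.2]
    exact ⟨hcover, by omega, hBW⟩
  have hinj : Set.InjOn (fun B => (B ∩ W, B ∩ Z))
      ((A.powersetCard r).filter (fun B => ∃ q : ℚ, (∑ x ∈ B, x) = (q : ℝ) + a)) := by
    intro B hB B' hB' h
    have h1 := (key B hB).1
    have h2 := (key B' hB').1
    have hW : B ∩ W = B' ∩ W := congrArg Prod.fst h
    have hZ : B ∩ Z = B' ∩ Z := congrArg Prod.snd h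
    rw [h1, h2, hW, hZ]
  have hmaps : ∀ B ∈ (A.powersetCard r).filter (fun B => ∃ q : ℚ, (∑ x ∈ B, x) = (q : ℝ) + a),
      (B ∩ W, B ∩ Z) ∈ (W.powersetCard w₀) ×ˢ (Z.powersetCard (r - w₀)) := by
    intro B hB
    obtain ⟨_, hZc, hWc⟩ := key B hB
    rw [Finset.mem_product, Finset.mem_powersetCard, Finset.mem_powersetCard]
    exact ⟨⟨Finset.inter_subset_right, hWc⟩, ⟨Finset.inter_subset_right, hZc⟩⟩
  have := Finset.card_le_card_of_injOn _ hmaps hinj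
  rwa [Finset.card_product, Finset.card_powersetCard, Finset.card_powersetCard] at this



open Classical in
private lemma good_mem {A : Finset ℝ} {r : ℕ} {a : ℝ} {B : Finset ℝ} :
    B ∈ (A.powersetCard r).filter (fun B => ∃ q : ℚ, (∑ x ∈ B, x) = (q : ℝ) + a) ↔
      B ⊆ A ∧ B.card = r ∧ ∃ q : ℚ, (∑ x ∈ B, x) = (q : ℝ) + a := by
  rw [Finset.mem_filter, Finset.mem_powersetCard, and_assoc]

open Classical in
private lemma cnt_avoid_le {A : Finset ℝ} {u : ℝ} {r : ℕ} {a : ℝ} (hu : u ∈ A)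
    (h : ∀ B, B ⊆ A → B.card = r → (∃ q : ℚ, (∑ x ∈ B, x) = (q : ℝ) + a) → u ∉ B) :
    shiftRatCount A r a ≤ (A.card - 1).choose r := by
  unfold shiftRatCount
  have hsub : (A.powersetCard r).filter (fun B => ∃ q : ℚ, (∑ x ∈ B, x) = (q : ℝ) + a)
      ⊆ (A.erase u).powersetCard r := by
    intro B hB
    rw [good_mem] at hB
    obtain ⟨hBA, hBc, hq⟩ := hB
    rw [Finset.mem_powersetCard]
    have hnu := h B hBA hBc hq
    exact ⟨fun x hx => Finset.mem_erase.2 ⟨by rintro rfl; exact hnu hx, hBA hx⟩, hBc⟩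
  calc _ ≤ ((A.erase u).powersetCard r).card := Finset.card_le_card hsub
    _ = (A.card - 1).choose r := by rw [Finset.card_powersetCard, Finset.card_erase_of_mem hu]

open Classical in
private lemma cnt_contain_le {A : Finset ℝ} {u : ℝ} {r : ℕ} {a : ℝ} (hu : u ∈ A) (hr : 1 ≤ r)
    (h : ∀ B, B ⊆ A → B.card = r → (∃ q : ℚ, (∑ x ∈ B, x) = (q : ℝ) + a) → u ∈ B) :
    shiftRatCount A r a ≤ (A.card - 1).choose (r - 1) := by
  unfold shiftRatCount
  have hsub : (A.powersetCard r).filter (fun B => ∃ q : ℚ, (∑ x ∈ B, x) = (q : ℝ) + a)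
      ⊆ ((A.erase u).powersetCard (r - 1)).image (insert u) := by
    intro B hB
    rw [good_mem] at hB
    obtain ⟨hBA, hBc, hq⟩ := hB
    have huB := h B hBA hBc hq
    rw [Finset.mem_image]
    refine ⟨B.erase u, ?_, Finset.insert_erase huB⟩
    rw [Finset.mem_powersetCard]
    exact ⟨Finset.erase_subset_erase _ hBA, by rw [Finset.card_erase_of_mem huB, hBc]⟩
  calc _ ≤ (((A.erase u).powersetCard (r - 1)).image (insert u)).card := Finset.card_le_card hsub
    _ ≤ ((A.erase u).powersetCard (r - 1)).card := Finset.card_image_le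
    _ = (A.card - 1).choose (r - 1) := by
        rw [Finset.card_powersetCard, Finset.card_erase_of_mem hu]

open Classical in
private lemma main_bound (N : ℕ) : ∀ r n : ℕ, ∀ A : Finset ℝ, ∀ a : ℝ,
    r + n ≤ N → 1 ≤ r → A.card = n → 2 * r < n →
    (∃ u ∈ A, ∀ q : ℚ, u ≠ (q : ℝ) + a / (r : ℝ)) →
    shiftRatCount A r a ≤ (n - 1).choose r := by
  induction N with
  | zero => intro r n A a hN hr _ hn _; omega
  | succ N ih =>
    intro r n A a hN hr hcard hn hu
    obtain ⟨u, huA, huq⟩ := hu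
    rcases Nat.lt_or_ge r 2 with hr1 | hr2
    · -- r = 1
      have hr1' : r = 1 := by omega
      subst hr1'
      have h := cnt_avoid_le (r := 1) (a := a) huA ?_
      · rwa [hcard] at h
      · intro B hBA hBc hq huB
        obtain ⟨x, hx⟩ := Finset.card_eq_one.1 hBc
        obtain ⟨q, hq⟩ := hq
        rw [hx, Finset.sum_singleton] at hq
        have hux : u = x := by
          have h2 := huB; rw [hx] at h2; exact Finset.mem_singleton.1 h2
        apply huq q
        rw [hux, hq]
        norm_num
    · obtain ⟨s, rfl⟩ : ∃ s, r = s + 1 := ⟨r - 1, by omega⟩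
      have hs1 : 1 ≤ s := by omega
      by_cases hdeg1 : ∀ x ∈ A.erase u, ∃ q : ℚ, x = (q : ℝ) + a / ((s : ℝ) + 1)
      · have h := cnt_avoid_le (r := s + 1) (a := a) huA ?_
        · rwa [hcard] at h
        · intro B hBA hBc hq huB
          obtain ⟨q, hq⟩ := hq
          have hBe : ∀ x ∈ B.erase u, ∃ q : ℚ, x = (q : ℝ) + a / ((s : ℝ) + 1) := by
            intro x hx
            rcases Finset.mem_erase.1 hx with ⟨hxu, hxB⟩
            exact hdeg1 x (Finset.mem_erase.2 ⟨hxu, hBA hxB⟩)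
          obtain ⟨q', hq'⟩ := sum_shift_mem hBe
          have hce : (B.erase u).card = s := by rw [Finset.card_erase_of_mem huB, hBc]; omega
          have hsum : (∑ x ∈ B, x) = u + ∑ x ∈ B.erase u, x :=
            (Finset.add_sum_erase _ (fun x => x) huB).symm
          rw [hsum, hq', hce] at hq
          apply huq (q - q')
          have harith := arith1 q q' hq
          exact harith.trans (by push_cast; ring)
      · by_cases hdeg2 : ∀ x ∈ A.erase u, ∃ q : ℚ, x = (q : ℝ) + (a - u) / (s : ℝ)
        · have h := cnt_contain_le (r := s + 1) (a := a) huA (by omega) ?_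
          · rw [hcard] at h
            refine h.trans ?_
            simpa using choose_succ_le' (n := n - 1) (k := s) (by omega)
          · intro B hBA hBc hq
            by_contra huB
            obtain ⟨q, hq⟩ := hq
            have hBe : ∀ x ∈ B, ∃ q : ℚ, x = (q : ℝ) + (a - u) / (s : ℝ) := by
              intro x hx
              exact hdeg2 x (Finset.mem_erase.2 ⟨by rintro rfl; exact huB hx, hBA hx⟩)
            obtain ⟨q', hq'⟩ := sum_shift_mem hBe
            rw [hq', hBc] at hq
            apply huq (-(s * (q - q')) / (s + 1))
            have hq2 : (q' : ℝ) + ((s : ℝ) + 1) * ((a - u) / (s : ℝ)) = (q : ℝ) + a := by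
              push_cast at hq ⊢
              linarith
            have h2 := arith2 hs1 q q' hq2
            exact h2.trans (by push_cast; ring)
        · push_neg at hdeg1 hdeg2
          obtain ⟨x1, hx1A, hx1⟩ := hdeg1
          obtain ⟨x2, hx2A, hx2⟩ := hdeg2
          have hcarde : (A.erase u).card = n - 1 := by rw [Finset.card_erase_of_mem huA, hcard]
          have hpascal : (n - 1).choose (s + 1) = (n - 2).choose s + (n - 2).choose (s + 1) := by
            have e : n - 1 = (n - 2) + 1 := by omega
            rw [e, Nat.choose_succ_succ]
          rcases Nat.lt_or_ge (2 * (s + 1) + 1) n with hbig | hsmall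
          · -- n ≥ 2r + 2
            have h1 := ih (s + 1) (n - 1) (A.erase u) a (by omega) (by omega) hcarde (by omega)
              ⟨x1, hx1A, by
                intro q hcon
                exact hx1 q (by push_cast at hcon ⊢; linarith)⟩
            have h2 := ih s (n - 1) (A.erase u) (a - u) (by omega) hs1 hcarde (by omega)
              ⟨x2, hx2A, by
                intro q hcon
                exact hx2 q (by push_cast at hcon ⊢; linarith)⟩
            have h3 := cnt_split huA s a
            have e1 : n - 1 - 1 = n - 2 := by omega
            rw [e1] at h1 h2
            omega
          · -- n = 2r + 1
            by_cases hEx : ∃ v ∈ A, (∀ q : ℚ, v ≠ (q : ℝ) + a / ((s : ℝ) + 1)) ∧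
                (∀ q : ℚ, (∑ x ∈ A.erase v, x) ≠ (q : ℝ) + 2 * a)
            · obtain ⟨v, hvA, hvq, hvS⟩ := hEx
              by_cases hdeg2v : ∀ x ∈ A.erase v, ∃ q : ℚ, x = (q : ℝ) + (a - v) / (s : ℝ)
              · have h := cnt_contain_le (r := s + 1) (a := a) hvA (by omega) ?_
                · rw [hcard] at h
                  refine h.trans ?_
                  simpa using choose_succ_le' (n := n - 1) (k := s) (by omega)
                · intro B hBA hBc hq
                  by_contra hvB
                  obtain ⟨q, hq⟩ := hq
                  have hBe : ∀ x ∈ B, ∃ q : ℚ, x = (q : ℝ) + (a - v) / (s : ℝ) := by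
                    intro x hx
                    exact hdeg2v x (Finset.mem_erase.2 ⟨by rintro rfl; exact hvB hx, hBA hx⟩)
                  obtain ⟨q', hq'⟩ := sum_shift_mem hBe
                  rw [hq', hBc] at hq
                  apply hvq (-(s * (q - q')) / (s + 1))
                  have hq2 : (q' : ℝ) + ((s : ℝ) + 1) * ((a - v) / (s : ℝ)) = (q : ℝ) + a := by
                    push_cast at hq ⊢
                    linarith
                  have h2 := arith2 hs1 q q' hq2
                  exact h2.trans (by push_cast; ring)
              · push_neg at hdeg2v
                obtain ⟨x3, hx3A, hx3⟩ := hdeg2v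
                have hcardev : (A.erase v).card = n - 1 := by
                  rw [Finset.card_erase_of_mem hvA, hcard]
                have h1 : shiftRatCount (A.erase v) (s + 1) a ≤ (n - 2).choose (s + 1) := by
                  have hp := cnt_pairing (A := A.erase v) (a := a) (r := s + 1) (by omega)
                    (by rw [hcardev]; omega) hvS
                  have e2 : 2 * (s + 1) - 1 = n - 2 := by omega
                  rwa [e2] at hp
                have h2 := ih s (n - 1) (A.erase v) (a - v) (by omega) hs1 hcardev (by omega)
                  ⟨x3, hx3A, by
                    intro q hcon
                    exact hx3 q (by push_cast at hcon ⊢; linarith)⟩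
                have h3 := cnt_split hvA s a
                have e1 : n - 1 - 1 = n - 2 := by omega
                rw [e1] at h2
                omega
            · -- structured case
              push_neg at hEx
              set c := a / ((s : ℝ) + 1) with hc
              set t := (∑ x ∈ A, x) - 2 * a with ht
              set Z := A.filter (fun x => ∃ q : ℚ, x = (q : ℝ) + c) with hZdef
              set W := A \ Z with hWdef
              have hZA : Z ⊆ A := Finset.filter_subset _ _
              have hAZW : A = Z ∪ W := by
                rw [hWdef]
                exact (Finset.union_sdiff_of_subset hZA).symm
              have hdZW : Disjoint Z W := Finset.disjoint_sdiff
              have hWt : ∀ x ∈ W, ∃ q : ℚ, x = (q : ℝ) + t := by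
                intro x hx
                rcases Finset.mem_sdiff.1 hx with ⟨hxA, hxZ⟩
                have hnR : ∀ q : ℚ, x ≠ (q : ℝ) + c := by
                  intro q hq
                  exact hxZ (Finset.mem_filter.2 ⟨hxA, ⟨q, hq⟩⟩)
                obtain ⟨q, hq⟩ := hEx x hxA hnR
                refine ⟨-q, ?_⟩
                have hsum : x + ∑ y ∈ A.erase x, y = ∑ y ∈ A, y :=
                  Finset.add_sum_erase _ (fun y => y) hxA
                rw [ht]
                push_cast
                linarith [hq, hsum]
              have huW : u ∈ W := by
                refine Finset.mem_sdiff.2 ⟨huA, fun huZ => ?_⟩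
                obtain ⟨q, hq⟩ := (Finset.mem_filter.1 huZ).2
                exact huq q (hq.trans (by rw [hc]; push_cast; try ring))
              have hTC : ∀ q : ℚ, t ≠ (q : ℝ) + c := by
                intro q hq
                obtain ⟨q1, hq1⟩ := hWt u huW
                apply huq (q1 + q)
                rw [hq1, hq, hc]
                push_cast
                try ring
              have hkey : ∀ B, B ⊆ A → B.card = s + 1 →
                  (∃ q : ℚ, (∑ x ∈ B, x) = (q : ℝ) + a) →
                  ∃ ρ : ℚ, ((B ∩ W).card : ℝ) * (t - c) =
                    (ρ : ℝ) + (a - ((s + 1 : ℕ) : ℝ) * c) := by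
                intro B hBA hBc hq
                obtain ⟨qB, hqB⟩ := hq
                have hBZW : B ⊆ Z ∪ W := by rw [← hAZW]; exact hBA
                obtain ⟨hcover, hcards⟩ := decomp hdZW hBZW
                obtain ⟨qZ, hqZ⟩ := sum_shift_mem (B := B ∩ Z) (c := c)
                  (fun x hx => (Finset.mem_filter.1 (Finset.mem_inter.1 hx).2).2)
                obtain ⟨qW, hqW⟩ := sum_shift_mem (B := B ∩ W) (c := t)
                  (fun x hx => hWt x (Finset.mem_inter.1 hx).2)
                have hdis : Disjoint (B ∩ Z) (B ∩ W) :=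
                  hdZW.mono Finset.inter_subset_right Finset.inter_subset_right
                have hsum : (∑ x ∈ B, x) = (∑ x ∈ B ∩ Z, x) + (∑ x ∈ B ∩ W, x) := by
                  conv_lhs => rw [hcover]
                  exact Finset.sum_union hdis
                rw [hsum, hqZ, hqW] at hqB
                refine ⟨qB - (qZ + qW), ?_⟩
                have harith := arith3 (t := t) (c := c) (a := a) (r := s + 1) (B ∩ W).card (B ∩ Z).card
                  (by rw [hcards, hBc]) (qZ + qW) qB
                  (by push_cast at hqB ⊢; linarith)
                exact harith.trans (by push_cast; ring)
              rcases Finset.eq_empty_or_nonempty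
                  ((A.powersetCard (s + 1)).filter
                    (fun B => ∃ q : ℚ, (∑ x ∈ B, x) = (q : ℝ) + a)) with hemp | hne
              · unfold shiftRatCount
                rw [hemp, Finset.card_empty]
                exact Nat.zero_le _
              · obtain ⟨B₀, hB₀⟩ := hne
                obtain ⟨hB₀A, hB₀c, hB₀q⟩ := good_mem.1 hB₀
                obtain ⟨ρ₀, hρ₀⟩ := hkey B₀ hB₀A hB₀c hB₀q
                have hZne : Z.Nonempty := by
                  rcases Finset.eq_empty_or_nonempty Z with hZe | hZne
                  · exfalso
                    have hBW : B₀ ∩ W = B₀ := by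
                      apply Finset.inter_eq_left.2
                      intro x hx
                      have hxA := hB₀A hx
                      rw [hAZW, hZe] at hxA
                      simpa using hxA
                    rw [hBW, hB₀c] at hρ₀
                    apply hTC (ρ₀ / (s + 1))
                    rw [hc] at hρ₀ ⊢
                    exact arith5 ρ₀ (by push_cast at hρ₀ ⊢; linarith)
                  · exact hZne
                have huniq : ∀ B ∈ (A.powersetCard (s + 1)).filter
                    (fun B => ∃ q : ℚ, (∑ x ∈ B, x) = (q : ℝ) + a), (B ∩ W).card = (B₀ ∩ W).card := by
                  intro B hB
                  obtain ⟨hBA, hBc, hBq⟩ := good_mem.1 hB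
                  obtain ⟨ρ, hρ⟩ := hkey B hBA hBc hBq
                  by_contra hnew
                  obtain ⟨q, hq⟩ := arith4 _ _ hnew ρ ρ₀ hρ hρ₀
                  exact hTC q hq
                have hprof := cnt_profile_le hAZW hdZW huniq
                have hwle : (B₀ ∩ W).card ≤ s + 1 := by
                  calc (B₀ ∩ W).card ≤ B₀.card := Finset.card_le_card Finset.inter_subset_left
                    _ = s + 1 := hB₀c
                have hZcard1 : 1 ≤ Z.card := Finset.card_pos.2 hZne
                have hWcard1 : 1 ≤ W.card := Finset.card_pos.2 ⟨u, huW⟩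
                have hsumZW : W.card + Z.card = n := by
                  have := Finset.card_union_of_disjoint hdZW
                  rw [← hAZW] at this
                  omega
                have hfin := prod_choose_le (p := W.card) (z := Z.card)
                  (w := (B₀ ∩ W).card) (i := s + 1 - (B₀ ∩ W).card) hWcard1 hZcard1 (by omega)
                have hadd : (B₀ ∩ W).card + (s + 1 - (B₀ ∩ W).card) = s + 1 := by omega
                have e3 : W.card + Z.card - 1 = n - 1 := by omega
                rw [hadd, e3] at hfin
                exact hprof.trans hfin

open Classical in
private lemma lower_bound_s14 (n r : ℕ) (hr : 0 < r) (hn : 2 * r < n) :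
    ∃ α : ℝ, ∃ A : Finset ℝ, A.card = n ∧ (∀ x ∈ A, Irrational x) ∧
      ¬ (∀ x ∈ A, ∃ q : ℚ, x = (q : ℝ) + α / (r : ℝ)) ∧
      (n - 1).choose r ≤ shiftRatCount A r ((r : ℝ) * Real.sqrt 2) ∧
      α = (r : ℝ) * Real.sqrt 2 := by
  classical
  set f : ℕ → ℝ := fun i => Real.sqrt 2 + i with hf
  have hfinj : Function.Injective f := by
    intro i j hij
    have h2 : (i : ℝ) = j := by
      simp only [hf] at hij
      linarith
    exact_mod_cast h2
  set A₀ := (Finset.range (n - 1)).image f with hA₀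
  have hA₀card : A₀.card = n - 1 := by
    rw [hA₀, Finset.card_image_of_injective _ hfinj, Finset.card_range]
  have hs2 : Irrational (Real.sqrt 2) := irrational_sqrt_two
  have h2s2 : Irrational (2 * Real.sqrt 2) := by
    have h3 := hs2.natCast_mul (m := 2) (by norm_num)
    simpa using h3
  have hnotmem : (2 * Real.sqrt 2) ∉ A₀ := by
    intro hmem
    rw [hA₀, Finset.mem_image] at hmem
    obtain ⟨i, _, hfi⟩ := hmem
    simp only [hf] at hfi
    have h4 : Real.sqrt 2 = (i : ℝ) := by linarith
    exact hs2 ⟨(i : ℚ), by rw [h4]; norm_cast⟩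
  have hr0 : ((r : ℕ) : ℝ) ≠ 0 := by positivity
  refine ⟨(r : ℝ) * Real.sqrt 2, insert (2 * Real.sqrt 2) A₀, ?_, ?_, ?_, ?_, rfl⟩
  · rw [Finset.card_insert_of_notMem hnotmem, hA₀card]
    omega
  · intro x hx
    rcases Finset.mem_insert.1 hx with rfl | hx
    · exact h2s2
    · rw [hA₀, Finset.mem_image] at hx
      obtain ⟨i, _, rfl⟩ := hx
      exact hs2.add_natCast i
  · intro hall
    obtain ⟨q, hq⟩ := hall (2 * Real.sqrt 2) (Finset.mem_insert_self _ _)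
    rw [show ((r : ℕ) : ℝ) * Real.sqrt 2 / ((r : ℕ) : ℝ) = Real.sqrt 2 by field_simp] at hq
    exact hs2 ⟨q, by linarith⟩
  · have hsub : A₀.powersetCard r ⊆ ((insert (2 * Real.sqrt 2) A₀).powersetCard r).filter
        (fun B => ∃ q : ℚ, (∑ x ∈ B, x) = (q : ℝ) + ((r : ℝ) * Real.sqrt 2)) := by
      intro B hB
      rw [Finset.mem_powersetCard] at hB
      obtain ⟨hBsub, hBcard⟩ := hB
      rw [Finset.mem_filter, Finset.mem_powersetCard]
      refine ⟨⟨hBsub.trans (Finset.subset_insert _ _), hBcard⟩, ?_⟩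
      have hBsub' : B ⊆ (Finset.range (n - 1)).image f := by rw [← hA₀]; exact hBsub
      obtain ⟨I, hIsub, hIim⟩ := Finset.subset_image_iff.1 hBsub' 
      have hIcard : I.card = r := by
        rw [← hBcard, ← hIim, Finset.card_image_of_injective _ hfinj]
      refine ⟨(∑ i ∈ I, (i : ℚ)), ?_⟩
      rw [← hIim, Finset.sum_image (fun a _ b _ h => hfinj h)]
      simp only [hf]
      rw [Finset.sum_add_distrib, Finset.sum_const, hIcard]
      push_cast
      ring
    calc (n - 1).choose r = (A₀.powersetCard r).card := by
          rw [Finset.card_powersetCard, hA₀card]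
      _ ≤ _ := Finset.card_le_card hsub

theorem g_small_r (n r : ℕ) (hr : 0 < r) (hn : 2 * r < n) :
    maxShiftRatSum n r = Nat.choose (n - 1) r := by
  obtain ⟨α, A, hcard, hirr, hnot, hge, hα⟩ := lower_bound_s14 n r hr hn
  subst hα
  unfold maxShiftRatSum
  apply IsGreatest.csSup_eq
  constructor
  · refine ⟨(r : ℝ) * Real.sqrt 2, A, hcard, hirr, hnot, ?_⟩
    have hnot2 := hnot
    push_neg at hnot2
    have hle := main_bound (r + n) r n A ((r : ℝ) * Real.sqrt 2) le_rfl hr hcard hn hnot2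
    omega
  · rintro k ⟨β, C, hC, hCirr, hCnot, rfl⟩
    push_neg at hCnot
    exact main_bound (r + n) r n C β le_rfl hr hC hn hCnot
end

section
/- For all natural numbers n, r with n/2 < r < n, one has g(n,r) = C(n−1, r−1). -/
open Finset

/-! ### Auxiliary counting lemmas over an abelian group -/

section Key

variable {ι G : Type*} [DecidableEq ι] [AddCommGroup G]

open Classical in
private lemma gsum_split (f : ι → G) (S : Finset ι) {j : ι} (hj : j ∈ S) (t : ℕ) (u : G) :
    ((S.powersetCard (t+1)).filter (fun B => ∑ x ∈ B, f x = u)).card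
    = (((S.erase j).powersetCard (t+1)).filter (fun B => ∑ x ∈ B, f x = u)).card
      + (((S.erase j).powersetCard t).filter (fun B => ∑ x ∈ B, f x = u - f j)).card := by
  have hjer : j ∉ S.erase j := Finset.notMem_erase j S
  conv_lhs => rw [← Finset.insert_erase hj]
  rw [Finset.powersetCard_succ_insert hjer, Finset.filter_union]
  have hdisj : Disjoint
      (((S.erase j).powersetCard (t+1)).filter (fun B => ∑ x ∈ B, f x = u))
      ((((S.erase j).powersetCard t).image (insert j)).filter (fun B => ∑ x ∈ B, f x = u)) := by
    rw [Finset.disjoint_left]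
    intro B hB hB'
    have h1 : j ∉ B := fun hjB =>
      hjer ((Finset.mem_powersetCard.1 (Finset.mem_filter.1 hB).1).1 hjB)
    obtain ⟨C, _, rfl⟩ := Finset.mem_image.1 (Finset.mem_filter.1 hB').1
    exact h1 (Finset.mem_insert_self j C)
  rw [Finset.card_union_of_disjoint hdisj]
  congr 1
  rw [Finset.filter_image]
  rw [Finset.card_image_of_injOn ?hinj]
  case hinj =>
    intro B hB C hC hBC
    simp only [Finset.coe_filter, Set.mem_setOf_eq] at hB hC
    have hjB : j ∉ B := fun h => hjer ((Finset.mem_powersetCard.1 hB.1).1 h)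
    have hjC : j ∉ C := fun h => hjer ((Finset.mem_powersetCard.1 hC.1).1 h)
    rw [← Finset.erase_insert hjB, ← Finset.erase_insert hjC, hBC]
  congr 1
  apply Finset.filter_congr
  intro B hB
  have hjB : j ∉ B := fun h => hjer ((Finset.mem_powersetCard.1 hB).1 h)
  rw [Finset.sum_insert hjB]
  constructor
  · intro h
    rw [eq_sub_iff_add_eq, add_comm]
    exact h
  · intro h
    rw [h]
    abel

open Classical in
private lemma gsum_half (f : ι → G) (S : Finset ι) (s : ℕ) (hc : S.card = 2*s+2) (u : G)
    (hσ : ∑ x ∈ S, f x ≠ u + u) :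
    ((S.powersetCard (s+1)).filter (fun B => ∑ x ∈ B, f x = u)).card ≤ (2*s+1).choose (s+1) := by
  have hPN : ((S.powersetCard (s+1)).filter (fun B => ∑ x ∈ B, f x = u)).card
      + ((S.powersetCard (s+1)).filter (fun B => ¬ (∑ x ∈ B, f x = u))).card
      = (2*s+2).choose (s+1) := by
    rw [Finset.card_filter_add_card_filter_not, Finset.card_powersetCard, hc]
  have hle : ((S.powersetCard (s+1)).filter (fun B => ∑ x ∈ B, f x = u)).card
      ≤ ((S.powersetCard (s+1)).filter (fun B => ¬ (∑ x ∈ B, f x = u))).card := by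
    apply Finset.card_le_card_of_injOn (fun B => S \ B)
    · intro B hB
      obtain ⟨hBm, hBs⟩ := Finset.mem_filter.1 hB
      obtain ⟨hBsub, hBcard⟩ := Finset.mem_powersetCard.1 hBm
      have hcard2 : (S \ B).card = s+1 := by
        rw [Finset.card_sdiff_of_subset hBsub, hc, hBcard]
        omega
      refine Finset.mem_filter.2 ⟨Finset.mem_powersetCard.2 ⟨Finset.sdiff_subset, hcard2⟩, ?_⟩
      intro hSB
      apply hσ
      have h := Finset.sum_sdiff (f := f) hBsub
      rw [hSB, hBs] at h
      exact h.symm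
    · intro B hB C hC h
      simp only [Finset.coe_filter, Set.mem_setOf_eq] at hB hC
      have hBsub := (Finset.mem_powersetCard.1 hB.1).1
      have hCsub := (Finset.mem_powersetCard.1 hC.1).1
      have h' : S \ B = S \ C := h
      rw [← Finset.sdiff_sdiff_eq_self hBsub, ← Finset.sdiff_sdiff_eq_self hCsub, h']
  have h1 : (2*s+2).choose (s+1) = (2*s+1).choose s + (2*s+1).choose (s+1) := by
    rw [show 2*s+2 = (2*s+1)+1 by omega]
    exact Nat.choose_succ_succ' _ _
  have h2 : (2*s+1).choose s = (2*s+1).choose (s+1) := by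
    rw [← Nat.choose_symm (show s+1 ≤ 2*s+1 by omega), show 2*s+1-(s+1) = s by omega]
  omega

open Classical in
private lemma key_count (f : ι → G) :
    ∀ n t : ℕ, ∀ S : Finset ι, ∀ u : G, S.card = n → 2*t < n →
    (∃ a ∈ S, ∃ b ∈ S, f a ≠ f b) →
    ((S.powersetCard t).filter (fun B => ∑ x ∈ B, f x = u)).card ≤ (n-1).choose t := by
  intro n
  induction n using Nat.strong_induction_on with
  | _ n IH =>
  intro t S u hcard ht hne
  match t with
  | 0 =>
    calc ((S.powersetCard 0).filter (fun B => ∑ x ∈ B, f x = u)).card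
        ≤ (S.powersetCard 0).card := Finset.card_filter_le _ _
      _ = 1 := by rw [Finset.card_powersetCard, Nat.choose_zero_right]
      _ = (n-1).choose 0 := (Nat.choose_zero_right _).symm
  | (t+1) =>
  obtain ⟨a, ha, b, hb, hab⟩ := hne
  have hban : n ≥ 2*t + 3 := by omega
  have hsub : {a, b} ⊆ S := by
    intro x hx
    rcases Finset.mem_insert.1 hx with rfl | hx
    · exact ha
    · rw [Finset.mem_singleton.1 hx]; exact hb
  have hcnonempty : (S \ {a, b}).Nonempty := by
    rw [← Finset.card_pos, Finset.card_sdiff_of_subset hsub, hcard]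
    have : ({a, b} : Finset ι).card ≤ 2 := Finset.card_insert_le _ _ |>.trans (by simp)
    omega
  obtain ⟨c, hc⟩ := hcnonempty
  have hcS : c ∈ S := (Finset.mem_sdiff.1 hc).1
  have hca : c ≠ a := fun h => (Finset.mem_sdiff.1 hc).2 (by rw [h]; exact Finset.mem_insert_self _ _)
  have hcb : c ≠ b := fun h => (Finset.mem_sdiff.1 hc).2
    (by rw [h]; exact Finset.mem_insert_of_mem (Finset.mem_singleton_self _))
  have hne_ab : a ≠ b := fun h => hab (by rw [h])
  -- main step: given a good element j to remove, conclude
  have main : ∀ j ∈ S, (∃ a' ∈ S.erase j, ∃ b' ∈ S.erase j, f a' ≠ f b') →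
      ((((S.erase j).powersetCard (t+1)).filter (fun B => ∑ x ∈ B, f x = u)).card
        ≤ (n-2).choose (t+1)) →
      ((S.powersetCard (t+1)).filter (fun B => ∑ x ∈ B, f x = u)).card ≤ (n-1).choose (t+1) := by
    intro j hj hne' h0
    rw [gsum_split f S hj t u]
    have hcard' : (S.erase j).card = n - 1 := by rw [Finset.card_erase_of_mem hj, hcard]
    have h1 : (((S.erase j).powersetCard t).filter
        (fun B => ∑ x ∈ B, f x = u - f j)).card ≤ (n-2).choose t := by
      have := IH (n-1) (by omega) t (S.erase j) (u - f j) hcard' (by omega) hne'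
      rwa [show n-1-1 = n-2 by omega] at this
    have hpas : (n-1).choose (t+1) = (n-2).choose t + (n-2).choose (t+1) := by
      rw [show n-1 = (n-2)+1 by omega]
      exact Nat.choose_succ_succ' _ _
    omega
  -- choose j keeping a witness pair
  have hjthere : ∃ j ∈ S, ∃ a' ∈ S.erase j, ∃ b' ∈ S.erase j, f a' ≠ f b' := by
    by_cases hfc : f c = f a
    · refine ⟨a, ha, c, Finset.mem_erase.2 ⟨hca, hcS⟩, b,
        Finset.mem_erase.2 ⟨fun h => hne_ab h.symm, hb⟩, ?_⟩
      rw [hfc]; exact hab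
    · exact ⟨b, hb, a, Finset.mem_erase.2 ⟨hne_ab, ha⟩, c,
        Finset.mem_erase.2 ⟨hcb, hcS⟩, fun h => hfc h.symm⟩
  by_cases hbdry : 2*(t+1)+1 = n
  · -- boundary case n = 2t+3
    by_cases hT : ∃ j ∈ S, (∑ x ∈ S, f x ≠ u + u + f j) ∧
        (∃ a' ∈ S.erase j, ∃ b' ∈ S.erase j, f a' ≠ f b')
    · obtain ⟨j, hj, hσj, hne'⟩ := hT
      apply main j hj hne'
      have hcard' : (S.erase j).card = 2*t+2 := by
        rw [Finset.card_erase_of_mem hj, hcard]; omega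
      have hσ' : ∑ x ∈ (S.erase j), f x ≠ u + u := by
        intro h
        apply hσj
        rw [← Finset.sum_erase_add S f hj, h]
      have := gsum_half f (S.erase j) t hcard' u hσ'
      rwa [show n-2 = 2*t+1 by omega]
    · -- structured case: all elements but one share the same value; count is 0
      push_neg at hT
      obtain ⟨d, hd, w', hdw, hw⟩ : ∃ d ∈ S, ∃ w' : G, f d ≠ w' ∧
          ∀ x ∈ S, x ≠ d → f x = w' := by
        by_cases hea : ∀ x ∈ S.erase a, ∀ y ∈ S.erase a, f x = f y
        · refine ⟨a, ha, f b, fun h => hab h, fun x hx hxa => ?_⟩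
          exact hea x (Finset.mem_erase.2 ⟨hxa, hx⟩) b
            (Finset.mem_erase.2 ⟨fun h => hne_ab h.symm, hb⟩)
        · have hσa : ∑ x ∈ S, f x = u + u + f a := by
            by_contra h
            apply hea
            intro x hx y hy
            exact hT a ha h x hx y hy
          have heb : ∀ x ∈ S.erase b, ∀ y ∈ S.erase b, f x = f y := by
            by_contra h
            have hσb : ∑ x ∈ S, f x = u + u + f b := by
              by_contra h2
              apply h
              intro x hx y hy
              exact hT b hb h2 x hx y hy
            exact hab (add_left_cancel (hσa.symm.trans hσb))
          refine ⟨b, hb, f a, fun h => hab h.symm, fun x hx hxb => ?_⟩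
          exact heb x (Finset.mem_erase.2 ⟨hxb, hx⟩) a
            (Finset.mem_erase.2 ⟨hne_ab, ha⟩)
      -- find j ≠ d and c' ≠ d, j
      have hdsub : {d} ⊆ S := Finset.singleton_subset_iff.2 hd
      obtain ⟨j, hjmem⟩ : (S \ {d}).Nonempty := by
        rw [← Finset.card_pos, Finset.card_sdiff_of_subset hdsub, hcard]; simp; omega
      have hjS : j ∈ S := (Finset.mem_sdiff.1 hjmem).1
      have hjd : j ≠ d := by
        have := (Finset.mem_sdiff.1 hjmem).2
        simpa using this
      have hdjsub : {d, j} ⊆ S := by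
        intro x hx
        rcases Finset.mem_insert.1 hx with rfl | hx
        · exact hd
        · rw [Finset.mem_singleton.1 hx]; exact hjS
      obtain ⟨c', hc'mem⟩ : (S \ {d, j}).Nonempty := by
        rw [← Finset.card_pos, Finset.card_sdiff_of_subset hdjsub, hcard]
        have : ({d, j} : Finset ι).card ≤ 2 := Finset.card_insert_le _ _ |>.trans (by simp)
        omega
      have hc'S : c' ∈ S := (Finset.mem_sdiff.1 hc'mem).1
      have hc'd : c' ≠ d := fun h => (Finset.mem_sdiff.1 hc'mem).2
        (by rw [h]; exact Finset.mem_insert_self _ _)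
      have hc'j : c' ≠ j := fun h => (Finset.mem_sdiff.1 hc'mem).2
        (by rw [h]; exact Finset.mem_insert_of_mem (Finset.mem_singleton_self _))
      -- erase j is not constant (d and c' differ), so the sum relation holds at j
      have hσ : ∑ x ∈ S, f x = u + u + w' := by
        have hj2 : ∑ x ∈ S, f x = u + u + f j := by
          by_contra h
          have hconst := hT j hjS h
          have h1 := hconst d (Finset.mem_erase.2 ⟨fun h => hjd h.symm, hd⟩)
            c' (Finset.mem_erase.2 ⟨hc'j, hc'S⟩)
          rw [hw c' hc'S hc'd] at h1
          exact hdw h1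
        rw [hj2, hw j hjS hjd]
      have hσ2 : ∑ x ∈ S, f x = f d + (2*t+2) • w' := by
        rw [← Finset.add_sum_erase S f hd]
        congr 1
        rw [Finset.sum_congr rfl (fun x hx => hw x (Finset.mem_of_mem_erase hx)
          (Finset.ne_of_mem_erase hx))]
        rw [Finset.sum_const, Finset.card_erase_of_mem hd, hcard]
        congr 1
        omega
      -- now show there are no good subsets at all
      have hzero : ((S.powersetCard (t+1)).filter (fun B => ∑ x ∈ B, f x = u)).card = 0 := by
        rw [Finset.card_eq_zero, Finset.filter_eq_empty_iff]
        intro B hBm hBs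
        obtain ⟨hBsub, hBcard⟩ := Finset.mem_powersetCard.1 hBm
        by_cases hdB : d ∈ B
        · have hu : u = f d + t • w' := by
            rw [← hBs, ← Finset.add_sum_erase B f hdB]
            congr 1
            rw [Finset.sum_congr rfl (fun x hx => hw x (hBsub (Finset.mem_of_mem_erase hx))
              (Finset.ne_of_mem_erase hx))]
            rw [Finset.sum_const, Finset.card_erase_of_mem hdB, hBcard]
            simp
          apply hdw
          have h : (f d + (2*t+2)•w') = (f d + t•w') + (f d + t•w') + w' := by
            rw [← hσ2, hσ, hu]
          have h2 : w' - f d = (f d + (2*t+2)•w') - ((f d + t•w') + (f d + t•w') + w') := by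
            rw [show 2*t+2 = t+t+1+1 by omega]
            simp only [add_nsmul, one_nsmul]
            abel
          rw [h, sub_self] at h2
          exact (sub_eq_zero.1 h2).symm
        · have hu : u = (t+1) • w' := by
            rw [← hBs]
            rw [Finset.sum_congr rfl (fun x hx => hw x (hBsub hx)
              (fun he => hdB (he ▸ hx)))]
            rw [Finset.sum_const, hBcard]
          apply hdw
          have h : (f d + (2*t+2)•w') = ((t+1)•w' + (t+1)•w') + w' := by
            rw [← hσ2, hσ, hu]
          have h2 : f d - w' = (f d + (2*t+2)•w') - (((t+1)•w' + (t+1)•w') + w') := by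
            rw [show 2*t+2 = t+t+1+1 by omega]
            simp only [add_nsmul, one_nsmul]
            abel
          rw [h, sub_self] at h2
          exact sub_eq_zero.1 h2
      rw [hzero]
      exact Nat.zero_le _
  · -- non-boundary case: 2(t+1)+2 ≤ n
    obtain ⟨j, hj, hne'⟩ := hjthere
    apply main j hj hne'
    have hcard' : (S.erase j).card = n - 1 := by rw [Finset.card_erase_of_mem hj, hcard]
    have := IH (n-1) (by omega) (t+1) (S.erase j) u hcard' (by omega) hne'
    rwa [show n-1-1 = n-2 by omega] at this

end Key

/-! ### The subgroup ℚ of ℝ and the quotient -/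

private def ratSub : AddSubgroup ℝ where
  carrier := Set.range (fun q : ℚ => (q : ℝ))
  add_mem' := by
    rintro _ _ ⟨a, rfl⟩ ⟨b, rfl⟩
    exact ⟨a + b, by push_cast; ring⟩
  zero_mem' := ⟨0, by norm_num⟩
  neg_mem' := by
    rintro _ ⟨a, rfl⟩
    exact ⟨-a, by push_cast; ring⟩

private noncomputable abbrev ratPi : ℝ →+ (ℝ ⧸ ratSub) := QuotientAddGroup.mk' ratSub

private lemma ratPi_eq_iff {a b : ℝ} : ratPi a = ratPi b ↔ ∃ q : ℚ, a = (q : ℝ) + b := by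
  rw [QuotientAddGroup.mk'_eq_mk']
  constructor
  · rintro ⟨z, ⟨q, rfl⟩, hz⟩
    exact ⟨-q, by push_cast; linarith⟩
  · rintro ⟨q, rfl⟩
    exact ⟨((-q : ℚ) : ℝ), ⟨-q, rfl⟩, by push_cast; ring⟩

/-! ### Upper bound -/

open Classical in
private lemma upper_bound_s16 (n r : ℕ) (h1 : n < 2 * r) (h2 : r < n) (α : ℝ) (A : Finset ℝ)
    (hcard : A.card = n)
    (hnc : ¬ (∀ x ∈ A, ∃ q : ℚ, x = (q : ℝ) + α / (r : ℝ))) :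
    shiftRatCount A r α ≤ (n-1).choose (r-1) := by
  have hr : 1 ≤ r := by omega
  have hrR : (r : ℝ) ≠ 0 := Nat.cast_ne_zero.2 (by omega)
  by_cases hconst : ∀ x ∈ A, ∀ y ∈ A, ratPi x = ratPi y
  · -- all elements are in a single class; by hypothesis the count is 0
    have hzero : shiftRatCount A r α = 0 := by
      rw [shiftRatCount, Finset.card_eq_zero, Finset.filter_eq_empty_iff]
      intro B hBm
      obtain ⟨hBsub, hBcard⟩ := Finset.mem_powersetCard.1 hBm
      rintro ⟨q, hq⟩
      obtain ⟨x₀, hx₀⟩ : B.Nonempty := by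
        rw [← Finset.card_pos, hBcard]; omega
      have hx₀A : x₀ ∈ A := hBsub hx₀
      push_neg at hnc
      obtain ⟨x₁, hx₁A, hx₁⟩ := hnc
      have hsum : ratPi (∑ x ∈ B, x) = r • ratPi x₀ := by
        rw [map_sum]
        rw [Finset.sum_congr rfl (fun x hx => hconst x (hBsub hx) x₀ hx₀A)]
        rw [Finset.sum_const, hBcard]
      have hπα : ratPi (∑ x ∈ B, x) = ratPi α := ratPi_eq_iff.2 ⟨q, hq⟩
      have h3 : ratPi ((r : ℝ) * x₀) = ratPi α := by
        rw [← hπα, hsum, ← map_nsmul, nsmul_eq_mul]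
      obtain ⟨q', hq'⟩ := ratPi_eq_iff.1 h3
      -- r * x₀ = q' + α
      have hx0 : x₀ = ((q' : ℝ) + α) / r := by
        field_simp at hq' ⊢
        linarith
      obtain ⟨q₁, hq₁⟩ := ratPi_eq_iff.1 (hconst x₁ hx₁A x₀ hx₀A)
      apply hx₁ (q₁ + q' / (r : ℚ))
      rw [hq₁, hx0]
      push_cast
      field_simp
      ring
    rw [hzero]
    exact Nat.zero_le _
  · push_neg at hconst
    obtain ⟨a, ha, b, hb, hab⟩ := hconst
    set t := n - r with htdef
    have ht1 : 1 ≤ t := by omega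
    have ht2 : 2*t < n := by omega
    have hstep : shiftRatCount A r α ≤
        ((A.powersetCard t).filter
          (fun B => ∑ x ∈ B, ratPi x = (∑ x ∈ A, ratPi x) - ratPi α)).card := by
      rw [shiftRatCount]
      apply Finset.card_le_card_of_injOn (fun B => A \ B)
      · intro B hB
        obtain ⟨hBm, q, hq⟩ := Finset.mem_filter.1 hB
        obtain ⟨hBsub, hBcard⟩ := Finset.mem_powersetCard.1 hBm
        refine Finset.mem_filter.2 ⟨Finset.mem_powersetCard.2 ⟨Finset.sdiff_subset, ?_⟩, ?_⟩
        · rw [Finset.card_sdiff_of_subset hBsub, hcard, hBcard]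
        · have hπ : ratPi (∑ x ∈ B, x) = ratPi α := ratPi_eq_iff.2 ⟨q, hq⟩
          rw [map_sum] at hπ
          have hsd : ∑ x ∈ A \ B, ratPi x + ∑ x ∈ B, ratPi x = ∑ x ∈ A, ratPi x :=
            Finset.sum_sdiff hBsub
          rw [hπ] at hsd
          exact eq_sub_of_add_eq hsd
      · intro B hB C hC h
        simp only [Finset.coe_filter, Set.mem_setOf_eq] at hB hC
        have hBsub := (Finset.mem_powersetCard.1 hB.1).1
        have hCsub := (Finset.mem_powersetCard.1 hC.1).1
        have h' : A \ B = A \ C := h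
        rw [← Finset.sdiff_sdiff_eq_self hBsub, ← Finset.sdiff_sdiff_eq_self hCsub, h']
    have hkey := key_count (fun x : ℝ => ratPi x) n t A ((∑ x ∈ A, ratPi x) - ratPi α)
      hcard ht2 ⟨a, ha, b, hb, hab⟩
    have hsymm : (n-1).choose t = (n-1).choose (r-1) := by
      rw [← Nat.choose_symm (show t ≤ n-1 by omega), show n-1-t = r-1 by omega]
    refine hstep.trans (le_trans (le_of_eq ?_) (hkey.trans hsymm.le))
    congr!

/-! ### The construction attaining the bound -/

open Classical in
private lemma construction (n r : ℕ) (h1 : n < 2 * r) (h2 : r < n) :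
    ∃ α : ℝ, ∃ A : Finset ℝ, A.card = n ∧ (∀ x ∈ A, Irrational x) ∧
      ¬ (∀ x ∈ A, ∃ q : ℚ, x = (q : ℝ) + α / (r : ℝ)) ∧
      shiftRatCount A r α = (n-1).choose (r-1) := by
  obtain ⟨r', rfl⟩ : ∃ r', r = r' + 1 := ⟨r - 1, by omega⟩
  have hn2 : 2 ≤ n := by omega
  set s2 := Real.sqrt 2 with hs2def
  have hs2 : Irrational s2 := irrational_sqrt_two
  have hinj : Function.Injective (fun i : ℕ => s2 + (i : ℝ)) := by
    intro i j h
    simp only at h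
    exact Nat.cast_injective (add_left_cancel h)
  set Abig := (Finset.range (n-1)).image (fun i : ℕ => s2 + (i : ℝ)) with hAbig
  set y := 2 * s2 with hy
  have hyirr : Irrational y := by
    have : Irrational (((2:ℚ) : ℝ) * s2) := hs2.ratCast_mul (by norm_num)
    simpa using this
  have hynot : y ∉ Abig := by
    rw [hAbig]
    simp only [Finset.mem_image, Finset.mem_range]
    rintro ⟨i, _, hi⟩
    have hieq : s2 = (i : ℝ) := by rw [hy] at hi; linarith
    exact (hs2.ne_int i) (by rw [hieq]; push_cast; ring)
  set A := insert y Abig with hA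
  have hAbigcard : Abig.card = n - 1 := by
    rw [hAbig, Finset.card_image_of_injective _ hinj, Finset.card_range]
  have hcard : A.card = n := by
    rw [hA, Finset.card_insert_of_notMem hynot, hAbigcard]
    omega
  set α := ((r' : ℝ) + 2) * s2 with hα
  refine ⟨α, A, hcard, ?_, ?_, ?_⟩
  · -- all irrational
    intro x hx
    rcases Finset.mem_insert.1 hx with rfl | hx
    · exact hyirr
    · obtain ⟨i, _, rfl⟩ := Finset.mem_image.1 hx
      exact hs2.add_natCast i
  · -- not all in ℚ + α/r
    intro hall
    have h0mem : s2 + ((0:ℕ) : ℝ) ∈ A := by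
      rw [hA]
      apply Finset.mem_insert_of_mem
      rw [hAbig]
      exact Finset.mem_image.2 ⟨0, Finset.mem_range.2 (by omega), rfl⟩
    obtain ⟨q, hq⟩ := hall _ h0mem
    have hrR : ((r' + 1 : ℕ) : ℝ) ≠ 0 := Nat.cast_ne_zero.2 (by omega)
    apply irrational_sqrt_two
    refine ⟨-(q * ((r' : ℚ) + 1)), ?_⟩
    push_cast
    rw [hα] at hq
    push_cast at hq
    field_simp at hq
    rw [← hs2def]
    nlinarith [hq]
  · -- exact count
    rw [shiftRatCount, hA]
    rw [Finset.powersetCard_succ_insert hynot, Finset.filter_union]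
    have hdisj : Disjoint
        ((Abig.powersetCard (r'+1)).filter (fun B => ∃ q : ℚ, (∑ x ∈ B, x) = (q:ℝ) + α))
        (((Abig.powersetCard r').image (insert y)).filter
          (fun B => ∃ q : ℚ, (∑ x ∈ B, x) = (q:ℝ) + α)) := by
      rw [Finset.disjoint_left]
      intro B hB hB'
      have h1 : y ∉ B := fun hyB =>
        hynot ((Finset.mem_powersetCard.1 (Finset.mem_filter.1 hB).1).1 hyB)
      obtain ⟨C, _, rfl⟩ := Finset.mem_image.1 (Finset.mem_filter.1 hB').1
      exact h1 (Finset.mem_insert_self y C)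
    rw [Finset.card_union_of_disjoint hdisj]
    -- the sum of a subset of Abig of size k is k•s2 + integer
    have hsumform : ∀ (k : ℕ) (B : Finset ℝ), B ∈ Abig.powersetCard k →
        ∃ m : ℕ, ∑ x ∈ B, x = (k : ℝ) * s2 + (m : ℝ) := by
      intro k B hB
      obtain ⟨hBsub, hBcard⟩ := Finset.mem_powersetCard.1 hB
      rw [hAbig] at hBsub
      obtain ⟨I, hIsub, rfl⟩ := Finset.subset_image_iff.1 hBsub
      have hIcard : I.card = k := by
        rw [← hBcard, Finset.card_image_of_injective _ hinj]
      refine ⟨∑ i ∈ I, i, ?_⟩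
      rw [Finset.sum_image (fun a _ b _ h => hinj h)]
      rw [Finset.sum_add_distrib, Finset.sum_const, hIcard]
      push_cast
      rw [nsmul_eq_mul]
    have hfirst : ((Abig.powersetCard (r'+1)).filter
        (fun B => ∃ q : ℚ, (∑ x ∈ B, x) = (q:ℝ) + α)).card = 0 := by
      rw [Finset.card_eq_zero, Finset.filter_eq_empty_iff]
      intro B hB
      rintro ⟨q, hq⟩
      obtain ⟨m, hm⟩ := hsumform (r'+1) B hB
      rw [hm, hα] at hq
      apply irrational_sqrt_two
      refine ⟨(m : ℚ) - q, ?_⟩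
      push_cast at hq ⊢
      rw [← hs2def]
      linarith
    have hsecond : (((Abig.powersetCard r').image (insert y)).filter
        (fun B => ∃ q : ℚ, (∑ x ∈ B, x) = (q:ℝ) + α)).card = (n-1).choose r' := by
      rw [Finset.filter_image]
      have hall2 : (Abig.powersetCard r').filter
          (fun C => ∃ q : ℚ, (∑ x ∈ insert y C, x) = (q:ℝ) + α) = Abig.powersetCard r' := by
        apply Finset.filter_true_of_mem
        intro C hC
        obtain ⟨m, hm⟩ := hsumform r' C hC
        have hyC : y ∉ C := fun hyC =>
          hynot ((Finset.mem_powersetCard.1 hC).1 hyC)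
        refine ⟨m, ?_⟩
        rw [Finset.sum_insert hyC, hm, hy, hα]
        push_cast
        ring
      rw [hall2]
      rw [Finset.card_image_of_injOn ?hinj2]
      case hinj2 =>
        intro B hB C hC hBC
        have hB' := Finset.mem_powersetCard.1 (Finset.mem_coe.1 hB)
        have hC' := Finset.mem_powersetCard.1 (Finset.mem_coe.1 hC)
        have hyB : y ∉ B := fun h => hynot (hB'.1 h)
        have hyC : y ∉ C := fun h => hynot (hC'.1 h)
        have hBC' : insert y B = insert y C := hBC
        rw [← Finset.erase_insert hyB, ← Finset.erase_insert hyC, hBC']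
      rw [Finset.card_powersetCard, hAbigcard]
    rw [hfirst, hsecond]
    simp

/-! ### Main theorem -/

theorem g_large_r (n r : ℕ) (h1 : n < 2 * r) (h2 : r < n) :
    maxShiftRatSum n r = Nat.choose (n - 1) (r - 1) := by
  obtain ⟨α, A, hcard, hirr, hnc, hcount⟩ := construction n r h1 h2
  have hmem : Nat.choose (n-1) (r-1) ∈ {k : ℕ | ∃ α : ℝ, ∃ A : Finset ℝ, A.card = n ∧
      (∀ x ∈ A, Irrational x) ∧ ¬ (∀ x ∈ A, ∃ q : ℚ, x = (q : ℝ) + α / (r : ℝ)) ∧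
      shiftRatCount A r α = k} :=
    ⟨α, A, hcard, hirr, hnc, hcount⟩
  have hub : ∀ k ∈ {k : ℕ | ∃ α : ℝ, ∃ A : Finset ℝ, A.card = n ∧
      (∀ x ∈ A, Irrational x) ∧ ¬ (∀ x ∈ A, ∃ q : ℚ, x = (q : ℝ) + α / (r : ℝ)) ∧
      shiftRatCount A r α = k}, k ≤ Nat.choose (n-1) (r-1) := by
    rintro k ⟨α', A', hcard', _, hnc', hcount'⟩
    rw [← hcount']
    exact upper_bound_s16 n r h1 h2 α' A' hcard' hnc'
  rw [maxShiftRatSum]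
  exact le_antisymm (csSup_le ⟨_, hmem⟩ hub) (le_csSup ⟨_, hub⟩ hmem)
end

section
/- Let α be an irrational real number and let A = A₁ ∪ A₂ be an n-element set of real numbers such that A₁ ⊆ ℚ + α, A₂ ⊆ ℚ − α, |A₁| = ⌊n/2⌋ and |A₂| = ⌈n/2⌉. Then the number of subsets A' ⊆ A with rational sum equals C(n, ⌊n/2⌋), i.e. |H(A)| = binomial(n, ⌊n/2⌋). -/
open Finset

theorem vdm (a b : ℕ) : ∑ k ∈ range (a+1), a.choose k * b.choose k = (a+b).choose a := by
  rw [Nat.add_choose_eq, Finset.Nat.sum_antidiagonal_eq_sum_range_succ_mk,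
    ← Finset.sum_range_reflect]
  apply Finset.sum_congr rfl
  intro k hk
  simp only [Finset.mem_range, Nat.add_sub_cancel] at hk ⊢
  rw [Nat.choose_symm (by omega)]

theorem count_balanced {X : Type*} [DecidableEq X] (A₁ A₂ : Finset X) (hdisj : Disjoint A₁ A₂) :
    (((A₁ ∪ A₂).powerset).filter (fun B => (B ∩ A₁).card = (B ∩ A₂).card)).card
      = (A₁.card + A₂.card).choose A₁.card := by
  have h21 : ∀ P : Finset X, P ⊆ A₂ → P ∩ A₁ = ∅ := by
    intro P hP
    rw [← Finset.disjoint_iff_inter_eq_empty]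
    exact Finset.disjoint_of_subset_left hP hdisj.symm
  have h12 : ∀ P : Finset X, P ⊆ A₁ → P ∩ A₂ = ∅ := by
    intro P hP
    rw [← Finset.disjoint_iff_inter_eq_empty]
    exact Finset.disjoint_of_subset_left hP hdisj
  have hbij : (((A₁ ∪ A₂).powerset).filter (fun B => (B ∩ A₁).card = (B ∩ A₂).card)).card
      = ((A₁.powerset ×ˢ A₂.powerset).filter (fun p => p.1.card = p.2.card)).card := by
    apply Finset.card_bij (fun B _ => (B ∩ A₁, B ∩ A₂))
    · intro B hB
      simp only [mem_filter, mem_powerset, mem_product] at hB ⊢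
      exact ⟨⟨inter_subset_right, inter_subset_right⟩, hB.2⟩
    · intro B hB C hC h
      simp only [mem_filter, mem_powerset] at hB hC
      rw [Prod.mk.injEq] at h
      calc B = B ∩ (A₁ ∪ A₂) := (inter_eq_left.mpr hB.1).symm
        _ = B ∩ A₁ ∪ B ∩ A₂ := by rw [inter_union_distrib_left]
        _ = C ∩ A₁ ∪ C ∩ A₂ := by rw [h.1, h.2]
        _ = C ∩ (A₁ ∪ A₂) := by rw [inter_union_distrib_left]
        _ = C := inter_eq_left.mpr hC.1
    · intro P hP
      simp only [mem_filter, mem_powerset, mem_product] at hP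
      refine ⟨P.1 ∪ P.2, ?_, ?_⟩
      · simp only [mem_filter, mem_powerset]
        have e1 : (P.1 ∪ P.2) ∩ A₁ = P.1 := by
          rw [union_inter_distrib_right, h21 P.2 hP.1.2,
            inter_eq_left.mpr hP.1.1, union_empty]
        have e2 : (P.1 ∪ P.2) ∩ A₂ = P.2 := by
          rw [union_inter_distrib_right, h12 P.1 hP.1.1,
            inter_eq_left.mpr hP.1.2, empty_union]
        exact ⟨union_subset_union hP.1.1 hP.1.2, by rw [e1, e2]; exact hP.2⟩
      · have e1 : (P.1 ∪ P.2) ∩ A₁ = P.1 := by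
          rw [union_inter_distrib_right, h21 P.2 hP.1.2,
            inter_eq_left.mpr hP.1.1, union_empty]
        have e2 : (P.1 ∪ P.2) ∩ A₂ = P.2 := by
          rw [union_inter_distrib_right, h12 P.1 hP.1.1,
            inter_eq_left.mpr hP.1.2, empty_union]
        rw [e1, e2]
  have hsplit : ((A₁.powerset ×ˢ A₂.powerset).filter (fun p => p.1.card = p.2.card))
      = (range (A₁.card+1)).biUnion (fun k => A₁.powersetCard k ×ˢ A₂.powersetCard k) := by
    ext p
    simp only [mem_filter, mem_product, mem_powerset, mem_biUnion, mem_range, mem_powersetCard]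
    constructor
    · rintro ⟨⟨h1, h2⟩, he⟩
      exact ⟨p.1.card, Nat.lt_succ_of_le (card_le_card h1), ⟨h1, rfl⟩, ⟨h2, he.symm⟩⟩
    · rintro ⟨k, hk, ⟨ha1, e1⟩, ⟨ha2, e2⟩⟩
      exact ⟨⟨ha1, ha2⟩, by omega⟩
  rw [hbij, hsplit, card_biUnion, ← vdm]
  · apply Finset.sum_congr rfl
    intro k hk
    rw [card_product, card_powersetCard, card_powersetCard]
  · intro i hi j hj hij
    simp only [Finset.disjoint_left, mem_product, mem_powersetCard]
    rintro p ⟨⟨-, e1⟩, -⟩ ⟨⟨-, e2⟩, -⟩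
    omega

theorem h_nonuniform_construction (n : ℕ) (α : ℝ) (hα : Irrational α)
    (A A₁ A₂ : Finset ℝ) (hA : A = A₁ ∪ A₂) (hA_card : A.card = n)
    (h₁ : ↑A₁ ⊆ {x : ℝ | ∃ q : ℚ, x = (q : ℝ) + α})
    (h₂ : ↑A₂ ⊆ {x : ℝ | ∃ q : ℚ, x = (q : ℝ) - α})
    (hc₁ : A₁.card = n / 2) (hc₂ : A₂.card = (n + 1) / 2) :
    ratSumCountAll A = Nat.choose n (n / 2) := by
  classical
  have hdisj : Disjoint A₁ A₂ := by
    rw [Finset.disjoint_left]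
    intro x hx1 hx2
    obtain ⟨q, hq⟩ := h₁ hx1
    obtain ⟨q', hq'⟩ := h₂ hx2
    refine hα ⟨(q' - q)/2, ?_⟩
    push_cast
    linarith
  set g₁ : ℝ → ℚ := fun x => if h : ∃ q : ℚ, x = (q:ℝ) + α then h.choose else 0 with hg₁def
  have hg₁ : ∀ x ∈ A₁, x = (g₁ x : ℝ) + α := by
    intro x hx
    have h := h₁ hx
    have hx' : g₁ x = h.choose := dif_pos h
    rw [hx']; exact h.choose_spec
  set g₂ : ℝ → ℚ := fun x => if h : ∃ q : ℚ, x = (q:ℝ) - α then h.choose else 0 with hg₂def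
  have hg₂ : ∀ x ∈ A₂, x = (g₂ x : ℝ) - α := by
    intro x hx
    have h := h₂ hx
    have hx' : g₂ x = h.choose := dif_pos h
    rw [hx']; exact h.choose_spec
  have hsum₁ : ∀ B : Finset ℝ, B ⊆ A₁ →
      ∑ x ∈ B, x = ((∑ x ∈ B, g₁ x : ℚ) : ℝ) + B.card * α := by
    intro B hB
    rw [Finset.sum_congr rfl (fun x hx => hg₁ x (hB hx)), Finset.sum_add_distrib,
      Finset.sum_const, nsmul_eq_mul]
    push_cast
    ring
  have hsum₂ : ∀ B : Finset ℝ, B ⊆ A₂ →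
      ∑ x ∈ B, x = ((∑ x ∈ B, g₂ x : ℚ) : ℝ) - B.card * α := by
    intro B hB
    rw [Finset.sum_congr rfl (fun x hx => hg₂ x (hB hx)), Finset.sum_sub_distrib,
      Finset.sum_const, nsmul_eq_mul]
    push_cast
    ring
  have key : ∀ B ∈ A.powerset,
      ((∃ q : ℚ, (∑ x ∈ B, x) = (q : ℝ)) ↔ (B ∩ A₁).card = (B ∩ A₂).card) := by
    intro B hB
    rw [mem_powerset] at hB
    have hBsplit : B = B ∩ A₁ ∪ B ∩ A₂ := by
      rw [← inter_union_distrib_left, ← hA, inter_eq_left.mpr hB]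
    have hBdisj : Disjoint (B ∩ A₁) (B ∩ A₂) :=
      Finset.disjoint_of_subset_left inter_subset_right
        (Finset.disjoint_of_subset_right inter_subset_right hdisj)
    have hsum : ∑ x ∈ B, x =
        ((∑ x ∈ B ∩ A₁, g₁ x + ∑ x ∈ B ∩ A₂, g₂ x : ℚ) : ℝ)
          + (((B ∩ A₁).card : ℝ) - (B ∩ A₂).card) * α := by
      conv_lhs => rw [hBsplit]
      rw [Finset.sum_union hBdisj, hsum₁ _ inter_subset_right, hsum₂ _ inter_subset_right]
      push_cast
      ring
    constructor
    · rintro ⟨q, hq⟩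
      by_contra hne
      have hne' : (((B ∩ A₁).card : ℚ) - ((B ∩ A₂).card : ℚ)) ≠ 0 := by
        intro h
        apply hne
        have := sub_eq_zero.mp h
        exact_mod_cast this
      refine hα ⟨(q - (∑ x ∈ B ∩ A₁, g₁ x + ∑ x ∈ B ∩ A₂, g₂ x)) /
        (((B ∩ A₁).card : ℚ) - ((B ∩ A₂).card : ℚ)), ?_⟩
      rw [hsum] at hq
      have hne'' : (((B ∩ A₁).card : ℝ) - ((B ∩ A₂).card : ℝ)) ≠ 0 := by
        exact_mod_cast hne'
      push_cast at hq ⊢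
      rw [div_eq_iff hne'']
      linear_combination -hq
    · intro h
      refine ⟨∑ x ∈ B ∩ A₁, g₁ x + ∑ x ∈ B ∩ A₂, g₂ x, ?_⟩
      rw [hsum, h]
      push_cast
      ring
  have hn : A₁.card + A₂.card = n := by
    rw [hA, card_union_of_disjoint hdisj] at hA_card
    exact hA_card
  unfold ratSumCountAll
  rw [Finset.filter_congr key]
  have hcb := count_balanced A₁ A₂ hdisj
  rw [← hA] at hcb
  rw [hcb, hn, hc₁]
end

section
/- For every n-element set A of irrational real numbers, the number of subsets A' ⊆ A with rational sum is at most C(n, ⌊n/2⌋), i.e. |H(A)| ≤ binomial(n, ⌊n/2⌋). -/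
/-- A `ℚ`-linear functional on `ℝ` vanishing at `1` but at no element of a finite
set of irrationals. -/
lemma exists_rat_functional : ∀ (A : Finset ℝ), (∀ x ∈ A, Irrational x) →
    ∃ φ : ℝ →ₗ[ℚ] ℚ, φ 1 = 0 ∧ ∀ x ∈ A, φ x ≠ 0 := by
  intro A
  induction A using Finset.induction_on with
  | empty => exact fun _ => ⟨0, rfl, by simp⟩
  | @insert a s ha ih =>
    intro hA
    obtain ⟨φ, hφ1, hφ⟩ := ih (fun x hx => hA x (Finset.mem_insert_of_mem hx))
    have hairr : Irrational a := hA a (Finset.mem_insert_self a s)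
    have hna : a ∉ Submodule.span ℚ ({1} : Set ℝ) := by
      rw [Submodule.mem_span_singleton]
      rintro ⟨q, hq⟩
      exact hairr ⟨q, by simpa [Rat.smul_def] using hq⟩
    obtain ⟨ψ, hψa, hψbot⟩ :=
      Submodule.exists_dual_map_eq_bot_of_notMem hna inferInstance
    have hψ1 : ψ 1 = 0 := by
      have h1 : ψ 1 ∈ Submodule.map ψ (Submodule.span ℚ ({1} : Set ℝ)) :=
        Submodule.mem_map_of_mem (Submodule.mem_span_singleton_self 1)
      rw [hψbot] at h1
      simpa using h1
    classical
    let bads : Finset ℚ := (insert a s).image (fun x => -(φ x) / ψ x)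
    obtain ⟨c, hc⟩ := Infinite.exists_notMem_finset bads
    refine ⟨φ + c • ψ, by simp [hφ1, hψ1], ?_⟩
    intro x hx
    simp only [LinearMap.add_apply, LinearMap.smul_apply, smul_eq_mul]
    by_cases hzx : ψ x = 0
    · rcases Finset.mem_insert.mp hx with rfl | hxs
      · exact absurd hzx hψa
      · simpa [hzx] using hφ x hxs
    · intro h0
      have hcx : c = -(φ x) / ψ x := by
        field_simp
        linarith
      exact hc (hcx ▸ Finset.mem_image_of_mem _ hx)

/-- Erdős's version of the Littlewood–Offord argument: a family of subsets of a finite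
type, each of which has zero sum of nonzero weights, has at most central-binomial size. -/
lemma zero_sum_family_card_le {α : Type*} [Fintype α] [DecidableEq α] (f : α → ℚ)
    (hf : ∀ x, f x ≠ 0) (𝒢 : Finset (Finset α)) (h𝒢 : ∀ B ∈ 𝒢, ∑ x ∈ B, f x = 0) :
    𝒢.card ≤ (Fintype.card α).choose (Fintype.card α / 2) := by
  classical
  set N : Finset α := Finset.univ.filter (fun x => f x < 0) with hN
  have hinj : Function.Injective (fun B : Finset α => (symmDiff B N)) := by
    intro B B' h
    have := congrArg (fun C => symmDiff C N) h
    simpa [symmDiff_symmDiff_cancel_right] using this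
  -- every image set has the same sum of |f|
  have key : ∀ B ∈ 𝒢, ∑ x ∈ (symmDiff B N), |f x| = -∑ x ∈ N, f x := by
    intro B hB
    have hd : Disjoint (B \ N) (N \ B) := disjoint_sdiff_sdiff
    have hsd : (symmDiff B N) = (B \ N) ∪ (N \ B) := by
      rw [symmDiff_def]; rfl
    rw [hsd, Finset.sum_union hd]
    have h1 : ∑ x ∈ B \ N, |f x| = ∑ x ∈ B \ N, f x := by
      refine Finset.sum_congr rfl (fun x hx => ?_)
      have hxN : x ∉ N := (Finset.mem_sdiff.mp hx).2
      have : ¬ f x < 0 := by simpa [hN] using hxN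
      exact abs_of_nonneg (not_lt.mp this)
    have h2 : ∑ x ∈ N \ B, |f x| = ∑ x ∈ N \ B, (-f x) := by
      refine Finset.sum_congr rfl (fun x hx => ?_)
      have hxN : x ∈ N := (Finset.mem_sdiff.mp hx).1
      have : f x < 0 := by simpa [hN] using hxN
      exact abs_of_neg this
    have e1 : ∑ x ∈ B \ N, f x = ∑ x ∈ B, f x - ∑ x ∈ B ∩ N, f x := by
      rw [← Finset.sdiff_inter_self_left B N]
      exact Finset.sum_sdiff_eq_sub (Finset.inter_subset_left)
    have e2 : ∑ x ∈ N \ B, f x = ∑ x ∈ N, f x - ∑ x ∈ B ∩ N, f x := by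
      rw [Finset.inter_comm, ← Finset.sdiff_inter_self_left N B]
      exact Finset.sum_sdiff_eq_sub (Finset.inter_subset_left)
    rw [h1, h2, Finset.sum_neg_distrib, e1, e2, h𝒢 B hB]
    ring
  rw [← Finset.card_image_of_injective 𝒢 hinj]
  refine IsAntichain.sperner ?_
  intro C hC C' hC' hne hsub
  simp only [Finset.coe_image, Set.mem_image, Finset.mem_coe] at hC hC'
  obtain ⟨B, hB, rfl⟩ := hC
  obtain ⟨B', hB', rfl⟩ := hC'
  have hsum : ∑ x ∈ (symmDiff B' N) \ (symmDiff B N), |f x| = 0 := by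
    have := Finset.sum_sdiff_eq_sub (f := fun x => |f x|) hsub
    rw [key B hB, key B' hB'] at this
    linarith
  have hempty : (symmDiff B' N) \ (symmDiff B N) = ∅ := by
    by_contra hne'
    obtain ⟨x, hx⟩ := Finset.nonempty_of_ne_empty hne'
    have hpos : ∀ y ∈ (symmDiff B' N) \ (symmDiff B N), 0 ≤ |f y| := fun y _ => abs_nonneg _
    have := (Finset.sum_eq_zero_iff_of_nonneg hpos).mp hsum x hx
    exact hf x (abs_eq_zero.mp this)
  exact hne (le_antisymm hsub (Finset.sdiff_eq_empty_iff_subset.mp hempty))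

theorem h_nonuniform_upper (n : ℕ) (A : Finset ℝ) (hA_card : A.card = n)
    (hA : ∀ x ∈ A, Irrational x) :
    ratSumCountAll A ≤ Nat.choose n (n / 2) := by
  classical
  obtain ⟨φ, hφ1, hφ⟩ := exists_rat_functional A hA
  -- φ kills rationals
  have hφq : ∀ q : ℚ, φ (q : ℝ) = 0 := by
    intro q
    have : (q : ℝ) = q • (1 : ℝ) := by rw [Rat.smul_def, mul_one]
    rw [this, map_smul, hφ1, smul_zero]
  set H : Finset (Finset ℝ) :=
    (A.powerset.filter (fun B => ∃ q : ℚ, (∑ x ∈ B, x) = (q : ℝ))) with hH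
  have hcount : ratSumCountAll A = H.card := by
    rw [ratSumCountAll]
  rw [hcount]
  -- move to the subtype of A
  set α := {x : ℝ // x ∈ A}
  have hcard : Fintype.card α = n := by
    rw [Fintype.card_coe, hA_card]
  -- the image family in Finset α
  have hinj : Set.InjOn (fun B : Finset ℝ => B.subtype (· ∈ A)) H := by
    intro B hB B' hB' h
    have hBA : B ⊆ A := Finset.mem_powerset.mp (Finset.mem_filter.mp hB).1
    have hB'A : B' ⊆ A := Finset.mem_powerset.mp (Finset.mem_filter.mp hB').1
    have h2 : B.filter (· ∈ A) = B'.filter (· ∈ A) := by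
      simpa [Finset.subtype_map] using
        congrArg (fun C : Finset α => C.map (Function.Embedding.subtype _)) h
    rwa [Finset.filter_true_of_mem (fun x hx => hBA hx),
      Finset.filter_true_of_mem (fun x hx => hB'A hx)] at h2
  rw [← Finset.card_image_of_injOn hinj]
  have hsub : ∀ C ∈ H.image (fun B : Finset ℝ => B.subtype (· ∈ A)),
      ∑ x ∈ C, φ x.val = 0 := by
    intro C hC
    simp only [Finset.mem_image] at hC
    obtain ⟨B, hB, rfl⟩ := hC
    have hBA : B ⊆ A := Finset.mem_powerset.mp (Finset.mem_filter.mp hB).1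
    obtain ⟨q, hq⟩ := (Finset.mem_filter.mp hB).2
    have hmap : ∑ x ∈ B.subtype (· ∈ A), φ x.val
        = ∑ x ∈ (B.subtype (· ∈ A)).map (Function.Embedding.subtype _), φ x := by
      rw [Finset.sum_map]; rfl
    rw [hmap, Finset.subtype_map, Finset.filter_true_of_mem (fun x hx => hBA hx),
      ← map_sum, hq, hφq]
  calc (H.image (fun B : Finset ℝ => B.subtype (· ∈ A))).card
      ≤ (Fintype.card α).choose (Fintype.card α / 2) :=
        zero_sum_family_card_le (fun x : α => φ x.val)
          (fun x => hφ x.val x.2) _ hsub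
    _ = Nat.choose n (n / 2) := by rw [hcard]
end
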